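/- arXiv:math/0301088 — 4 statements merged into one kernel-verified Lean document; each statement's English description precedes it below -/
import Mathlib

section
/- Let K be an algebraically closed field and let H₁,…,H_r ∈ K[X,Y,Z,T] be homogeneous polynomials with r ≥ 4, of respective degrees d₁ ≥ d₂ ≥ … ≥ d_r ≥ 1. Set δ = d₁ + d₂ + d₃ + d₄ − 3 (the sum of the four greatest degrees minus 3). Then the polynomials H₁,…,H_r have a common zero in K⁴ ∖ {0} if and only if the map ⊕ᵢ₌₁^r K[X,Y,Z,T]_{δ−dᵢ} → K[X,Y,Z,T]_δ, (g₁,…,g_r) ↦ Σᵢ gᵢHᵢ, is not surjective. -/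
set_option linter.unusedSectionVars false
set_option maxHeartbeats 1000000
noncomputable section
open Classical

namespace Stmt2Aux

variable {ι : Type*} [Fintype ι] [DecidableEq ι] [LinearOrder ι]

def mcnt (i : ι) (s : Finset ι) : ℕ := (s.filter (· < i)).card

lemma mcnt_insert (i j : ι) (s : Finset ι) (hi : i ∉ s) :
    mcnt j (insert i s) = mcnt j s + (if i < j then 1 else 0) := by
  unfold mcnt
  rw [Finset.filter_insert]
  split_ifs with h
  · rw [Finset.card_insert_of_notMem (by simp [Finset.mem_filter, hi])]
  · simp

lemma mcnt_erase (i j : ι) (s : Finset ι) (hi : i ∈ s) :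
    mcnt j (s.erase i) + (if i < j then 1 else 0) = mcnt j s := by
  have : s = insert i (s.erase i) := (Finset.insert_erase hi).symm
  conv_rhs => rw [this]
  rw [mcnt_insert i j _ (Finset.notMem_erase i s)]

lemma mcnt_erase_self (i : ι) (s : Finset ι) :
    mcnt i (s.erase i) = mcnt i s := by
  unfold mcnt
  congr 1
  ext x
  simp only [Finset.mem_filter, Finset.mem_erase]
  constructor
  · rintro ⟨⟨_, hx⟩, h⟩; exact ⟨hx, h⟩
  · rintro ⟨hx, h⟩; exact ⟨⟨fun he => absurd (he ▸ h) (lt_irrefl i), hx⟩, h⟩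

def ksgn (i : ι) (s : Finset ι) : ℤ := (-1) ^ (mcnt i s)

lemma ksgn_mul_self (i : ι) (s : Finset ι) : ksgn i s * ksgn i s = 1 := by
  unfold ksgn
  rw [← pow_add]
  exact Even.neg_one_pow ⟨mcnt i s, rfl⟩

lemma neg_one_pow_add_eq_zero {A B : ℕ} (h : (A + B) % 2 = 1) :
    ((-1 : ℤ)) ^ A + (-1) ^ B = 0 := by
  rcases Nat.even_or_odd A with hA | hA
  · have hB : Odd B := by
      rcases hA with ⟨a, ha⟩
      rcases Nat.even_or_odd B with hB | hB
      · rcases hB with ⟨b, hb⟩; omega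
      · exact hB
    rw [hA.neg_one_pow, hB.neg_one_pow]; ring
  · have hB : Even B := by
      rcases hA with ⟨a, ha⟩
      rcases Nat.even_or_odd B with hB | hB
      · exact hB
      · rcases hB with ⟨b, hb⟩; omega
    rw [hA.neg_one_pow, hB.neg_one_pow]; ring

lemma ksgn_ins_ins {i j : ι} (t : Finset ι) (hi : i ∉ t) (hj : j ∉ t) (hij : i ≠ j) :
    ksgn i t * ksgn j (insert i t) + ksgn j t * ksgn i (insert j t) = 0 := by
  unfold ksgn
  rw [← pow_add, ← pow_add]
  apply neg_one_pow_add_eq_zero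
  rw [mcnt_insert i j t hi, mcnt_insert j i t hj]
  rcases hij.lt_or_gt with h | h
  · simp only [h, not_lt.2 h.le, if_true, if_false]; omega
  · simp only [h, not_lt.2 h.le, if_true, if_false]; omega

lemma ksgn_del_del {i j : ι} (t : Finset ι) (hi : i ∈ t) (hj : j ∈ t) (hij : i ≠ j) :
    ksgn j (t.erase j) * ksgn i ((t.erase j).erase i) +
      ksgn i (t.erase i) * ksgn j ((t.erase j).erase i) = 0 := by
  unfold ksgn
  rw [← pow_add, ← pow_add]
  apply neg_one_pow_add_eq_zero
  have h1 : mcnt j (t.erase j) = mcnt j t := mcnt_erase_self j t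
  have h2 : mcnt i ((t.erase j).erase i) = mcnt i (t.erase j) := mcnt_erase_self i _
  have h3 : mcnt i (t.erase j) + (if j < i then 1 else 0) = mcnt i t :=
    mcnt_erase j i t hj
  have h4 : mcnt i (t.erase i) = mcnt i t := mcnt_erase_self i t
  have h5 : mcnt j ((t.erase j).erase i) + (if i < j then 1 else 0) = mcnt j (t.erase j) :=
    mcnt_erase i j (t.erase j) (Finset.mem_erase.mpr ⟨hij, hi⟩)
  rcases hij.lt_or_gt with h | h
  · simp only [h, not_lt.2 h.le, if_true, if_false] at h3 h5; omega
  · simp only [h, not_lt.2 h.le, if_true, if_false] at h3 h5; omega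

lemma ksgn_del_ins {i j : ι} (t : Finset ι) (hj : j ∈ t) (hi : i ∉ t) (hij : i ≠ j) :
    ksgn j (t.erase j) * ksgn i (t.erase j) +
      ksgn i t * ksgn j ((insert i t).erase j) = 0 := by
  unfold ksgn
  rw [← pow_add, ← pow_add]
  apply neg_one_pow_add_eq_zero
  have h1 : mcnt j (t.erase j) = mcnt j t := mcnt_erase_self j t
  have h3 : mcnt i (t.erase j) + (if j < i then 1 else 0) = mcnt i t :=
    mcnt_erase j i t hj
  have h5 : mcnt j ((insert i t).erase j) + (if j < j then 1 else 0)
      = mcnt j (insert i t) := mcnt_erase j j _ (Finset.mem_insert_of_mem hj)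
  have h6 : mcnt j (insert i t) = mcnt j t + (if i < j then 1 else 0) :=
    mcnt_insert i j t hi
  rcases hij.lt_or_gt with h | h
  · simp only [h, not_lt.2 h.le, lt_irrefl, if_true, if_false] at h3 h5 h6; omega
  · simp only [h, not_lt.2 h.le, lt_irrefl, if_true, if_false] at h3 h5 h6; omega
variable {M : Type*} [AddCommGroup M]

def insOp (c : ι → M →+ M) (w : Finset ι → M) (t : Finset ι) : M :=
  ∑ i ∈ tᶜ, ksgn i t • c i (w (insert i t))

def delOp (c : ι → M →+ M) (w : Finset ι → M) (t : Finset ι) : M :=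
  ∑ i ∈ t, ksgn i (t.erase i) • c i (w (t.erase i))

lemma insOp_insOp (c : ι → M →+ M)
    (hc : ∀ i j, i ≠ j → ∀ x, c i (c j x) = c j (c i x)) (w : Finset ι → M) (t : Finset ι) :
    insOp c (insOp c w) t = 0 := by
  have expand : insOp c (insOp c w) t =
      ∑ i ∈ tᶜ, ∑ j ∈ (insert i t)ᶜ,
        (ksgn i t * ksgn j (insert i t)) • c i (c j (w (insert j (insert i t)))) := by
    unfold insOp
    refine Finset.sum_congr rfl fun i hi => ?_
    rw [map_sum, Finset.smul_sum]
    refine Finset.sum_congr rfl fun j hj => ?_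
    rw [AddMonoidHom.map_zsmul, smul_smul]
  rw [expand, Finset.sum_sigma' (tᶜ) (fun i => (insert i t)ᶜ)
    (fun i j => (ksgn i t * ksgn j (insert i t)) • c i (c j (w (insert j (insert i t)))))]
  refine Finset.sum_involution (fun p _ => ⟨p.2, p.1⟩) ?_ ?_ ?_ ?_
  · rintro ⟨i, j⟩ hp
    simp only [Finset.mem_sigma, Finset.mem_compl, Finset.mem_insert, not_or] at hp
    obtain ⟨hi, hj1, hj2⟩ := hp
    have hij : i ≠ j := fun h => hj1 h.symm
    dsimp only
    rw [Finset.insert_comm i j t, hc j i hij.symm, ← add_smul,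
      show ksgn i t * ksgn j (insert i t) + ksgn j t * ksgn i (insert j t) = 0 from
        ksgn_ins_ins t hi hj2 hij, zero_smul]
  · rintro ⟨i, j⟩ hp hne h
    simp only [Finset.mem_sigma, Finset.mem_compl, Finset.mem_insert, not_or] at hp
    exact hp.2.1 (congrArg Sigma.fst h)
  · rintro ⟨i, j⟩ hp
    simp only [Finset.mem_sigma, Finset.mem_compl, Finset.mem_insert, not_or] at hp ⊢
    exact ⟨hp.2.2, fun h => hp.2.1 h.symm, hp.1⟩
  · rintro ⟨i, j⟩ hp; rfl

lemma delOp_delOp (c : ι → M →+ M)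
    (hc : ∀ i j, i ≠ j → ∀ x, c i (c j x) = c j (c i x)) (w : Finset ι → M) (t : Finset ι) :
    delOp c (delOp c w) t = 0 := by
  have expand : delOp c (delOp c w) t =
      ∑ j ∈ t, ∑ i ∈ t.erase j,
        (ksgn j (t.erase j) * ksgn i ((t.erase j).erase i)) •
          c j (c i (w ((t.erase j).erase i))) := by
    unfold delOp
    refine Finset.sum_congr rfl fun j hj => ?_
    rw [map_sum, Finset.smul_sum]
    refine Finset.sum_congr rfl fun i hi => ?_
    rw [AddMonoidHom.map_zsmul, smul_smul]
  rw [expand, Finset.sum_sigma' t (fun j => t.erase j)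
    (fun j i => (ksgn j (t.erase j) * ksgn i ((t.erase j).erase i)) •
          c j (c i (w ((t.erase j).erase i))))]
  refine Finset.sum_involution (fun p _ => ⟨p.2, p.1⟩) ?_ ?_ ?_ ?_
  · rintro ⟨j, i⟩ hp
    simp only [Finset.mem_sigma, Finset.mem_erase] at hp
    obtain ⟨hj, hij, hi⟩ := hp
    dsimp only
    rw [show (t.erase i).erase j = (t.erase j).erase i from Finset.erase_right_comm,
      hc i j hij, ← add_smul,
      show ksgn j (t.erase j) * ksgn i ((t.erase j).erase i) +
          ksgn i (t.erase i) * ksgn j ((t.erase j).erase i) = 0 from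
        ksgn_del_del t hi hj hij, zero_smul]
  · rintro ⟨j, i⟩ hp hne h
    simp only [Finset.mem_sigma, Finset.mem_erase] at hp
    exact hp.2.1 (congrArg Sigma.fst h)
  · rintro ⟨j, i⟩ hp
    simp only [Finset.mem_sigma, Finset.mem_erase] at hp ⊢
    exact ⟨hp.2.2, fun h => hp.2.1 h.symm, hp.1⟩
  · rintro ⟨j, i⟩ hp; rfl

lemma delOp_insOp (c c' : ι → M →+ M)
    (hcc' : ∀ i j x, c i (c' j x) = c' j (c i x)) (w : Finset ι → M) (t : Finset ι) :
    delOp c (insOp c' w) t + insOp c' (delOp c w) t = ∑ i, c i (c' i (w t)) := by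
  have splitA : delOp c (insOp c' w) t =
      (∑ j ∈ t, c j (c' j (w t))) +
      ∑ j ∈ t, ∑ i ∈ ((t.erase j)ᶜ).erase j,
        (ksgn j (t.erase j) * ksgn i (t.erase j)) •
          c j (c' i (w (insert i (t.erase j)))) := by
    have expandA : delOp c (insOp c' w) t =
        ∑ j ∈ t, ∑ i ∈ (t.erase j)ᶜ,
          (ksgn j (t.erase j) * ksgn i (t.erase j)) •
            c j (c' i (w (insert i (t.erase j)))) := by
      unfold delOp insOp
      refine Finset.sum_congr rfl fun j hj => ?_
      rw [map_sum, Finset.smul_sum]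
      refine Finset.sum_congr rfl fun i hi => ?_
      rw [AddMonoidHom.map_zsmul, smul_smul]
    rw [expandA, ← Finset.sum_add_distrib]
    refine Finset.sum_congr rfl fun j hj => ?_
    rw [← Finset.add_sum_erase _ _ (show j ∈ (t.erase j)ᶜ by
      simp [Finset.mem_compl])]
    congr 1
    rw [Finset.insert_erase hj, ksgn_mul_self, one_smul]
  have splitB : insOp c' (delOp c w) t =
      (∑ i ∈ tᶜ, c i (c' i (w t))) +
      ∑ i ∈ tᶜ, ∑ j ∈ (insert i t).erase i,
        (ksgn i t * ksgn j ((insert i t).erase j)) •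
          c' i (c j (w ((insert i t).erase j))) := by
    have expandB : insOp c' (delOp c w) t =
        ∑ i ∈ tᶜ, ∑ j ∈ insert i t,
          (ksgn i t * ksgn j ((insert i t).erase j)) •
            c' i (c j (w ((insert i t).erase j))) := by
      unfold delOp insOp
      refine Finset.sum_congr rfl fun i hi => ?_
      rw [map_sum, Finset.smul_sum]
      refine Finset.sum_congr rfl fun j hj => ?_
      rw [AddMonoidHom.map_zsmul, smul_smul]
    rw [expandB, ← Finset.sum_add_distrib]
    refine Finset.sum_congr rfl fun i hi => ?_
    rw [← Finset.add_sum_erase _ _ (show i ∈ insert i t from Finset.mem_insert_self i t)]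
    congr 1
    rw [Finset.erase_insert (Finset.mem_compl.mp hi), ksgn_mul_self, one_smul, ← hcc']
  have hoff : ∑ j ∈ t, ∑ i ∈ ((t.erase j)ᶜ).erase j,
        (ksgn j (t.erase j) * ksgn i (t.erase j)) •
          c j (c' i (w (insert i (t.erase j)))) =
      - ∑ i ∈ tᶜ, ∑ j ∈ (insert i t).erase i,
        (ksgn i t * ksgn j ((insert i t).erase j)) •
          c' i (c j (w ((insert i t).erase j))) := by
    rw [Finset.sum_sigma' t (fun j => ((t.erase j)ᶜ).erase j)
      (fun j i => (ksgn j (t.erase j) * ksgn i (t.erase j)) •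
        c j (c' i (w (insert i (t.erase j))))),
      Finset.sum_sigma' (tᶜ) (fun i => (insert i t).erase i)
      (fun i j => (ksgn i t * ksgn j ((insert i t).erase j)) •
        c' i (c j (w ((insert i t).erase j)))), ← Finset.sum_neg_distrib]
    refine Finset.sum_bij' (fun p _ => (⟨p.2, p.1⟩ : (_ : ι) × ι))
      (fun p _ => (⟨p.2, p.1⟩ : (_ : ι) × ι)) ?_ ?_ ?_ ?_ ?_
    · rintro ⟨j, i⟩ hp
      simp only [Finset.mem_sigma, Finset.mem_erase, Finset.mem_compl,
        Finset.mem_insert] at hp ⊢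
      tauto
    · rintro ⟨i, j⟩ hp
      simp only [Finset.mem_sigma, Finset.mem_erase, Finset.mem_compl,
        Finset.mem_insert] at hp ⊢
      tauto
    · rintro ⟨j, i⟩ hp; rfl
    · rintro ⟨i, j⟩ hp; rfl
    · rintro ⟨j, i⟩ hp
      simp only [Finset.mem_sigma, Finset.mem_erase, Finset.mem_compl] at hp
      obtain ⟨hj, hij, hi⟩ := hp
      have hi' : i ∉ t := fun hmem => hi ⟨hij, hmem⟩
      clear hi
      dsimp only
      rw [show (insert i t).erase j = insert i (t.erase j) from
        Finset.erase_insert_of_ne hij, ← hcc']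
      rw [show ksgn j (t.erase j) * ksgn i (t.erase j) =
          - (ksgn i t * ksgn j (insert i (t.erase j))) by
        have := ksgn_del_ins t hj hi' hij
        rw [show (insert i t).erase j = insert i (t.erase j) from
          Finset.erase_insert_of_ne hij] at this
        linarith]
      rw [neg_smul]
  rw [splitA, splitB]
  rw [add_add_add_comm, hoff, neg_add_cancel, add_zero, Finset.sum_add_sum_compl]

variable {K : Type*} [Field K]

/-- Laurent polynomial ring in 4 variables -/
abbrev Lau (K : Type*) [Field K] := AddMonoidAlgebra K (Fin 4 → ℤ)

def cm : ((Fin 4) →₀ ℕ) →+ (Fin 4 → ℤ) where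
  toFun m := fun i => (m i : ℤ)
  map_zero' := by ext i; simp
  map_add' x y := by ext i; simp

lemma cm_injective : Function.Injective (cm : ((Fin 4) →₀ ℕ) →+ (Fin 4 → ℤ)) := by
  intro x y h
  ext i
  have := congrFun (show (fun i => ((x i : ℤ))) = fun i => ((y i : ℤ)) from h) i
  exact_mod_cast this

def emb : MvPolynomial (Fin 4) K →+* Lau K :=
  AddMonoidAlgebra.mapDomainRingHom K cm

lemma emb_apply (f : MvPolynomial (Fin 4) K) :
    AddMonoidAlgebra.coeff (emb f) = Finsupp.mapDomain cm (AddMonoidAlgebra.coeff f) := rfl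

lemma emb_injective : Function.Injective (emb : MvPolynomial (Fin 4) K →+* Lau K) :=
  fun x y h => AddMonoidAlgebra.coeff_injective
    (Finsupp.mapDomain_injective cm_injective (congrArg AddMonoidAlgebra.coeff h))

/-- membership in the Čech localization indexed by `T`: exponents of variables
outside `T` are nonnegative -/
def memC (T : Finset (Fin 4)) (f : Lau K) : Prop :=
  ∀ a ∈ f.coeff.support, ∀ i, i ∉ T → 0 ≤ a i

lemma memC_zero (T : Finset (Fin 4)) : memC T (0 : Lau K) := by
  intro a ha; simp at ha

lemma memC_add {T : Finset (Fin 4)} {f g : Lau K} (hf : memC T f) (hg : memC T g) :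
    memC T (f + g) := by
  intro a ha i hi
  rw [AddMonoidAlgebra.coeff_add] at ha
  rcases Finset.mem_union.mp (Finsupp.support_add ha) with h | h
  · exact hf a h i hi
  · exact hg a h i hi

lemma memC_zsmul {T : Finset (Fin 4)} (z : ℤ) {f : Lau K} (hf : memC T f) :
    memC T (z • f) := by
  intro a ha i hi
  exact hf a (Finsupp.support_smul ha) i hi

lemma memC_neg {T : Finset (Fin 4)} {f : Lau K} (hf : memC T f) : memC T (-f) := by
  have := memC_zsmul (-1) hf
  simpa using this

lemma memC_sub {T : Finset (Fin 4)} {f g : Lau K} (hf : memC T f) (hg : memC T g) :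
    memC T (f - g) := by
  rw [sub_eq_add_neg]; exact memC_add hf (memC_neg hg)

lemma memC_mul {T : Finset (Fin 4)} {f g : Lau K} (hf : memC T f) (hg : memC T g) :
    memC T (f * g) := by
  intro a ha i hi
  have := AddMonoidAlgebra.support_coeff_mul_subset f g ha
  rw [Finset.mem_add] at this
  obtain ⟨b, hb, c, hc, rfl⟩ := this
  have h1 := hf b hb i hi
  have h2 := hg c hc i hi
  have : (b + c) i = b i + c i := rfl
  omega

lemma memC_mono {T T' : Finset (Fin 4)} (hTT : T ⊆ T') {f : Lau K} (hf : memC T f) :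
    memC T' f := fun a ha i hi => hf a ha i (fun h => hi (hTT h))

lemma memC_sum {T : Finset (Fin 4)} {α : Type*} (s : Finset α) (F : α → Lau K)
    (h : ∀ x ∈ s, memC T (F x)) : memC T (∑ x ∈ s, F x) := by
  classical
  induction s using Finset.induction_on with
  | empty => simpa using memC_zero T
  | insert _ _ hx ih =>
    rw [Finset.sum_insert hx]
    exact memC_add (h _ (Finset.mem_insert_self _ _))
      (ih fun x hxs => h x (Finset.mem_insert_of_mem hxs))

lemma memC_emb (T : Finset (Fin 4)) (f : MvPolynomial (Fin 4) K) : memC T (emb f) := by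
  intro a ha i hi
  rw [emb_apply] at ha
  obtain ⟨m, hm, rfl⟩ := Finset.mem_image.mp (Finsupp.mapDomain_support ha)
  exact Int.ofNat_nonneg (m i)

/-- total degree homogeneity predicate on the Laurent ring -/
def hdeg (ν : ℤ) (f : Lau K) : Prop := ∀ a ∈ f.coeff.support, (∑ i, a i) = ν

lemma hdeg_zero (ν : ℤ) : hdeg ν (0 : Lau K) := by intro a ha; simp at ha

lemma hdeg_add {ν : ℤ} {f g : Lau K} (hf : hdeg ν f) (hg : hdeg ν g) : hdeg ν (f + g) := by
  intro a ha
  rw [AddMonoidAlgebra.coeff_add] at ha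
  rcases Finset.mem_union.mp (Finsupp.support_add ha) with h | h
  · exact hf a h
  · exact hg a h

lemma hdeg_zsmul {ν : ℤ} (z : ℤ) {f : Lau K} (hf : hdeg ν f) : hdeg ν (z • f) :=
  fun a ha => hf a (Finsupp.support_smul ha)

lemma hdeg_sub {ν : ℤ} {f g : Lau K} (hf : hdeg ν f) (hg : hdeg ν g) : hdeg ν (f - g) := by
  rw [sub_eq_add_neg]
  refine hdeg_add hf ?_
  have := hdeg_zsmul (-1) hg; simpa using this

lemma hdeg_mul {ν μ : ℤ} {f g : Lau K} (hf : hdeg ν f) (hg : hdeg μ g) :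
    hdeg (ν + μ) (f * g) := by
  intro a ha
  have := AddMonoidAlgebra.support_coeff_mul_subset f g ha
  rw [Finset.mem_add] at this
  obtain ⟨b, hb, c, hc, rfl⟩ := this
  have h1 := hf b hb
  have h2 := hg c hc
  have : ∑ i, (b + c) i = (∑ i, b i) + (∑ i, c i) := by
    rw [← Finset.sum_add_distrib]; rfl
  rw [this, h1, h2]

lemma hdeg_sum {ν : ℤ} {α : Type*} (s : Finset α) (F : α → Lau K)
    (h : ∀ x ∈ s, hdeg ν (F x)) : hdeg ν (∑ x ∈ s, F x) := by
  classical
  induction s using Finset.induction_on with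
  | empty => simpa using hdeg_zero ν
  | insert _ _ hx ih =>
    rw [Finset.sum_insert hx]
    exact hdeg_add (h _ (Finset.mem_insert_self _ _))
      (ih fun x hxs => h x (Finset.mem_insert_of_mem hxs))

lemma hdeg_emb {n : ℕ} {f : MvPolynomial (Fin 4) K} (hf : f.IsHomogeneous n) :
    hdeg (n : ℤ) (emb f) := by
  intro a ha
  rw [emb_apply] at ha
  obtain ⟨m, hm, rfl⟩ := Finset.mem_image.mp (Finsupp.mapDomain_support ha)
  have hco : MvPolynomial.coeff m f ≠ 0 := by
    rwa [← MvPolynomial.mem_support_iff]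
  have hw := hf hco
  have h2 : (∑ i : Fin 4, m i) = n := by
    rw [Finsupp.weight_apply, Finsupp.sum_fintype] at hw
    · simpa [smul_eq_mul] using hw
    · intro i; simp
  show (∑ i : Fin 4, ((m i : ℤ))) = (n : ℤ)
  exact_mod_cast h2

/-- the three multidegree classes -/
def selP (j : Fin 4) (a : Fin 4 → ℤ) : Prop := 0 ≤ a j ∧ ∀ i, i < j → a i < 0
def badP (a : Fin 4 → ℤ) : Prop := ∀ i, a i < 0
def goodP (a : Fin 4 → ℤ) : Prop := ∃ i, 0 ≤ a i

/-- filtering to a multidegree class, as an additive map -/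
def filHom (P : (Fin 4 → ℤ) → Prop) : Lau K →+ Lau K where
  toFun f := AddMonoidAlgebra.ofCoeff (f.coeff.filter P)
  map_zero' := by ext a; simp [Finsupp.filter_apply]
  map_add' x y := AddMonoidAlgebra.ext Finsupp.filter_add

lemma filHom_apply (P : (Fin 4 → ℤ) → Prop) (f : Lau K) (a : Fin 4 → ℤ) :
    (filHom P f).coeff a = if P a then f.coeff a else 0 := rfl

/-- partition of unity : the selectors sum to the good-part projection -/
lemma sum_selP (f : Lau K) :
    ∑ j : Fin 4, filHom (selP j) f = filHom goodP f := by
  ext a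
  rw [AddMonoidAlgebra.coeff_sum, Finsupp.finset_sum_apply]
  simp only [filHom_apply]
  by_cases hg : goodP a
  · rw [if_pos hg, Fin.sum_univ_four]
    have hlt0 : ∀ i : Fin 4, ¬ i < 0 := fun i => Fin.not_lt_zero i
    by_cases h0 : 0 ≤ a 0
    · have s0 : selP 0 a := ⟨h0, fun i hi => absurd hi (hlt0 i)⟩
      have s1 : ¬ selP 1 a := fun h => absurd (h.2 0 (by decide)) (not_lt.mpr h0)
      have s2 : ¬ selP 2 a := fun h => absurd (h.2 0 (by decide)) (not_lt.mpr h0)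
      have s3 : ¬ selP 3 a := fun h => absurd (h.2 0 (by decide)) (not_lt.mpr h0)
      rw [if_pos s0, if_neg s1, if_neg s2, if_neg s3]; ring
    · by_cases h1 : 0 ≤ a 1
      · have s0 : ¬ selP 0 a := fun h => h0 h.1
        have s1 : selP 1 a := ⟨h1, fun i hi => by
          have : i = 0 := by revert hi; revert i; decide
          subst this; exact not_le.mp h0⟩
        have s2 : ¬ selP 2 a := fun h => absurd (h.2 1 (by decide)) (not_lt.mpr h1)
        have s3 : ¬ selP 3 a := fun h => absurd (h.2 1 (by decide)) (not_lt.mpr h1)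
        rw [if_neg s0, if_pos s1, if_neg s2, if_neg s3]; ring
      · by_cases h2 : 0 ≤ a 2
        · have s0 : ¬ selP 0 a := fun h => h0 h.1
          have s1 : ¬ selP 1 a := fun h => h1 h.1
          have s2 : selP 2 a := ⟨h2, fun i hi => by
            have : i = 0 ∨ i = 1 := by revert hi; revert i; decide
            rcases this with h | h <;> subst h
            · exact not_le.mp h0
            · exact not_le.mp h1⟩
          have s3 : ¬ selP 3 a := fun h => absurd (h.2 2 (by decide)) (not_lt.mpr h2)
          rw [if_neg s0, if_neg s1, if_pos s2, if_neg s3]; ring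
        · have h3 : 0 ≤ a 3 := by
            obtain ⟨i, hi⟩ := hg
            have hc : ∀ k : Fin 4, k = 0 ∨ k = 1 ∨ k = 2 ∨ k = 3 := by decide
            rcases hc i with h | h | h | h
            · subst h; exact absurd hi h0
            · subst h; exact absurd hi h1
            · subst h; exact absurd hi h2
            · subst h; exact hi
          have s0 : ¬ selP 0 a := fun h => h0 h.1
          have s1 : ¬ selP 1 a := fun h => h1 h.1
          have s2 : ¬ selP 2 a := fun h => h2 h.1
          have s3 : selP 3 a := ⟨h3, fun i hi => by
            have : i = 0 ∨ i = 1 ∨ i = 2 := by revert hi; revert i; decide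
            rcases this with h | h | h <;> subst h
            · exact not_le.mp h0
            · exact not_le.mp h1
            · exact not_le.mp h2⟩
          rw [if_neg s0, if_neg s1, if_neg s2, if_pos s3]; ring
  · rw [if_neg hg]
    refine Finset.sum_eq_zero fun j _ => ?_
    rw [if_neg]
    intro ⟨h1, _⟩
    exact hg ⟨j, h1⟩

lemma good_add_bad (f : Lau K) : filHom goodP f + filHom badP f = f := by
  ext a
  rw [AddMonoidAlgebra.coeff_add, Finsupp.add_apply]
  simp only [filHom_apply]
  by_cases hg : goodP a
  · have hb : ¬ badP a := by
      obtain ⟨i, hi⟩ := hg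
      intro hb
      exact absurd (hb i) (not_lt.mpr hi)
    rw [if_pos hg, if_neg hb, add_zero]
  · have hb : badP a := by
      intro i
      by_contra h
      exact hg ⟨i, not_lt.mp h⟩
    rw [if_neg hg, if_pos hb, zero_add]

lemma bad_eq_zero_of_memC {T : Finset (Fin 4)} (hT : T ≠ Finset.univ) {f : Lau K}
    (hf : memC T f) : filHom badP f = 0 := by
  ext a
  rw [filHom_apply]
  by_cases hfa : f.coeff a = 0
  · simp [hfa]
  · rw [if_neg, AddMonoidAlgebra.coeff_zero, Finsupp.coe_zero, Pi.zero_apply]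
    intro hb
    obtain ⟨i, hi⟩ : ∃ i, i ∉ T := by
      by_contra h
      push_neg at h
      exact hT (Finset.eq_univ_iff_forall.mpr h)
    exact absurd (hf a (Finsupp.mem_support_iff.mpr hfa) i hi) (not_le.mpr (hb i))

lemma bad_eq_zero_of_hdeg {ν : ℤ} (hν : -3 ≤ ν) {f : Lau K} (hf : hdeg ν f) :
    filHom badP f = 0 := by
  ext a
  rw [filHom_apply]
  by_cases hfa : f.coeff a = 0
  · simp [hfa]
  · rw [if_neg, AddMonoidAlgebra.coeff_zero, Finsupp.coe_zero, Pi.zero_apply]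
    intro hb
    have := hf a (Finsupp.mem_support_iff.mpr hfa)
    have h4 : (∑ i, a i) = a 0 + a 1 + a 2 + a 3 := by
      rw [Fin.sum_univ_four]
    have := hb 0; have := hb 1; have := hb 2; have := hb 3
    omega

lemma memC_filHom_sel {j : Fin 4} {T : Finset (Fin 4)} {f : Lau K}
    (hf : memC (insert j T) f) : memC T (filHom (selP j) f) := by
  intro a ha i hi
  have has : a ∈ f.coeff.support ∧ selP j a := by
    rw [Finsupp.mem_support_iff, filHom_apply] at ha
    by_cases h : selP j a
    · rw [if_pos h] at ha; exact ⟨Finsupp.mem_support_iff.mpr ha, h⟩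
    · rw [if_neg h] at ha; exact absurd rfl ha
  by_cases hij : i = j
  · exact hij ▸ has.2.1
  · exact hf a has.1 i (by simp [Finset.mem_insert, hij, hi])

lemma hdeg_filHom {ν : ℤ} (P) {f : Lau K} (hf : hdeg ν f) : hdeg ν (filHom P f) := by
  intro a ha
  refine hf a ?_
  rw [Finsupp.mem_support_iff, filHom_apply] at ha
  rw [Finsupp.mem_support_iff]
  by_cases h : P a
  · rw [if_pos h] at ha; exact ha
  · rw [if_neg h] at ha; exact absurd rfl ha
/-! ### Section 4: double complex operators -/

variable {r : ℕ}

/-- the doubly-indexed families supporting the Čech–Koszul double complex -/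
abbrev Om (K : Type*) [Field K] (r : ℕ) := Finset (Fin 4) → Finset (Fin r) → Lau K

/-- Koszul differential (with respect to polynomials `h`) -/
def Kop (h : Fin r → Lau K) (w : Om K r) : Om K r :=
  fun T => insOp (fun i => AddMonoidHom.mulLeft (h i)) (w T)

/-- Koszul homotopy: exterior multiplication by the vectors `aT` -/
def Eop (aT : Finset (Fin 4) → Fin r → Lau K) (w : Om K r) : Om K r :=
  fun T => delOp (fun i => AddMonoidHom.mulLeft (aT T i)) (w T)

/-- Čech differential -/
def Dop (w : Om K r) : Om K r :=
  fun T s => delOp (fun _ => AddMonoidHom.id (Lau K)) (fun T' => w T' s) T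

/-- Čech homotopy -/
def Sop (w : Om K r) : Om K r :=
  fun T s => insOp (fun j => filHom (selP j)) (fun T' => w T' s) T

lemma insOp_zero' {ι' : Type*} [Fintype ι'] [DecidableEq ι'] [LinearOrder ι'] (c : ι' → Lau K →+ Lau K)
    {u : Finset ι' → Lau K} (hu : ∀ t, u t = 0) (t : Finset ι') : insOp c u t = 0 := by
  unfold insOp
  refine Finset.sum_eq_zero fun i _ => ?_
  rw [hu, map_zero, smul_zero]

lemma delOp_zero' {ι' : Type*} [Fintype ι'] [DecidableEq ι'] [LinearOrder ι'] (c : ι' → Lau K →+ Lau K)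
    {u : Finset ι' → Lau K} (hu : ∀ t, u t = 0) (t : Finset ι') : delOp c u t = 0 := by
  unfold delOp
  refine Finset.sum_eq_zero fun i _ => ?_
  rw [hu, map_zero, smul_zero]

lemma Kop_Kop (h : Fin r → Lau K) (w : Om K r) : Kop h (Kop h w) = 0 := by
  funext T s
  show insOp _ (insOp _ (w T)) s = 0
  exact insOp_insOp _ (fun i j _ x => by
    simp only [AddMonoidHom.coe_mulLeft]
    ring) (w T) s

lemma Dop_Dop (w : Om K r) : Dop (K := K) (Dop w) = 0 := by
  funext T s
  show delOp _ (fun T' => delOp _ (fun T'' => w T'' s) T') T = 0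
  exact delOp_delOp _ (fun i j _ x => rfl) (fun T'' => w T'' s) T

lemma Dop_Kop (h : Fin r → Lau K) (w : Om K r) : Dop (Kop h w) = Kop h (Dop w) := by
  funext T s
  have lhs : Dop (Kop h w) T s =
      ∑ j ∈ T, ∑ i ∈ sᶜ, (ksgn j (T.erase j) * ksgn i s) •
        (h i * w (T.erase j) (insert i s)) := by
    show delOp _ (fun T' => (Kop h w) T' s) T = _
    unfold delOp
    refine Finset.sum_congr rfl fun j hj => ?_
    show ksgn j (T.erase j) • (insOp (fun i => AddMonoidHom.mulLeft (h i)) (w (T.erase j)) s) = _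
    unfold insOp
    rw [Finset.smul_sum]
    refine Finset.sum_congr rfl fun i hi => ?_
    rw [smul_smul]
    rfl
  have rhs : Kop h (Dop w) T s =
      ∑ i ∈ sᶜ, ∑ j ∈ T, (ksgn i s * ksgn j (T.erase j)) •
        (h i * w (T.erase j) (insert i s)) := by
    show insOp _ ((Dop w) T) s = _
    unfold insOp
    refine Finset.sum_congr rfl fun i hi => ?_
    show ksgn i s • (h i * (delOp (fun _ => AddMonoidHom.id (Lau K))
      (fun T' => w T' (insert i s)) T)) = _
    unfold delOp
    rw [Finset.mul_sum, Finset.smul_sum]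
    refine Finset.sum_congr rfl fun j hj => ?_
    show ksgn i s • (h i * (ksgn j (T.erase j) • (w (T.erase j) (insert i s)))) = _
    rw [mul_smul_comm, smul_smul]
  rw [lhs, rhs, Finset.sum_comm]
  refine Finset.sum_congr rfl fun i _ => Finset.sum_congr rfl fun j _ => ?_
  rw [mul_comm]

lemma Eop_Kop_homotopy (h : Fin r → Lau K) (aT : Finset (Fin 4) → Fin r → Lau K)
    (hunit : ∀ T : Finset (Fin 4), T.Nonempty → ∑ i, aT T i * h i = 1)
    (w : Om K r) (hw0 : ∀ s, w ∅ s = 0) (T : Finset (Fin 4)) (s : Finset (Fin r)) :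
    Eop aT (Kop h w) T s + Kop h (Eop aT w) T s = w T s := by
  by_cases hT : T = ∅
  · subst hT
    show delOp _ (insOp _ (w ∅)) s + insOp _ (delOp _ (w ∅)) s = w ∅ s
    rw [delOp_zero' _ (fun t => insOp_zero' _ hw0 t) s,
      insOp_zero' _ (fun t => delOp_zero' _ hw0 t) s, hw0 s, add_zero]
  · have key := delOp_insOp (c := fun i => AddMonoidHom.mulLeft (aT T i))
      (c' := fun i => AddMonoidHom.mulLeft (h i))
      (fun i j x => by simp only [AddMonoidHom.coe_mulLeft]; ring) (w T) s
    show delOp _ (insOp _ (w T)) s + insOp _ (delOp _ (w T)) s = w T s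
    rw [key]
    have : ∑ i, (AddMonoidHom.mulLeft (aT T i)) ((AddMonoidHom.mulLeft (h i)) (w T s))
        = (∑ i, aT T i * h i) * w T s := by
      rw [Finset.sum_mul]
      refine Finset.sum_congr rfl fun i _ => ?_
      simp only [AddMonoidHom.coe_mulLeft]
      ring
    rw [this, hunit T (Finset.nonempty_iff_ne_empty.mpr hT), one_mul]

lemma Dop_Sop_homotopy (w : Om K r) (T : Finset (Fin 4)) (s : Finset (Fin r)) :
    Dop (Sop w) T s + Sop (Dop w) T s = filHom goodP (w T s) := by
  have key := delOp_insOp (c := fun _ : Fin 4 => AddMonoidHom.id (Lau K))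
    (c' := fun j => filHom (selP j)) (fun i j x => rfl) (fun T' => w T' s) T
  show delOp _ (fun T' => insOp _ (fun T'' => w T'' s) T') T
      + insOp _ (fun T' => delOp _ (fun T'' => w T'' s) T') T = _
  rw [key]
  simp only [AddMonoidHom.id_apply]
  exact sum_selP (w T s)

/-! ### predicates on families -/

def memF (w : Om K r) : Prop := ∀ T s, memC T (w T s)

def hwF (d : Fin r → ℕ) (ν : ℤ) (w : Om K r) : Prop :=
  ∀ T s, hdeg (ν - ∑ i ∈ s, (d i : ℤ)) (w T s)

def csupp (k q : ℕ) (w : Om K r) : Prop :=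
  ∀ T s, w T s ≠ 0 → T.card = k ∧ s.card = q

lemma memF_Kop {h : Fin r → Lau K} (hh : ∀ i T, memC T (h i)) {w : Om K r}
    (hw : memF w) : memF (Kop h w) := by
  intro T s
  refine memC_sum _ _ fun i _ => memC_zsmul _ ?_
  simpa using memC_mul (hh i T) (hw T _)

lemma memF_Eop {aT : Finset (Fin 4) → Fin r → Lau K}
    (ha : ∀ T i, memC T (aT T i)) {w : Om K r} (hw : memF w) : memF (Eop aT w) := by
  intro T s
  refine memC_sum _ _ fun i _ => memC_zsmul _ ?_
  simpa using memC_mul (ha T i) (hw T _)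

lemma memF_Dop {w : Om K r} (hw : memF w) : memF (Dop w) := by
  intro T s
  refine memC_sum _ _ fun j hj => memC_zsmul _ ?_
  simpa using memC_mono (Finset.erase_subset j T) (hw _ s)

lemma memF_Sop {w : Om K r} (hw : memF w) : memF (Sop w) := by
  intro T s
  refine memC_sum _ _ fun j hj => memC_zsmul _ ?_
  simpa using memC_filHom_sel (hw (insert j T) s)

lemma memF_sub {w w' : Om K r} (hw : memF w) (hw' : memF w') :
    memF (fun T s => w T s - w' T s) := fun T s => memC_sub (hw T s) (hw' T s)

lemma hwF_Kop {h : Fin r → Lau K} {d : Fin r → ℕ} (hh : ∀ i, hdeg (d i) (h i))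
    {ν : ℤ} {w : Om K r} (hw : hwF d ν w) : hwF d ν (Kop h w) := by
  intro T s
  refine hdeg_sum _ _ fun i hi => hdeg_zsmul _ ?_
  have hi' : i ∉ s := Finset.mem_compl.mp hi
  have := hdeg_mul (hh i) (hw T (insert i s))
  have harith : (d i : ℤ) + (ν - ∑ j ∈ insert i s, (d j : ℤ)) = ν - ∑ j ∈ s, (d j : ℤ) := by
    rw [Finset.sum_insert hi']; ring
  rw [harith] at this
  simpa using this

lemma hwF_Eop {aT : Finset (Fin 4) → Fin r → Lau K} {d : Fin r → ℕ}
    (ha : ∀ T i, hdeg (-(d i : ℤ)) (aT T i)) {ν : ℤ} {w : Om K r}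
    (hw : hwF d ν w) : hwF d ν (Eop aT w) := by
  intro T s
  refine hdeg_sum _ _ fun i hi => hdeg_zsmul _ ?_
  have := hdeg_mul (ha T i) (hw T (s.erase i))
  have harith : (-(d i : ℤ)) + (ν - ∑ j ∈ s.erase i, (d j : ℤ)) = ν - ∑ j ∈ s, (d j : ℤ) := by
    have : ∑ j ∈ s.erase i, (d j : ℤ) + (d i : ℤ) = ∑ j ∈ s, (d j : ℤ) := by
      rw [add_comm]
      exact Finset.add_sum_erase s (fun j => (d j : ℤ)) hi
    linarith
  rw [harith] at this
  simpa using this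

lemma hwF_Dop {d : Fin r → ℕ} {ν : ℤ} {w : Om K r} (hw : hwF d ν w) : hwF d ν (Dop w) := by
  intro T s
  refine hdeg_sum _ _ fun j hj => hdeg_zsmul _ ?_
  simpa using hw _ s

lemma hwF_Sop {d : Fin r → ℕ} {ν : ℤ} {w : Om K r} (hw : hwF d ν w) : hwF d ν (Sop w) := by
  intro T s
  refine hdeg_sum _ _ fun j hj => hdeg_zsmul _ ?_
  simpa using hdeg_filHom (selP j) (hw _ s)

lemma sum_ne_zero_exists {α : Type*} {s : Finset α} {F : α → Lau K}
    (h : ∑ x ∈ s, F x ≠ 0) : ∃ x ∈ s, F x ≠ 0 :=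
  Finset.exists_ne_zero_of_sum_ne_zero h

lemma csupp_Dop {k q : ℕ} {w : Om K r} (hw : csupp k q w) : csupp (k + 1) q (Dop w) := by
  intro T s hne
  obtain ⟨j, hj, hjne⟩ := sum_ne_zero_exists hne
  have : w (T.erase j) s ≠ 0 := fun h => hjne (by rw [show (AddMonoidHom.id (Lau K)) (w (T.erase j) s) = w (T.erase j) s from rfl, h, smul_zero])
  obtain ⟨h1, h2⟩ := hw _ _ this
  rw [Finset.card_erase_of_mem hj] at h1
  have hTpos : 0 < T.card := Finset.card_pos.mpr ⟨j, hj⟩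
  exact ⟨by omega, h2⟩

lemma csupp_Sop {k q : ℕ} {w : Om K r} (hw : csupp (k + 1) q w) : csupp k q (Sop w) := by
  intro T s hne
  obtain ⟨j, hj, hjne⟩ := sum_ne_zero_exists hne
  have : w (insert j T) s ≠ 0 := by
    intro h
    apply hjne
    have hz : ((fun j => filHom (selP j)) j) ((fun T' => w T' s) (insert j T)) = 0 := by
      show (filHom (selP j)) (w (insert j T) s) = 0
      rw [h, map_zero]
    rw [hz, smul_zero]
  obtain ⟨h1, h2⟩ := hw _ _ this
  rw [Finset.card_insert_of_notMem (Finset.mem_compl.mp hj)] at h1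
  exact ⟨by omega, h2⟩

lemma csupp_Kop {k q : ℕ} {h : Fin r → Lau K} {w : Om K r} (hw : csupp k (q + 1) w) :
    csupp k q (Kop h w) := by
  intro T s hne
  obtain ⟨i, hi, hine⟩ := sum_ne_zero_exists hne
  have : w T (insert i s) ≠ 0 := by
    intro hz
    apply hine
    rw [show (AddMonoidHom.mulLeft (h i)) (w T (insert i s)) = h i * w T (insert i s) from rfl,
      hz, mul_zero, smul_zero]
  obtain ⟨h1, h2⟩ := hw _ _ this
  rw [Finset.card_insert_of_notMem (Finset.mem_compl.mp hi)] at h2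
  exact ⟨h1, by omega⟩

lemma csupp_Eop {k q : ℕ} {aT : Finset (Fin 4) → Fin r → Lau K} {w : Om K r}
    (hw : csupp k q w) : csupp k (q + 1) (Eop aT w) := by
  intro T s hne
  obtain ⟨i, hi, hine⟩ := sum_ne_zero_exists hne
  have : w T (s.erase i) ≠ 0 := by
    intro hz
    apply hine
    rw [show (AddMonoidHom.mulLeft (aT T i)) (w T (s.erase i)) = aT T i * w T (s.erase i) from rfl,
      hz, mul_zero, smul_zero]
  obtain ⟨h1, h2⟩ := hw _ _ this
  rw [Finset.card_erase_of_mem hi] at h2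
  have hspos : 0 < s.card := Finset.card_pos.mpr ⟨i, hi⟩
  exact ⟨h1, by omega⟩

lemma Kop_eq_zero_of_csupp_zero {k : ℕ} {h : Fin r → Lau K} {w : Om K r}
    (hw : csupp k 0 w) : Kop h w = 0 := by
  funext T s
  show insOp _ (w T) s = 0
  refine Finset.sum_eq_zero fun i hi => ?_
  have : w T (insert i s) = 0 := by
    by_contra hne
    obtain ⟨_, h2⟩ := hw _ _ hne
    rw [Finset.card_insert_of_notMem (Finset.mem_compl.mp hi)] at h2
    omega
  rw [show (AddMonoidHom.mulLeft (h i)) (w T (insert i s)) = h i * w T (insert i s) from rfl,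
    this, mul_zero, smul_zero]

lemma Dop_eq_zero_of_csupp_four {q : ℕ} {w : Om K r} (hw : csupp 4 q w) :
    Dop w = 0 := by
  funext T s
  show delOp _ (fun T' => w T' s) T = 0
  refine Finset.sum_eq_zero fun j hj => ?_
  have : w (T.erase j) s = 0 := by
    by_contra hne
    obtain ⟨h1, _⟩ := hw _ _ hne
    have hcard : T.card ≤ 4 := by
      have := Finset.card_le_card (Finset.subset_univ T)
      simpa using this
    rw [Finset.card_erase_of_mem hj] at h1
    omega
  rw [show (AddMonoidHom.id (Lau K)) (w (T.erase j) s) = w (T.erase j) s from rfl, this, smul_zero]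

lemma csupp_zero_of_card {q k : ℕ} {w : Om K r} (hw : csupp k q w) (T : Finset (Fin 4))
    (s : Finset (Fin r)) (h : T.card ≠ k ∨ s.card ≠ q) : w T s = 0 := by
  by_contra hne
  obtain ⟨h1, h2⟩ := hw _ _ hne
  tauto
/-! ### Section 5: auxiliary algebra in the Laurent ring, and the chase -/

lemma memC_single {T : Finset (Fin 4)} {a : Fin 4 → ℤ} {c : K}
    (h : ∀ i, i ∉ T → 0 ≤ a i) : memC T (AddMonoidAlgebra.single a c : Lau K) := by
  intro a' ha' i hi
  rw [AddMonoidAlgebra.coeff_single] at ha'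
  have := Finsupp.support_single_subset ha'
  rw [Finset.mem_singleton] at this
  subst this
  exact h i hi

lemma hdeg_single {a : Fin 4 → ℤ} {c : K} : hdeg (∑ i, a i) (AddMonoidAlgebra.single a c : Lau K) := by
  intro a' ha'
  rw [AddMonoidAlgebra.coeff_single] at ha'
  have := Finsupp.support_single_subset ha'
  rw [Finset.mem_singleton] at this
  subst this
  rfl

lemma insOp_sub {ι' : Type*} [Fintype ι'] [DecidableEq ι'] [LinearOrder ι']
    (c : ι' → Lau K →+ Lau K) (u u' : Finset ι' → Lau K) (t : Finset ι') :
    insOp c (fun x => u x - u' x) t = insOp c u t - insOp c u' t := by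
  unfold insOp
  rw [← Finset.sum_sub_distrib]
  refine Finset.sum_congr rfl fun i _ => ?_
  rw [map_sub, smul_sub]

lemma delOp_sub {ι' : Type*} [Fintype ι'] [DecidableEq ι'] [LinearOrder ι']
    (c : ι' → Lau K →+ Lau K) (u u' : Finset ι' → Lau K) (t : Finset ι') :
    delOp c (fun x => u x - u' x) t = delOp c u t - delOp c u' t := by
  unfold delOp
  rw [← Finset.sum_sub_distrib]
  refine Finset.sum_congr rfl fun i _ => ?_
  rw [map_sub, smul_sub]

lemma Kop_sub {r : ℕ} (h : Fin r → Lau K) (w w' : Om K r) :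
    Kop h (fun T s => w T s - w' T s) = fun T s => Kop h w T s - Kop h w' T s := by
  funext T s
  exact insOp_sub _ (w T) (w' T) s

lemma Dop_sub {r : ℕ} (w w' : Om K r) :
    Dop (K := K) (fun T s => w T s - w' T s) = fun T s => Dop w T s - Dop w' T s := by
  funext T s
  exact delOp_sub _ (fun T' => w T' s) (fun T' => w' T' s) T

lemma csupp_sub {r : ℕ} {k q : ℕ} {w w' : Om K r} (hw : csupp k q w) (hw' : csupp k q w') :
    csupp k q (fun T s => w T s - w' T s) := by
  intro T s hne
  by_cases h1 : w T s = 0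
  · by_cases h2 : w' T s = 0
    · exact absurd (by show w T s - w' T s = 0; rw [h1, h2, sub_zero]) hne
    · exact hw' T s h2
  · exact hw T s h1

lemma ksgn_empty {ι' : Type*} [Fintype ι'] [DecidableEq ι'] [LinearOrder ι'] (i : ι') :
    ksgn i (∅ : Finset ι') = 1 := by
  unfold ksgn mcnt
  simp

lemma hwF_sub {r : ℕ} {d : Fin r → ℕ} {ν : ℤ} {w w' : Om K r} (hw : hwF d ν w)
    (hw' : hwF d ν w') : hwF d ν (fun T s => w T s - w' T s) :=
  fun T s => hdeg_sub (hw T s) (hw' T s)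

lemma memC_empty_exists_emb {f : Lau K} (hf : memC ∅ f) :
    ∃ q : MvPolynomial (Fin 4) K, emb q = f := by
  classical
  refine ⟨(AddMonoidAlgebra.ofCoeff (Finsupp.mapDomain (fun a : Fin 4 → ℤ =>
    (Finsupp.equivFunOnFinite.symm (fun i => (a i).toNat) : Fin 4 →₀ ℕ)) f.coeff) :
      MvPolynomial (Fin 4) K), ?_⟩
  apply AddMonoidAlgebra.coeff_injective
  rw [emb_apply, AddMonoidAlgebra.coeff_ofCoeff, ← Finsupp.mapDomain_comp]
  rw [Finsupp.mapDomain_congr (g := id) ?_, Finsupp.mapDomain_id]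
  intro a ha
  funext i
  show ((Finsupp.equivFunOnFinite.symm (fun i => (a i).toNat) : Fin 4 →₀ ℕ) i : ℤ) = a i
  have : (Finsupp.equivFunOnFinite.symm (fun i => (a i).toNat) : Fin 4 →₀ ℕ) i
      = (a i).toNat := by
    simp [Finsupp.equivFunOnFinite]
  rw [this]
  exact Int.toNat_of_nonneg (hf a ha i (by simp))

/-! the homotopy coefficient vectors -/

variable {r : ℕ}

def aTdef (b : Fin 4 → Fin r → MvPolynomial (Fin 4) K) (N : ℕ) :
    Finset (Fin 4) → Fin r → Lau K :=
  fun T i =>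
    if hT : T.Nonempty then
      (AddMonoidAlgebra.single (fun k => if k = T.min' hT then -(N : ℤ) else 0) (1 : K) : Lau K)
        * emb (b (T.min' hT) i)
    else 0

lemma aT_memC (b : Fin 4 → Fin r → MvPolynomial (Fin 4) K) (N : ℕ) (T : Finset (Fin 4))
    (i : Fin r) : memC T (aTdef b N T i) := by
  unfold aTdef
  split_ifs with hT
  · refine memC_mul (memC_single ?_) (memC_emb _ _)
    intro k hk
    have hne : ¬ k = T.min' hT := fun hkj => hk (hkj ▸ T.min'_mem hT)
    rw [if_neg hne]
  · exact memC_zero T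

lemma aT_hdeg (b : Fin 4 → Fin r → MvPolynomial (Fin 4) K) (N : ℕ) (d : Fin r → ℕ)
    (hbh : ∀ j i, (b j i).IsHomogeneous (N - d i)) (hbd : ∀ i, d i ≤ N)
    (T : Finset (Fin 4)) (i : Fin r) : hdeg (-(d i : ℤ)) (aTdef b N T i) := by
  unfold aTdef
  split_ifs with hT
  · have h1 : hdeg (-(N : ℤ)) (AddMonoidAlgebra.single
        (fun k => if k = T.min' hT then -(N : ℤ) else 0) (1 : K) : Lau K) := by
      have := hdeg_single (K := K)
        (a := fun k => if k = T.min' hT then -(N : ℤ) else 0) (c := (1 : K))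
      have hsum : (∑ k : Fin 4, (if k = T.min' hT then -(N : ℤ) else 0)) = -(N : ℤ) := by
        rw [Finset.sum_ite_eq' Finset.univ (T.min' hT) (fun _ => -(N:ℤ))]
        simp
      rwa [hsum] at this
    have h2 : hdeg ((N - d i : ℕ) : ℤ) (emb (b (T.min' hT) i)) := hdeg_emb (hbh _ i)
    have := hdeg_mul h1 h2
    have harith : (-(N : ℤ)) + ((N - d i : ℕ) : ℤ) = -(d i : ℤ) := by
      have : ((N - d i : ℕ) : ℤ) = (N : ℤ) - (d i : ℤ) := by
        have := hbd i
        push_cast [Nat.cast_sub this]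
        ring
      rw [this]; ring
    rwa [harith] at this
  · exact hdeg_zero _

lemma aT_unit (b : Fin 4 → Fin r → MvPolynomial (Fin 4) K) (N : ℕ)
    (H : Fin r → MvPolynomial (Fin 4) K)
    (hb : ∀ j, ∑ i, b j i * H i = MvPolynomial.X j ^ N)
    (T : Finset (Fin 4)) (hT : T.Nonempty) :
    ∑ i, aTdef b N T i * emb (H i) = 1 := by
  unfold aTdef
  simp only [dif_pos hT]
  set j := T.min' hT
  have : ∑ i, (AddMonoidAlgebra.single (fun k => if k = j then -(N : ℤ) else 0) (1 : K) : Lau K)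
      * emb (b j i) * emb (H i)
      = (AddMonoidAlgebra.single (fun k => if k = j then -(N : ℤ) else 0) (1 : K) : Lau K)
        * emb (∑ i, b j i * H i) := by
    rw [map_sum, Finset.mul_sum]
    refine Finset.sum_congr rfl fun i _ => ?_
    rw [map_mul, mul_assoc]
  rw [this, hb j]
  have hX : emb (MvPolynomial.X j ^ N : MvPolynomial (Fin 4) K)
      = (AddMonoidAlgebra.single (fun k => if k = j then (N : ℤ) else 0) (1 : K) : Lau K) := by
    rw [MvPolynomial.X_pow_eq_monomial]
    apply AddMonoidAlgebra.coeff_injective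
    show Finsupp.mapDomain cm (Finsupp.single (Finsupp.single j N) (1:K)) = _
    rw [Finsupp.mapDomain_single, AddMonoidAlgebra.coeff_single]
    congr 1
    funext k
    show ((Finsupp.single j N : Fin 4 →₀ ℕ) k : ℤ) = _
    rw [Finsupp.single_apply]
    by_cases hkj : j = k
    · subst hkj; simp
    · rw [if_neg hkj, if_neg (fun h => hkj h.symm)]
      simp
  rw [hX, AddMonoidAlgebra.single_mul_single]
  have : ((fun k => if k = j then -(N : ℤ) else 0) + fun k => if k = j then (N : ℤ) else 0)
      = (0 : Fin 4 → ℤ) := by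
    funext k
    show (if k = j then -(N : ℤ) else 0) + (if k = j then (N : ℤ) else 0) = 0
    split_ifs <;> ring
  rw [this, one_mul]
  rfl

/-! the chase -/

theorem chase (H : Fin r → MvPolynomial (Fin 4) K) (d : Fin r → ℕ)
    (hH : ∀ i, (H i).IsHomogeneous (d i))
    (b : Fin 4 → Fin r → MvPolynomial (Fin 4) K) (N : ℕ)
    (hb : ∀ j, ∑ i, b j i * H i = MvPolynomial.X j ^ N)
    (hbh : ∀ j i, (b j i).IsHomogeneous (N - d i))
    (hbd : ∀ i, d i ≤ N)
    (p : MvPolynomial (Fin 4) K) (ν : ℕ) (hp : p.IsHomogeneous ν)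
    (hν : ∀ s : Finset (Fin r), s.card = 4 → (∑ i ∈ s, (d i : ℤ)) ≤ (ν : ℤ) + 3) :
    ∃ g : Fin r → MvPolynomial (Fin 4) K, ∑ i, g i * H i = p := by
  classical
  set h : Fin r → Lau K := fun i => emb (H i) with hh_def
  set aT : Finset (Fin 4) → Fin r → Lau K := aTdef b N with haT_def
  have hmem : ∀ i T, memC T (h i) := fun i T => memC_emb T (H i)
  have hhd : ∀ i, hdeg ((d i : ℤ)) (h i) := fun i => hdeg_emb (hH i)
  have haTmem : ∀ T i, memC T (aT T i) := aT_memC b N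
  have haTd : ∀ T i, hdeg (-(d i : ℤ)) (aT T i) := fun T i => aT_hdeg b N d hbh hbd T i
  have hunit : ∀ T : Finset (Fin 4), T.Nonempty → ∑ i, aT T i * h i = 1 :=
    fun T hT => aT_unit b N H hb T hT
  -- the seed family
  set ph : Om K r := (fun T s => if T = ∅ ∧ s = ∅ then emb p else 0) with hph_def
  have ph_csupp : csupp 0 0 ph := by
    intro T s hne
    rw [hph_def] at hne
    by_cases hc : T = ∅ ∧ s = ∅
    · rw [hc.1, hc.2]; simp
    · simp only [if_neg hc] at hne; exact absurd rfl hne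
  have ph_mem : memF ph := by
    intro T s
    rw [hph_def]
    by_cases hc : T = ∅ ∧ s = ∅
    · simp only [if_pos hc]; exact memC_emb T p
    · simp only [if_neg hc]; exact memC_zero T
  have ph_hw : hwF d (ν : ℤ) ph := by
    intro T s
    rw [hph_def]
    by_cases hc : T = ∅ ∧ s = ∅
    · simp only [if_pos hc]
      have : (∑ i ∈ s, (d i : ℤ)) = 0 := by rw [hc.2]; simp
      rw [this, sub_zero]
      exact hdeg_emb hp
    · simp only [if_neg hc]; exact hdeg_zero _
  -- the chase elements
  set P : Om K r := Dop ph with hP_def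
  set u0 : Om K r := Eop aT P with hu0_def
  set v1 : Om K r := Dop u0 with hv1_def
  set u1 : Om K r := Eop aT v1 with hu1_def
  set v2 : Om K r := Dop u1 with hv2_def
  set u2 : Om K r := Eop aT v2 with hu2_def
  set v3 : Om K r := Dop u2 with hv3_def
  set u3 : Om K r := Eop aT v3 with hu3_def
  -- support bookkeeping
  have P_csupp : csupp 1 0 P := csupp_Dop ph_csupp
  have u0_csupp : csupp 1 1 u0 := csupp_Eop P_csupp
  have v1_csupp : csupp 2 1 v1 := csupp_Dop u0_csupp
  have u1_csupp : csupp 2 2 u1 := csupp_Eop v1_csupp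
  have v2_csupp : csupp 3 2 v2 := csupp_Dop u1_csupp
  have u2_csupp : csupp 3 3 u2 := csupp_Eop v2_csupp
  have v3_csupp : csupp 4 3 v3 := csupp_Dop u2_csupp
  have u3_csupp : csupp 4 4 u3 := csupp_Eop v3_csupp
  -- membership bookkeeping
  have P_mem : memF P := memF_Dop ph_mem
  have u0_mem : memF u0 := memF_Eop haTmem P_mem
  have v1_mem : memF v1 := memF_Dop u0_mem
  have u1_mem : memF u1 := memF_Eop haTmem v1_mem
  have v2_mem : memF v2 := memF_Dop u1_mem
  have u2_mem : memF u2 := memF_Eop haTmem v2_mem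
  have v3_mem : memF v3 := memF_Dop u2_mem
  have u3_mem : memF u3 := memF_Eop haTmem v3_mem
  -- degree bookkeeping
  have P_hw : hwF d (ν : ℤ) P := hwF_Dop ph_hw
  have u0_hw : hwF d (ν : ℤ) u0 := hwF_Eop haTd P_hw
  have v1_hw : hwF d (ν : ℤ) v1 := hwF_Dop u0_hw
  have u1_hw : hwF d (ν : ℤ) u1 := hwF_Eop haTd v1_hw
  have v2_hw : hwF d (ν : ℤ) v2 := hwF_Dop u1_hw
  have u2_hw : hwF d (ν : ℤ) u2 := hwF_Eop haTd v2_hw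
  have v3_hw : hwF d (ν : ℤ) v3 := hwF_Dop u2_hw
  have u3_hw : hwF d (ν : ℤ) u3 := hwF_Eop haTd v3_hw
  -- Koszul identities
  have KP : Kop h P = 0 := Kop_eq_zero_of_csupp_zero P_csupp
  have DP : Dop P = 0 := by rw [hP_def, Dop_Dop]
  have Eop_zero : ∀ w : Om K r, w = 0 → Eop aT w = 0 := by
    intro w hw
    subst hw
    funext T s
    exact delOp_zero' _ (fun t => rfl) s
  have Ku0 : Kop h u0 = P := by
    funext T s
    have := Eop_Kop_homotopy h aT hunit P
      (fun s' => csupp_zero_of_card P_csupp ∅ s' (Or.inl (by simp))) T s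
    have hEKP : Eop aT (Kop h P) T s = 0 := by
      rw [KP, Eop_zero 0 rfl]; rfl
    rw [hEKP, zero_add] at this
    exact this
  have Kv1 : Kop h v1 = 0 := by
    rw [hv1_def, ← Dop_Kop, Ku0, DP]
  have Ku1 : Kop h u1 = v1 := by
    funext T s
    have := Eop_Kop_homotopy h aT hunit v1
      (fun s' => csupp_zero_of_card v1_csupp ∅ s' (Or.inl (by simp))) T s
    have hEK : Eop aT (Kop h v1) T s = 0 := by rw [Kv1, Eop_zero 0 rfl]; rfl
    rw [hEK, zero_add] at this
    exact this
  have Kv2 : Kop h v2 = 0 := by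
    rw [hv2_def, ← Dop_Kop, Ku1, hv1_def, Dop_Dop]
  have Ku2 : Kop h u2 = v2 := by
    funext T s
    have := Eop_Kop_homotopy h aT hunit v2
      (fun s' => csupp_zero_of_card v2_csupp ∅ s' (Or.inl (by simp))) T s
    have hEK : Eop aT (Kop h v2) T s = 0 := by rw [Kv2, Eop_zero 0 rfl]; rfl
    rw [hEK, zero_add] at this
    exact this
  have Kv3 : Kop h v3 = 0 := by
    rw [hv3_def, ← Dop_Kop, Ku2, hv2_def, Dop_Dop]
  have Ku3 : Kop h u3 = v3 := by
    funext T s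
    have := Eop_Kop_homotopy h aT hunit v3
      (fun s' => csupp_zero_of_card v3_csupp ∅ s' (Or.inl (by simp))) T s
    have hEK : Eop aT (Kop h v3) T s = 0 := by rw [Kv3, Eop_zero 0 rfl]; rfl
    rw [hEK, zero_add] at this
    exact this
  -- good parts
  have Sop_of_zero : ∀ w : Om K r, w = 0 → Sop w = 0 := by
    intro w hw
    subst hw
    funext T s
    refine insOp_zero' _ (fun t => ?_) T
    rfl
  have good_eq_self : ∀ w : Om K r, memF w → csupp 4 4 w → hwF d (ν:ℤ) w →
      (∀ T s, filHom goodP (w T s) = w T s) := by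
    intro w hwmem hwsupp hwhw T s
    have hbad : filHom badP (w T s) = 0 := by
      by_cases hz : w T s = 0
      · rw [hz, map_zero]
      · obtain ⟨hT4, hs4⟩ := hwsupp T s hz
        refine bad_eq_zero_of_hdeg ?_ (hwhw T s)
        have := hν s (by exact_mod_cast hs4)
        linarith
    have := good_add_bad (w T s)
    rw [hbad, add_zero] at this
    exact this
  have good_eq_self' : ∀ w : Om K r, memF w → (∀ T s, w T s ≠ 0 → T ≠ Finset.univ) →
      (∀ T s, filHom goodP (w T s) = w T s) := by
    intro w hwmem hcard T s
    have hbad : filHom badP (w T s) = 0 := by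
      by_cases hz : w T s = 0
      · rw [hz, map_zero]
      · exact bad_eq_zero_of_memC (hcard T s hz) (hwmem T s)
    have := good_add_bad (w T s)
    rw [hbad, add_zero] at this
    exact this
  -- descend
  have Du3 : Dop u3 = 0 := Dop_eq_zero_of_csupp_four u3_csupp
  set t2 : Om K r := Sop u3 with ht2_def
  have Dt2 : ∀ T s, Dop t2 T s = u3 T s := by
    intro T s
    have hiden := Dop_Sop_homotopy u3 T s
    have hz : Sop (Dop u3) T s = 0 := by rw [Sop_of_zero _ Du3]; rfl
    rw [hz, add_zero] at hiden
    rw [ht2_def, hiden]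
    exact good_eq_self u3 u3_mem u3_csupp u3_hw T s
  set u2' : Om K r := fun T s => u2 T s - Kop h t2 T s with hu2'_def
  have Ku2' : ∀ T s, Kop h u2' T s = v2 T s := by
    intro T s
    rw [hu2'_def, Kop_sub]
    show Kop h u2 T s - Kop h (Kop h t2) T s = v2 T s
    have hz : Kop h (Kop h t2) = 0 := Kop_Kop h t2
    rw [Ku2, show Kop h (Kop h t2) T s = 0 from by rw [hz]; rfl]
    ring
  have Du2' : Dop u2' = 0 := by
    rw [hu2'_def, Dop_sub]
    funext T s
    have h1 : Dop (Kop h t2) = Kop h (Dop t2) := Dop_Kop h t2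
    have h2 : Kop h (Dop t2) T s = Kop h u3 T s := by
      have : Dop t2 = u3 := funext fun T => funext fun s => Dt2 T s
      rw [this]
    show Dop u2 T s - Dop (Kop h t2) T s = 0
    rw [h1, h2, show Kop h u3 T s = v3 T s from by rw [Ku3], ← hv3_def]
    ring
  have u2'_csupp : csupp 3 3 u2' := csupp_sub u2_csupp (csupp_Kop (csupp_Sop u3_csupp))
  have u2'_mem : memF u2' := memF_sub u2_mem (memF_Kop hmem (memF_Sop u3_mem))
  set t1 : Om K r := Sop u2' with ht1_def
  have Dt1 : ∀ T s, Dop t1 T s = u2' T s := by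
    intro T s
    have hiden := Dop_Sop_homotopy u2' T s
    have hz : Sop (Dop u2') T s = 0 := by rw [Sop_of_zero _ Du2']; rfl
    rw [hz, add_zero] at hiden
    rw [ht1_def, hiden]
    refine good_eq_self' u2' u2'_mem ?_ T s
    intro T' s' hne
    obtain ⟨hT', _⟩ := u2'_csupp T' s' hne
    intro hTu
    rw [hTu] at hT'
    simp at hT'
  set u1' : Om K r := fun T s => u1 T s - Kop h t1 T s with hu1'_def
  have Ku1' : ∀ T s, Kop h u1' T s = v1 T s := by
    intro T s
    rw [hu1'_def, Kop_sub]
    show Kop h u1 T s - Kop h (Kop h t1) T s = v1 T s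
    have hz : Kop h (Kop h t1) = 0 := Kop_Kop h t1
    rw [Ku1, show Kop h (Kop h t1) T s = 0 from by rw [hz]; rfl]
    ring
  have Du1' : Dop u1' = 0 := by
    rw [hu1'_def, Dop_sub]
    funext T s
    have h1 : Dop (Kop h t1) = Kop h (Dop t1) := Dop_Kop h t1
    have h2 : Kop h (Dop t1) T s = Kop h u2' T s := by
      have : Dop t1 = u2' := funext fun T => funext fun s => Dt1 T s
      rw [this]
    show Dop u1 T s - Dop (Kop h t1) T s = 0
    rw [h1, h2, Ku2', ← hv2_def]
    ring
  have u1'_csupp : csupp 2 2 u1' := csupp_sub u1_csupp (csupp_Kop (csupp_Sop u2'_csupp))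
  have u1'_mem : memF u1' := memF_sub u1_mem (memF_Kop hmem (memF_Sop u2'_mem))
  set t0 : Om K r := Sop u1' with ht0_def
  have Dt0 : ∀ T s, Dop t0 T s = u1' T s := by
    intro T s
    have hiden := Dop_Sop_homotopy u1' T s
    have hz : Sop (Dop u1') T s = 0 := by rw [Sop_of_zero _ Du1']; rfl
    rw [hz, add_zero] at hiden
    rw [ht0_def, hiden]
    refine good_eq_self' u1' u1'_mem ?_ T s
    intro T' s' hne
    obtain ⟨hT', _⟩ := u1'_csupp T' s' hne
    intro hTu
    rw [hTu] at hT'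
    simp at hT'
  set u0' : Om K r := fun T s => u0 T s - Kop h t0 T s with hu0'_def
  have Ku0' : ∀ T s, Kop h u0' T s = P T s := by
    intro T s
    rw [hu0'_def, Kop_sub]
    show Kop h u0 T s - Kop h (Kop h t0) T s = P T s
    have hz : Kop h (Kop h t0) = 0 := Kop_Kop h t0
    rw [Ku0, show Kop h (Kop h t0) T s = 0 from by rw [hz]; rfl]
    ring
  have Du0' : Dop u0' = 0 := by
    rw [hu0'_def, Dop_sub]
    funext T s
    have h1 : Dop (Kop h t0) = Kop h (Dop t0) := Dop_Kop h t0
    have h2 : Kop h (Dop t0) T s = Kop h u1' T s := by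
      have : Dop t0 = u1' := funext fun T => funext fun s => Dt0 T s
      rw [this]
    show Dop u0 T s - Dop (Kop h t0) T s = 0
    rw [h1, h2, Ku1', ← hv1_def]
    ring
  have u0'_csupp : csupp 1 1 u0' := csupp_sub u0_csupp (csupp_Kop (csupp_Sop u1'_csupp))
  have u0'_mem : memF u0' := memF_sub u0_mem (memF_Kop hmem (memF_Sop u1'_mem))
  set tt : Om K r := Sop u0' with htt_def
  have Dtt : ∀ T s, Dop tt T s = u0' T s := by
    intro T s
    have hiden := Dop_Sop_homotopy u0' T s
    have hz : Sop (Dop u0') T s = 0 := by rw [Sop_of_zero _ Du0']; rfl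
    rw [hz, add_zero] at hiden
    rw [htt_def, hiden]
    refine good_eq_self' u0' u0'_mem ?_ T s
    intro T' s' hne
    obtain ⟨hT', _⟩ := u0'_csupp T' s' hne
    intro hTu
    rw [hTu] at hT'
    simp at hT'
  have tt_mem : memF tt := memF_Sop u0'_mem
  -- extraction
  have hsingle : ∀ s : Finset (Fin r), u0' {(0 : Fin 4)} s = tt ∅ s := by
    intro s
    have := Dtt {(0 : Fin 4)} s
    rw [← this]
    show delOp _ (fun T' => tt T' s) {(0 : Fin 4)} = tt ∅ s
    unfold delOp
    rw [Finset.sum_singleton]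
    rw [show ({(0 : Fin 4)} : Finset (Fin 4)).erase 0 = ∅ from Finset.erase_singleton 0]
    rw [ksgn_empty, one_smul]
    rfl
  -- the final equation at ({0}, ∅)
  have hfinal : ∑ i, h i * tt ∅ {i} = emb p := by
    have := Ku0' {(0 : Fin 4)} ∅
    have hlhs : Kop h u0' {(0 : Fin 4)} ∅ = ∑ i, h i * u0' {(0 : Fin 4)} {i} := by
      show insOp _ (u0' {(0 : Fin 4)}) ∅ = _
      unfold insOp
      rw [show (∅ : Finset (Fin r))ᶜ = Finset.univ from Finset.compl_empty]
      refine Finset.sum_congr rfl fun i _ => ?_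
      rw [ksgn_empty, one_smul]
      rfl
    have hrhs : P {(0 : Fin 4)} ∅ = emb p := by
      rw [hP_def]
      show delOp _ (fun T' => ph T' ∅) {(0 : Fin 4)} = emb p
      unfold delOp
      rw [Finset.sum_singleton,
        show ({(0 : Fin 4)} : Finset (Fin 4)).erase 0 = ∅ from Finset.erase_singleton 0,
        ksgn_empty, one_smul]
      show ph ∅ ∅ = emb p
      rw [hph_def]
      simp
    rw [hlhs, hrhs] at this
    rw [← this]
    refine Finset.sum_congr rfl fun i _ => ?_
    rw [hsingle]
  -- pull back along emb
  have htt0 : ∀ s, memC ∅ (tt ∅ s) := fun s => tt_mem ∅ s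
  choose g hg using fun i : Fin r => memC_empty_exists_emb (htt0 {i})
  refine ⟨g, emb_injective ?_⟩
  rw [map_sum, ← hfinal]
  refine Finset.sum_congr rfl fun i _ => ?_
  rw [map_mul, hg i]
  ring
/-! ### Section 6: MvPolynomial glue -/

open MvPolynomial

lemma homogeneousComponent_mul_right {g f : MvPolynomial (Fin 4) K} {m n : ℕ}
    (hg : g.IsHomogeneous m) :
    (homogeneousComponent (n + m)) (f * g) = (homogeneousComponent n) f * g := by
  ext e
  rw [coeff_homogeneousComponent, coeff_mul, coeff_mul]
  have key : ∀ x ∈ Finset.HasAntidiagonal.antidiagonal e,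
      coeff x.1 ((homogeneousComponent n) f) * coeff x.2 g
      = if (Finsupp.weight (1 : Fin 4 → ℕ)) e = n + m then coeff x.1 f * coeff x.2 g else 0 := by
    rintro ⟨u, v⟩ hx
    rw [Finset.HasAntidiagonal.mem_antidiagonal] at hx
    rw [coeff_homogeneousComponent]
    by_cases hv : coeff v g = 0
    · rw [hv, mul_zero, mul_zero, ite_self]
    · have hvw : (Finsupp.weight (1 : Fin 4 → ℕ)) v = m := hg hv
      have hsplit : (Finsupp.weight (1 : Fin 4 → ℕ)) e
          = (Finsupp.weight (1 : Fin 4 → ℕ)) u + (Finsupp.weight (1 : Fin 4 → ℕ)) v := by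
        rw [← hx, map_add]
      by_cases hu : u.degree = n
      · have hud : (Finsupp.weight (1 : Fin 4 → ℕ)) u = n := by
          rw [← hu]
          rw [Finsupp.weight_apply, Finsupp.degree_apply]
          simp [smul_eq_mul, Finsupp.sum]
        rw [if_pos hu, if_pos (by rw [hsplit, hud, hvw])]
      · have hud : (Finsupp.weight (1 : Fin 4 → ℕ)) u ≠ n := by
          intro hcon
          apply hu
          rw [Finsupp.degree_apply, ← hcon, Finsupp.weight_apply]
          simp [smul_eq_mul, Finsupp.sum]
        rw [if_neg hu]
        rw [if_neg (by rw [hsplit, hvw]; intro hcon; exact hud (by omega))]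
        simp
  rw [Finset.sum_congr rfl key]
  by_cases he : (Finsupp.weight (1 : Fin 4 → ℕ)) e = n + m
  · rw [if_pos ?hc]
    · exact Finset.sum_congr rfl fun x hx => by rw [if_pos he]
    · case hc =>
        show e.degree = n + m
        rw [Finsupp.degree_apply, ← he, Finsupp.weight_apply]
        simp [smul_eq_mul, Finsupp.sum]
  · rw [if_neg ?hc]
    · rw [Finset.sum_eq_zero fun x hx => by rw [if_neg he]]
    · case hc =>
        show ¬ e.degree = n + m
        intro hcon
        apply he
        rw [Finsupp.weight_apply, ← hcon, Finsupp.degree_apply]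
        simp [smul_eq_mul, Finsupp.sum]

/-- projecting an ideal combination onto homogeneous components -/
lemma proj_combination {r : ℕ} (H : Fin r → MvPolynomial (Fin 4) K) (d : Fin r → ℕ)
    (hH : ∀ i, (H i).IsHomogeneous (d i)) (M : ℕ) (hdM : ∀ i, d i ≤ M)
    (c : Fin r → MvPolynomial (Fin 4) K) (q : MvPolynomial (Fin 4) K)
    (hq : q.IsHomogeneous M) (hc : ∑ i, c i * H i = q) :
    ∑ i, (homogeneousComponent (M - d i)) (c i) * H i = q := by
  have := congrArg (fun z => (homogeneousComponent M) z) hc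
  simp only [map_sum] at this
  have hterm : ∀ i : Fin r, (homogeneousComponent M) (c i * H i)
      = (homogeneousComponent (M - d i)) (c i) * H i := by
    intro i
    have hM : M - d i + d i = M := Nat.sub_add_cancel (hdM i)
    have hkey := homogeneousComponent_mul_right (K := K) (hH i) (n := M - d i) (f := c i)
    rw [hM] at hkey
    exact hkey
  rw [Finset.sum_congr rfl (fun i _ => hterm i)] at this
  rw [this]
  rw [homogeneousComponent_of_mem ((mem_homogeneousSubmodule M q).mpr hq), if_pos rfl]

/-- Nullstellensatz input: no nontrivial common zero gives powers of variables in the ideal -/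
lemma powers_in_ideal {r : ℕ} [IsAlgClosed K] (H : Fin r → MvPolynomial (Fin 4) K)
    (hz : ∀ x : Fin 4 → K, (∀ i, eval x (H i) = 0) → x = 0) (N₀ : ℕ) :
    ∃ N, N₀ ≤ N ∧ ∀ j : Fin 4, (X j : MvPolynomial (Fin 4) K) ^ N
      ∈ Ideal.span (Set.range H) := by
  set I : Ideal (MvPolynomial (Fin 4) K) := Ideal.span (Set.range H) with hI
  have hzl : zeroLocus K I ⊆ {x : Fin 4 → K | x = 0} := by
    intro x hx
    refine hz x fun i => ?_
    exact hx (H i) (Ideal.subset_span ⟨i, rfl⟩)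
  have hpow : ∀ j : Fin 4, ∃ n, (X j : MvPolynomial (Fin 4) K) ^ n ∈ I := by
    intro j
    have hXj : (X j : MvPolynomial (Fin 4) K) ∈ vanishingIdeal K (zeroLocus K I) := by
      intro x hx
      have : x = 0 := hzl hx
      rw [this, aeval_X]
      rfl
    rw [vanishingIdeal_zeroLocus_eq_radical] at hXj
    exact hXj
  choose n hn using hpow
  refine ⟨N₀ + (n 0 + n 1 + n 2 + n 3), by omega, fun j => ?_⟩
  have hle : n j ≤ N₀ + (n 0 + n 1 + n 2 + n 3) := by
    have : j = 0 ∨ j = 1 ∨ j = 2 ∨ j = 3 := by revert j; decide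
    rcases this with h | h | h | h <;> subst h <;> omega
  have : (X j : MvPolynomial (Fin 4) K) ^ (N₀ + (n 0 + n 1 + n 2 + n 3))
      = X j ^ ((N₀ + (n 0 + n 1 + n 2 + n 3)) - n j) * X j ^ (n j) := by
    rw [← pow_add]
    congr 1
    omega
  rw [this]
  exact Ideal.mul_mem_left I _ (hn j)

/-- the sum of degrees over any 4-element subset is at most the sum of the top four,
for an antitone degree sequence -/
lemma four_subset_sum {r : ℕ} (hr : 4 ≤ r) (d : Fin r → ℕ)
    (hdec : ∀ i j : Fin r, i ≤ j → d j ≤ d i) (s : Finset (Fin r)) (hs : s.card = 4) :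
    (∑ i ∈ s, (d i : ℤ)) ≤ (d ⟨0, by omega⟩ : ℤ) + d ⟨1, by omega⟩ + d ⟨2, by omega⟩
      + d ⟨3, by omega⟩ := by
  set e := s.orderIsoOfFin hs with he
  have hsum : ∑ i ∈ s, (d i : ℤ) = ∑ k : Fin 4, (d (e k : Fin r) : ℤ) := by
    rw [← Finset.sum_attach s (fun i => (d i : ℤ))]
    exact (Equiv.sum_comp e.toEquiv (fun x => (d (x : Fin r) : ℤ))).symm
  rw [hsum, Fin.sum_univ_four]
  have hmono : ∀ k l : Fin 4, k < l → ((e k : Fin r) : ℕ) < ((e l : Fin r) : ℕ) := by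
    intro k l hkl
    exact e.strictMono hkl
  have h01 := hmono 0 1 (by decide)
  have h12 := hmono 1 2 (by decide)
  have h23 := hmono 2 3 (by decide)
  have key : ∀ (k : Fin 4) (m : ℕ) (hm : m < r), m ≤ ((e k : Fin r) : ℕ) →
      (d (e k : Fin r) : ℤ) ≤ (d ⟨m, hm⟩ : ℤ) := by
    intro k m hm hmk
    have : d (e k : Fin r) ≤ d ⟨m, hm⟩ := by
      refine hdec ⟨m, hm⟩ (e k : Fin r) ?_
      show (⟨m, hm⟩ : Fin r) ≤ (e k : Fin r)
      exact hmk
    exact_mod_cast this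
  have k0 := key 0 0 (by omega) (by omega)
  have k1 := key 1 1 (by omega) (by omega)
  have k2 := key 2 2 (by omega) (by omega)
  have k3 := key 3 3 (by omega) (by omega)
  linarith

/-! ### Section 7: bridging weighted/plain homogeneity, and the main theorem -/

lemma weightZ_eq (m : Fin 4 →₀ ℕ) :
    (Finsupp.weight (fun _ : Fin 4 => (1 : ℤ))) m = ((∑ i, m i : ℕ) : ℤ) := by
  rw [Finsupp.weight_apply, Finsupp.sum_fintype]
  · push_cast
    refine Finset.sum_congr rfl fun i _ => ?_
    simp [smul_eq_mul]
  · intro i; simp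

lemma weightN_eq (m : Fin 4 →₀ ℕ) :
    (Finsupp.weight (1 : Fin 4 → ℕ)) m = ∑ i, m i := by
  rw [Finsupp.weight_apply, Finsupp.sum_fintype]
  · refine Finset.sum_congr rfl fun i _ => ?_
    simp [smul_eq_mul]
  · intro i; simp

lemma iwh_iff {p : MvPolynomial (Fin 4) K} {n : ℕ} {ν : ℤ} (hν : ν = (n : ℤ)) :
    MvPolynomial.IsWeightedHomogeneous (fun _ : Fin 4 => (1 : ℤ)) p ν ↔
      p.IsHomogeneous n := by
  subst hν
  constructor
  · intro h m hm
    have := h hm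
    rw [weightZ_eq] at this
    rw [weightN_eq]
    exact_mod_cast this
  · intro h m hm
    have := h hm
    rw [weightN_eq] at this
    rw [weightZ_eq]
    exact_mod_cast congrArg (fun z : ℕ => (z : ℤ)) this

end Stmt2Aux

open MvPolynomial Stmt2Aux

/-- Let `K` be an algebraically closed field and `H₁,…,H_r ∈ K[X,Y,Z,T]`
homogeneous of degrees `d₁ ≥ … ≥ d_r ≥ 1`, `r ≥ 4`; set `δ = d₁+d₂+d₃+d₄-3` (the four
greatest degrees are the first four).  Then the `Hᵢ` have a common zero in `K⁴ ∖ {0}` iff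
the map `⊕ᵢ K[X,Y,Z,T]_{δ-dᵢ} → K[X,Y,Z,T]_δ, (g₁,…,g_r) ↦ Σ gᵢHᵢ` is not surjective. -/
theorem stmt2 (K : Type*) [Field K] [IsAlgClosed K]
    (r : ℕ) (hr : 4 ≤ r)
    (H : Fin r → MvPolynomial (Fin 4) K) (d : Fin r → ℤ)
    (hdec : ∀ i j : Fin r, i ≤ j → d j ≤ d i)
    (hd1 : ∀ i, 1 ≤ d i)
    (hH : ∀ i, IsWeightedHomogeneous (fun _ : Fin 4 => (1 : ℤ)) (H i) (d i)) :
    (∃ x : Fin 4 → K, x ≠ 0 ∧ ∀ i, eval x (H i) = 0) ↔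
      ¬ (∀ p : MvPolynomial (Fin 4) K,
          IsWeightedHomogeneous (fun _ : Fin 4 => (1 : ℤ)) p
            (d ⟨0, by omega⟩ + d ⟨1, by omega⟩ + d ⟨2, by omega⟩ + d ⟨3, by omega⟩ - 3) →
            ∃ g : Fin r → MvPolynomial (Fin 4) K,
              (∀ i, IsWeightedHomogeneous (fun _ : Fin 4 => (1 : ℤ)) (g i)
                (d ⟨0, by omega⟩ + d ⟨1, by omega⟩ + d ⟨2, by omega⟩ + d ⟨3, by omega⟩ - 3
                  - d i)) ∧
              ∑ i, g i * H i = p) := by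
  classical
  -- natural number degrees
  set n : Fin r → ℕ := fun i => (d i).toNat with hn_def
  have hdn : ∀ i, (d i) = ((n i : ℕ) : ℤ) := by
    intro i
    rw [hn_def]
    exact (Int.toNat_of_nonneg (by linarith [hd1 i])).symm
  have hn1 : ∀ i, 1 ≤ n i := by
    intro i
    have := hd1 i
    rw [hdn i] at this
    exact_mod_cast this
  have hdec' : ∀ i j : Fin r, i ≤ j → n j ≤ n i := by
    intro i j hij
    have := hdec i j hij
    rw [hdn i, hdn j] at this
    exact_mod_cast this
  have hH' : ∀ i, (H i).IsHomogeneous (n i) := fun i => (iwh_iff (hdn i)).mp (hH i)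
  -- the degree bound
  set i0 : Fin r := ⟨0, by omega⟩
  set i1 : Fin r := ⟨1, by omega⟩
  set i2 : Fin r := ⟨2, by omega⟩
  set i3 : Fin r := ⟨3, by omega⟩
  set δn : ℕ := n i0 + n i1 + n i2 + n i3 - 3 with hδn_def
  have hδeq : (d i0 + d i1 + d i2 + d i3 - 3 : ℤ) = (δn : ℤ) := by
    rw [hdn i0, hdn i1, hdn i2, hdn i3, hδn_def]
    have h0 := hn1 i0; have h1 := hn1 i1; have h2 := hn1 i2; have h3 := hn1 i3
    push_cast [Nat.cast_sub (by omega : 3 ≤ n i0 + n i1 + n i2 + n i3)]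
    ring
  constructor
  · -- common zero ⇒ not surjective
    rintro ⟨x, hx0, hxz⟩ hsurj
    obtain ⟨j, hj⟩ : ∃ j, x j ≠ 0 := by
      by_contra hcon
      push_neg at hcon
      exact hx0 (funext hcon)
    have hp : IsWeightedHomogeneous (fun _ : Fin 4 => (1 : ℤ))
        ((X j : MvPolynomial (Fin 4) K) ^ δn)
        (d i0 + d i1 + d i2 + d i3 - 3) := by
      rw [iwh_iff hδeq]
      exact isHomogeneous_X_pow j δn
    obtain ⟨g, hgh, hgs⟩ := hsurj ((X j : MvPolynomial (Fin 4) K) ^ δn) hp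
    have heval : eval x ((X j : MvPolynomial (Fin 4) K) ^ δn) = 0 := by
      rw [← hgs, map_sum]
      refine Finset.sum_eq_zero fun i _ => ?_
      rw [map_mul, hxz i, mul_zero]
    rw [map_pow, eval_X] at heval
    exact pow_ne_zero δn hj heval
  · -- not surjective ⇒ common zero (contrapositive)
    intro hnsurj
    by_contra hnoz
    apply hnsurj
    -- no common zero
    have hz : ∀ x : Fin 4 → K, (∀ i, eval x (H i) = 0) → x = 0 := by
      intro x hx
      by_contra hxne
      exact hnoz ⟨x, hxne, hx⟩
    intro p hp
    have hpn : p.IsHomogeneous δn := (iwh_iff hδeq).mp hp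
    -- powers of the variables in the ideal
    obtain ⟨N, hNbig, hNpow⟩ := powers_in_ideal H hz (Finset.univ.sup n)
    have hdN : ∀ i, n i ≤ N :=
      fun i => le_trans (Finset.le_sup (Finset.mem_univ i)) hNbig
    have hcomb : ∀ j : Fin 4, ∃ c : Fin r → MvPolynomial (Fin 4) K,
        ∑ i, c i * H i = (X j : MvPolynomial (Fin 4) K) ^ N := by
      intro j
      exact Ideal.mem_span_range_iff_exists_fun.mp (hNpow j)
    choose c hc using hcomb
    set b : Fin 4 → Fin r → MvPolynomial (Fin 4) K :=
      fun j i => (homogeneousComponent (N - n i)) (c j i) with hb_def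
    have hb : ∀ j, ∑ i, b j i * H i = (X j : MvPolynomial (Fin 4) K) ^ N := by
      intro j
      exact proj_combination H n hH' N hdN (c j) _ (isHomogeneous_X_pow j N) (hc j)
    have hbh : ∀ j i, (b j i).IsHomogeneous (N - n i) :=
      fun j i => homogeneousComponent_isHomogeneous (N - n i) (c j i)
    -- degree bound hypothesis for the chase
    have hν : ∀ s : Finset (Fin r), s.card = 4 →
        (∑ i ∈ s, (n i : ℤ)) ≤ (δn : ℤ) + 3 := by
      intro s hs
      have := four_subset_sum hr n hdec' s hs
      have hsum : ((n i0 : ℤ) + n i1 + n i2 + n i3) = (δn : ℤ) + 3 := by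
        rw [hδn_def]
        have h0 := hn1 i0; have h1 := hn1 i1; have h2 := hn1 i2; have h3 := hn1 i3
        push_cast [Nat.cast_sub (by omega : 3 ≤ n i0 + n i1 + n i2 + n i3)]
        ring
      rw [← hsum]
      exact this
    -- apply the chase
    obtain ⟨g, hg⟩ := chase H n hH' b N hb hbh hdN p δn hpn hν
    -- project to homogeneous components
    have hdδ : ∀ i, n i ≤ δn := by
      intro i
      have hi0 : n i ≤ n i0 := hdec' i0 i (by
        show (i0 : Fin r) ≤ i
        exact Fin.mk_le_of_le_val (by omega))
      have h1 := hn1 i1; have h2 := hn1 i2; have h3 := hn1 i3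
      rw [hδn_def]
      omega
    refine ⟨fun i => (homogeneousComponent (δn - n i)) (g i), ?_, ?_⟩
    · intro i
      have : (d i0 + d i1 + d i2 + d i3 - 3 - d i : ℤ) = ((δn - n i : ℕ) : ℤ) := by
        rw [hδeq, hdn i]
        push_cast [Nat.cast_sub (hdδ i)]
        ring
      rw [iwh_iff this]
      exact homogeneousComponent_isHomogeneous (δn - n i) (g i)
    · exact proj_combination H n hH' δn hdδ g p hpn hg
end
end

section
/- Let K be an algebraically closed field and d₁, d₂ ≥ 1 integers. Let f₀, f₁, f₂ ∈ K[s,t,u,v] be bihomogeneous of bidegree (d₁,d₂). Then f₀, f₁, f₂ have a common zero ((s₀,t₀),(u₀,v₀)) with (s₀,t₀) ≠ (0,0) and (u₀,v₀) ≠ (0,0) if and only if the map S(d₁−1, 2d₂−1)³ → S(2d₁−1, 3d₂−1), (g₀,g₁,g₂) ↦ g₀f₀ + g₁f₁ + g₂f₂ (a linear map between K-vector spaces of the same dimension 6d₁d₂), is not bijective. -/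
open MvPolynomial

/-- The bigrading on `K[s,t,u,v]`: `s,t` have bidegree `(1,0)` and `u,v` have
bidegree `(0,1)`. -/
def biweight : Fin 4 → ℤ × ℤ := ![(1, 0), (1, 0), (0, 1), (0, 1)]

noncomputable section
namespace Stmt10
variable {K : Type*} [Field K]

abbrev L (K : Type*) [Field K] := AddMonoidAlgebra K (Fin 4 →₀ ℤ)

def toL : MvPolynomial (Fin 4) K →+* L K :=
  AddMonoidAlgebra.mapDomainRingHom K (Finsupp.mapRange.addMonoidHom (Int.ofNatHom : ℕ →+ ℤ))

theorem toL_injective : Function.Injective (toL (K := K)) :=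
  AddMonoidAlgebra.mapDomain_injective
    (Finsupp.mapRange_injective _ rfl (fun a b h => by simpa using h))

def mon (w : Fin 4 →₀ ℤ) : L K := AddMonoidAlgebra.single w 1

theorem mon_mul (w w' : Fin 4 →₀ ℤ) : (mon w : L K) * mon w' = mon (w + w') := by
  simp [mon, AddMonoidAlgebra.single_mul_single]

theorem mon_zero : (mon 0 : L K) = 1 := rfl

theorem mon_ne_zero (w : Fin 4 →₀ ℤ) : (mon w : L K) ≠ 0 := by
  simp [mon, AddMonoidAlgebra.single_eq_zero]

theorem mon_support (w : Fin 4 →₀ ℤ) : (mon w : L K).coeff.support = {w} :=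
  Finsupp.support_single_ne_zero _ one_ne_zero

/-- support predicate -/
def Sp (P : (Fin 4 →₀ ℤ) → Prop) (z : L K) : Prop := ∀ w ∈ z.coeff.support, P w

theorem Sp.zero {P : (Fin 4 →₀ ℤ) → Prop} : Sp P (0 : L K) := by
  intro w hw; simp at hw

theorem Sp.add {P : (Fin 4 →₀ ℤ) → Prop} {x y : L K} (hx : Sp P x) (hy : Sp P y) :
    Sp P (x + y) := by
  intro w hw
  rw [AddMonoidAlgebra.coeff_add] at hw
  rcases Finset.mem_union.1 (Finsupp.support_add hw) with h | h
  · exact hx w h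
  · exact hy w h

theorem Sp.neg {P : (Fin 4 →₀ ℤ) → Prop} {x : L K} (hx : Sp P x) : Sp P (-x) := by
  intro w hw
  rw [AddMonoidAlgebra.coeff_neg, Finsupp.support_neg] at hw
  exact hx w hw

theorem Sp.sub {P : (Fin 4 →₀ ℤ) → Prop} {x y : L K} (hx : Sp P x) (hy : Sp P y) :
    Sp P (x - y) := by
  rw [sub_eq_add_neg]; exact hx.add hy.neg

theorem Sp.mul {P Q R : (Fin 4 →₀ ℤ) → Prop} {x y : L K}
    (hx : Sp P x) (hy : Sp Q y) (h : ∀ a b, P a → Q b → R (a + b)) : Sp R (x * y) := by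
  classical
  intro w hw
  have := AddMonoidAlgebra.support_coeff_mul_subset x y hw
  rw [Finset.mem_add] at this
  obtain ⟨a, ha, b, hb, rfl⟩ := this
  exact h a b (hx a ha) (hy b hb)

theorem Sp.mono {P Q : (Fin 4 →₀ ℤ) → Prop} {x : L K} (hx : Sp P x) (h : ∀ a, P a → Q a) :
    Sp Q x := fun w hw => h w (hx w hw)

theorem Sp.of_eq {P : (Fin 4 →₀ ℤ) → Prop} {x y : L K} (hx : Sp P x) (h : x = y) :
    Sp P y := h ▸ hx

theorem Sp.inter {P Q : (Fin 4 →₀ ℤ) → Prop} {x : L K} (hx : Sp P x) (hy : Sp Q x) :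
    Sp (fun w => P w ∧ Q w) x := fun w hw => ⟨hx w hw, hy w hw⟩

theorem Sp.mon {P : (Fin 4 →₀ ℤ) → Prop} {w : Fin 4 →₀ ℤ} (h : P w) : Sp P (mon w : L K) := by
  intro a ha
  rw [mon_support, Finset.mem_singleton] at ha
  rwa [ha]

theorem Sp.eq_zero {x : L K} (hx : Sp (fun _ => False) x) : x = 0 := by
  classical
  ext w
  by_contra h
  exact hx w (Finsupp.mem_support_iff.2 (by simpa using h))

theorem Sp.filter {P : (Fin 4 →₀ ℤ) → Prop} (Q : (Fin 4 →₀ ℤ) → Prop) [DecidablePred Q]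
    {x : L K} (hx : Sp P x) : Sp (fun w => P w ∧ Q w) (AddMonoidAlgebra.ofCoeff (Finsupp.filter Q x.coeff)) := by
  intro w hw
  rw [AddMonoidAlgebra.coeff_ofCoeff, Finsupp.support_filter, Finset.mem_filter] at hw
  exact ⟨hx w hw.1, hw.2⟩

theorem Sp.sum {ι : Type*} {P : (Fin 4 →₀ ℤ) → Prop} (s : Finset ι) (g : ι → L K)
    (h : ∀ i ∈ s, Sp P (g i)) : Sp P (∑ i ∈ s, g i) := by
  classical
  induction s using Finset.induction with
  | empty => simpa using Sp.zero
  | insert a s hnotmem ih =>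
    rw [Finset.sum_insert hnotmem]
    exact (h a (Finset.mem_insert_self a s)).add (ih fun i hi => h i (Finset.mem_insert_of_mem hi))

theorem weight_biweight (d : Fin 4 →₀ ℕ) :
    Finsupp.weight biweight d = (((d 0 : ℤ) + d 1), ((d 2 : ℤ) + d 3)) := by
  rw [Finsupp.weight_apply, Finsupp.sum_fintype _ _ (fun i => by simp)]
  rw [Fin.sum_univ_four]
  simp only [biweight]
  simp [Prod.ext_iff, Prod.smul_mk]

theorem toL_support (p : MvPolynomial (Fin 4) K) :
    (toL p).coeff.support = p.support.image (Finsupp.mapRange (Int.ofNat) rfl) := by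
  have : (toL (K := K) p).coeff
      = Finsupp.mapDomain (Finsupp.mapRange.addMonoidHom (Int.ofNatHom : ℕ →+ ℤ)) (AddMonoidAlgebra.coeff p) := rfl
  rw [this, Finsupp.mapDomain_support_of_injective]
  · rfl
  · exact Finsupp.mapRange_injective _ rfl (fun a b h => by simpa using h)

def Bi (a b : ℤ) (w : Fin 4 →₀ ℤ) : Prop := w 0 + w 1 = a ∧ w 2 + w 3 = b

theorem toL_hom {p : MvPolynomial (Fin 4) K} {a b : ℤ}
    (hp : IsWeightedHomogeneous biweight p (a, b)) :
    Sp (fun w => Bi a b w ∧ ∀ j, 0 ≤ w j) (toL p) := by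
  intro w hw
  rw [toL_support, Finset.mem_image] at hw
  obtain ⟨d, hd, rfl⟩ := hw
  have h := hp (MvPolynomial.mem_support_iff.1 hd)
  rw [weight_biweight] at h
  rw [Prod.mk.injEq] at h
  refine ⟨⟨?_, ?_⟩, fun j => ?_⟩ <;> simp [Finsupp.mapRange_apply] <;> omega

def dotP (x y : Fin 3 → L K) : L K := ∑ i, x i * y i
def crossP (x y : Fin 3 → L K) : Fin 3 → L K := fun i => x (i+1) * y (i+2) - x (i+2) * y (i+1)

theorem dotP_comm (x y : Fin 3 → L K) : dotP x y = dotP y x := by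
  simp [dotP, Fin.sum_univ_three]; ring

theorem triple (a b c : Fin 3 → L K) (i : Fin 3) :
    crossP a (crossP b c) i = b i * dotP a c - c i * dotP a b := by
  fin_cases i <;> simp [crossP, dotP, Fin.sum_univ_three] <;> ring

theorem crossP_sub₂ (a x y : Fin 3 → L K) (i : Fin 3) :
    crossP a (fun j => x j - y j) i = crossP a x i - crossP a y i := by
  fin_cases i <;> simp [crossP] <;> ring

theorem crossP_smul₂ (a : Fin 3 → L K) (c : L K) (x : Fin 3 → L K) (i : Fin 3) :
    crossP a (fun j => c * x j) i = c * crossP a x i := by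
  fin_cases i <;> simp [crossP] <;> ring

theorem crossP_self (a : Fin 3 → L K) (i : Fin 3) : crossP a a i = 0 := by
  fin_cases i <;> simp [crossP] <;> ring

def expv (a b c d : ℤ) : Fin 4 →₀ ℤ := Finsupp.equivFunOnFinite.symm ![a, b, c, d]

theorem expv_apply (a b c d : ℤ) (i : Fin 4) :
    expv a b c d i = ![a, b, c, d] i := rfl

theorem expv_add (a b c d a' b' c' d' : ℤ) :
    expv a b c d + expv a' b' c' d' = expv (a + a') (b + b') (c + c') (d + d') := by
  ext i
  fin_cases i <;> simp [expv_apply]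

theorem expv_zero : expv 0 0 0 0 = 0 := by
  ext i; fin_cases i <;> simp [expv_apply]



def Qd (a b : ℤ) (w : Fin 4 →₀ ℤ) : Prop :=
  w 0 + w 1 = a ∧ w 2 + w 3 = b ∧ 0 ≤ w 0 ∧ 0 ≤ w 1 ∧ 0 ≤ w 2 ∧ 0 ≤ w 3

theorem Qd.add {a b a' b' : ℤ} {w w' : Fin 4 →₀ ℤ} (h : Qd a b w) (h' : Qd a' b' w') :
    Qd (a + a') (b + b') (w + w') := by
  simp only [Qd, Finsupp.add_apply] at *
  omega

theorem sp_crossP {P Q R : (Fin 4 →₀ ℤ) → Prop} {x y : Fin 3 → L K}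
    (h : ∀ a b, P a → Q b → R (a + b))
    (hx : ∀ i, Sp P (x i)) (hy : ∀ i, Sp Q (y i)) (i : Fin 3) :
    Sp R (crossP x y i) :=
  ((hx _).mul (hy _) h).sub (((hx _).mul (hy _)) h)

theorem sp_dotP {P Q R : (Fin 4 →₀ ℤ) → Prop} {x y : Fin 3 → L K}
    (h : ∀ a b, P a → Q b → R (a + b))
    (hx : ∀ i, Sp P (x i)) (hy : ∀ i, Sp Q (y i)) :
    Sp R (dotP x y) :=
  Sp.sum _ _ fun i _ => (hx i).mul (hy i) h

/-- The localized Koszul lift on a chart. -/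
def chartH (e : Fin 4 →₀ ℤ) (G C : Fin 3 → L K) : Fin 3 → L K :=
  fun i => mon (-e) * crossP G C i

theorem cross_chartH {F G C : Fin 3 → L K} {e : Fin 4 →₀ ℤ}
    (hCF : dotP C F = mon e) (hGF : dotP G F = 0) (i : Fin 3) :
    crossP F (chartH e G C) i = G i := by
  show crossP F (fun j => mon (-e) * crossP G C j) i = G i
  rw [crossP_smul₂, triple, dotP_comm F C, hCF, dotP_comm F G, hGF, mul_zero, sub_zero,
    show G i * mon e = mon e * G i from mul_comm _ _, ← mul_assoc, mon_mul]
  simp [mon_zero]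

/-- If `F × D = 0` pointwise and `C · F = mon e` then `D = (mon (-e) * (C·D)) • F`. -/
theorem chart_loc {F C D : Fin 3 → L K} {e : Fin 4 →₀ ℤ}
    (hCF : dotP C F = mon e) (hFD : ∀ i, crossP F D i = 0) (i : Fin 3) :
    D i = (mon (-e) * dotP C D) * F i := by
  have h := triple C F D i
  have h0 : crossP C (crossP F D) i = 0 := by
    show C (i+1) * crossP F D (i+2) - C (i+2) * crossP F D (i+1) = 0
    rw [hFD, hFD, mul_zero, mul_zero, sub_zero]
  rw [h0, hCF] at h
  have h2 : D i * mon e = F i * dotP C D := by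
    have := sub_eq_zero.mp h.symm
    linear_combination -this
  calc D i = D i * (mon e * mon (-e)) := by rw [mon_mul]; simp [mon_zero]
    _ = (D i * mon e) * mon (-e) := by ring
    _ = (F i * dotP C D) * mon (-e) := by rw [h2]
    _ = (mon (-e) * dotP C D) * F i := by ring



set_option maxHeartbeats 1000000 in
/-- Core algebraic lemma: a syzygy in bidegree `(d₁-1, 2d₂-1)` vanishes, given chart data. -/
theorem core (d₁ d₂ n : ℤ) (F G C1 C2 C3 C4 : Fin 3 → L K) (i₀ : Fin 3) (hF0 : F i₀ ≠ 0)
    (hF : ∀ i, Sp (Qd d₁ d₂) (F i))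
    (hG : ∀ i, Sp (Qd (d₁ - 1) (2 * d₂ - 1)) (G i))
    (hsyz : dotP G F = 0)
    (hC1 : ∀ i, Sp (Qd (n - d₁) (n - d₂)) (C1 i))
    (hC2 : ∀ i, Sp (Qd (n - d₁) (n - d₂)) (C2 i))
    (hC3 : ∀ i, Sp (Qd (n - d₁) (n - d₂)) (C3 i))
    (hC4 : ∀ i, Sp (Qd (n - d₁) (n - d₂)) (C4 i))
    (hCf1 : dotP C1 F = mon (expv n 0 n 0))
    (hCf2 : dotP C2 F = mon (expv n 0 0 n))
    (hCf3 : dotP C3 F = mon (expv 0 n n 0))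
    (hCf4 : dotP C4 F = mon (expv 0 n 0 n)) :
    ∀ i, G i = 0 := by
  classical
  set H1 : Fin 3 → L K := chartH (expv n 0 n 0) G C1 with hH1
  set H2 : Fin 3 → L K := chartH (expv n 0 0 n) G C2 with hH2
  set H3 : Fin 3 → L K := chartH (expv 0 n n 0) G C3 with hH3
  set H4 : Fin 3 → L K := chartH (expv 0 n 0 n) G C4 with hH4
  have hX1 : ∀ i, crossP F H1 i = G i := fun i => cross_chartH hCf1 hsyz i
  have hX2 : ∀ i, crossP F H2 i = G i := fun i => cross_chartH hCf2 hsyz i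
  have hX3 : ∀ i, crossP F H3 i = G i := fun i => cross_chartH hCf3 hsyz i
  have hX4 : ∀ i, crossP F H4 i = G i := fun i => cross_chartH hCf4 hsyz i
  -- supports of the H's
  have sGC : ∀ (C : Fin 3 → L K), (∀ i, Sp (Qd (n - d₁) (n - d₂)) (C i)) → ∀ i,
      Sp (Qd (n - 1) (n + d₂ - 1)) (crossP G C i) := by
    intro C hC i
    refine sp_crossP ?_ hG hC i
    intro a b ha hb
    have := Qd.add ha hb
    refine this.imp ?_ ?_ <;> intro h <;> first | omega | (refine h.imp ?_ ?_ <;> intro h' <;> omega)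
  have sH1 : ∀ i, Sp (fun w => w 0 + w 1 = -1 ∧ w 2 + w 3 = d₂ - 1 ∧ 0 ≤ w 1 ∧ 0 ≤ w 3) (H1 i) := by
    intro i
    refine Sp.mul (Sp.mon (P := fun w => w = -(expv n 0 n 0)) rfl) (sGC C1 hC1 i) ?_
    rintro a b rfl hb
    obtain ⟨h1, h2, h3, h4, h5, h6⟩ := hb
    refine ⟨?_, ?_, ?_, ?_⟩ <;>
      simp only [Finsupp.add_apply, Finsupp.neg_apply, expv_apply] <;> simp <;> omega
  have sH2 : ∀ i, Sp (fun w => w 0 + w 1 = -1 ∧ w 2 + w 3 = d₂ - 1 ∧ 0 ≤ w 1 ∧ 0 ≤ w 2) (H2 i) := by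
    intro i
    refine Sp.mul (Sp.mon (P := fun w => w = -(expv n 0 0 n)) rfl) (sGC C2 hC2 i) ?_
    rintro a b rfl hb
    obtain ⟨h1, h2, h3, h4, h5, h6⟩ := hb
    refine ⟨?_, ?_, ?_, ?_⟩ <;>
      simp only [Finsupp.add_apply, Finsupp.neg_apply, expv_apply] <;> simp <;> omega
  have sH3 : ∀ i, Sp (fun w => w 0 + w 1 = -1 ∧ w 2 + w 3 = d₂ - 1 ∧ 0 ≤ w 0 ∧ 0 ≤ w 3) (H3 i) := by
    intro i
    refine Sp.mul (Sp.mon (P := fun w => w = -(expv 0 n n 0)) rfl) (sGC C3 hC3 i) ?_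
    rintro a b rfl hb
    obtain ⟨h1, h2, h3, h4, h5, h6⟩ := hb
    refine ⟨?_, ?_, ?_, ?_⟩ <;>
      simp only [Finsupp.add_apply, Finsupp.neg_apply, expv_apply] <;> simp <;> omega
  have sH4 : ∀ i, Sp (fun w => w 0 + w 1 = -1 ∧ w 2 + w 3 = d₂ - 1 ∧ 0 ≤ w 0 ∧ 0 ≤ w 2) (H4 i) := by
    intro i
    refine Sp.mul (Sp.mon (P := fun w => w = -(expv 0 n 0 n)) rfl) (sGC C4 hC4 i) ?_
    rintro a b rfl hb
    obtain ⟨h1, h2, h3, h4, h5, h6⟩ := hb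
    refine ⟨?_, ?_, ?_, ?_⟩ <;>
      simp only [Finsupp.add_apply, Finsupp.neg_apply, expv_apply] <;> simp <;> omega
  -- the Ω's
  set Ω12 : L K := mon (-(expv n 0 n 0)) * dotP C1 (fun j => H1 j - H2 j) with hO12
  set Ω34 : L K := mon (-(expv 0 n n 0)) * dotP C3 (fun j => H3 j - H4 j) with hO34
  set Ω13 : L K := mon (-(expv n 0 n 0)) * dotP C1 (fun j => H1 j - H3 j) with hO13
  set Ω24 : L K := mon (-(expv n 0 0 n)) * dotP C2 (fun j => H2 j - H4 j) with hO24
  set Ω14 : L K := mon (-(expv n 0 n 0)) * dotP C1 (fun j => H1 j - H4 j) with hO14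
  have cross0 : ∀ (HA HB : Fin 3 → L K), (∀ i, crossP F HA i = G i) → (∀ i, crossP F HB i = G i) →
      ∀ i, crossP F (fun j => HA j - HB j) i = 0 := by
    intro HA HB hA hB i
    rw [crossP_sub₂, hA, hB, sub_self]
  have e12 : ∀ i, H1 i - H2 i = Ω12 * F i := fun i => chart_loc hCf1 (cross0 H1 H2 hX1 hX2) i
  have e34 : ∀ i, H3 i - H4 i = Ω34 * F i := fun i => chart_loc hCf3 (cross0 H3 H4 hX3 hX4) i
  have e13 : ∀ i, H1 i - H3 i = Ω13 * F i := fun i => chart_loc hCf1 (cross0 H1 H3 hX1 hX3) i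
  have e24 : ∀ i, H2 i - H4 i = Ω24 * F i := fun i => chart_loc hCf2 (cross0 H2 H4 hX2 hX4) i
  have e14 : ∀ i, H1 i - H4 i = Ω14 * F i := fun i => chart_loc hCf1 (cross0 H1 H4 hX1 hX4) i
  -- supports of the Ω's
  have sΩ12 : Sp (fun w => w 0 + w 1 = -d₁ - 1 ∧ w 2 + w 3 = -1 ∧ 0 ≤ w 1) Ω12 := by
    have sD : ∀ j, Sp (fun w => w 0 + w 1 = -1 ∧ w 2 + w 3 = d₂ - 1 ∧ 0 ≤ w 1)
        ((fun j => H1 j - H2 j) j) :=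
      fun j => ((sH1 j).mono fun a h => ⟨h.1, h.2.1, h.2.2.1⟩).sub
               ((sH2 j).mono fun a h => ⟨h.1, h.2.1, h.2.2.1⟩)
    refine Sp.mul (Sp.mon (P := fun w => w = -(expv n 0 n 0)) rfl)
      (sp_dotP (R := fun w => w 0 + w 1 = n - d₁ - 1 ∧ w 2 + w 3 = n - 1 ∧ 0 ≤ w 1)
        ?_ hC1 sD) ?_
    · rintro a b ⟨a1, a2, a3, a4, a5, a6⟩ ⟨b1, b2, b3⟩
      refine ⟨?_, ?_, ?_⟩ <;> simp only [Finsupp.add_apply] <;> omega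
    · rintro a b rfl ⟨b1, b2, b3⟩
      refine ⟨?_, ?_, ?_⟩ <;>
        simp only [Finsupp.add_apply, Finsupp.neg_apply, expv_apply] <;> simp <;> omega
  have sΩ34 : Sp (fun w => w 0 + w 1 = -d₁ - 1 ∧ w 2 + w 3 = -1 ∧ 0 ≤ w 0) Ω34 := by
    have sD : ∀ j, Sp (fun w => w 0 + w 1 = -1 ∧ w 2 + w 3 = d₂ - 1 ∧ 0 ≤ w 0)
        ((fun j => H3 j - H4 j) j) :=
      fun j => ((sH3 j).mono fun a h => ⟨h.1, h.2.1, h.2.2.1⟩).sub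
               ((sH4 j).mono fun a h => ⟨h.1, h.2.1, h.2.2.1⟩)
    refine Sp.mul (Sp.mon (P := fun w => w = -(expv 0 n n 0)) rfl)
      (sp_dotP (R := fun w => w 0 + w 1 = n - d₁ - 1 ∧ w 2 + w 3 = n - 1 ∧ 0 ≤ w 0)
        ?_ hC3 sD) ?_
    · rintro a b ⟨a1, a2, a3, a4, a5, a6⟩ ⟨b1, b2, b3⟩
      refine ⟨?_, ?_, ?_⟩ <;> simp only [Finsupp.add_apply] <;> omega
    · rintro a b rfl ⟨b1, b2, b3⟩
      refine ⟨?_, ?_, ?_⟩ <;>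
        simp only [Finsupp.add_apply, Finsupp.neg_apply, expv_apply] <;> simp <;> omega
  have sΩ13 : Sp (fun w => w 0 + w 1 = -d₁ - 1 ∧ w 2 + w 3 = -1 ∧ 0 ≤ w 3) Ω13 := by
    have sD : ∀ j, Sp (fun w => w 0 + w 1 = -1 ∧ w 2 + w 3 = d₂ - 1 ∧ 0 ≤ w 3)
        ((fun j => H1 j - H3 j) j) :=
      fun j => ((sH1 j).mono fun a h => ⟨h.1, h.2.1, h.2.2.2⟩).sub
               ((sH3 j).mono fun a h => ⟨h.1, h.2.1, h.2.2.2⟩)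
    refine Sp.mul (Sp.mon (P := fun w => w = -(expv n 0 n 0)) rfl)
      (sp_dotP (R := fun w => w 0 + w 1 = n - d₁ - 1 ∧ w 2 + w 3 = n - 1 ∧ 0 ≤ w 3)
        ?_ hC1 sD) ?_
    · rintro a b ⟨a1, a2, a3, a4, a5, a6⟩ ⟨b1, b2, b3⟩
      refine ⟨?_, ?_, ?_⟩ <;> simp only [Finsupp.add_apply] <;> omega
    · rintro a b rfl ⟨b1, b2, b3⟩
      refine ⟨?_, ?_, ?_⟩ <;>
        simp only [Finsupp.add_apply, Finsupp.neg_apply, expv_apply] <;> simp <;> omega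
  have sΩ24 : Sp (fun w => w 0 + w 1 = -d₁ - 1 ∧ w 2 + w 3 = -1 ∧ 0 ≤ w 2) Ω24 := by
    have sD : ∀ j, Sp (fun w => w 0 + w 1 = -1 ∧ w 2 + w 3 = d₂ - 1 ∧ 0 ≤ w 2)
        ((fun j => H2 j - H4 j) j) :=
      fun j => ((sH2 j).mono fun a h => ⟨h.1, h.2.1, h.2.2.2⟩).sub
               ((sH4 j).mono fun a h => ⟨h.1, h.2.1, h.2.2.2⟩)
    refine Sp.mul (Sp.mon (P := fun w => w = -(expv n 0 0 n)) rfl)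
      (sp_dotP (R := fun w => w 0 + w 1 = n - d₁ - 1 ∧ w 2 + w 3 = n - 1 ∧ 0 ≤ w 2)
        ?_ hC2 sD) ?_
    · rintro a b ⟨a1, a2, a3, a4, a5, a6⟩ ⟨b1, b2, b3⟩
      refine ⟨?_, ?_, ?_⟩ <;> simp only [Finsupp.add_apply] <;> omega
    · rintro a b rfl ⟨b1, b2, b3⟩
      refine ⟨?_, ?_, ?_⟩ <;>
        simp only [Finsupp.add_apply, Finsupp.neg_apply, expv_apply] <;> simp <;> omega
  -- splitting
  set a1 : L K := AddMonoidAlgebra.ofCoeff (Finsupp.filter (fun w => w 2 < 0) Ω12.coeff) with ha1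
  set a2 : L K := -(AddMonoidAlgebra.ofCoeff (Finsupp.filter (fun w => ¬ w 2 < 0) Ω12.coeff)) with ha2
  set a3 : L K := AddMonoidAlgebra.ofCoeff (Finsupp.filter (fun w => w 2 < 0) Ω34.coeff) with ha3
  set a4 : L K := -(AddMonoidAlgebra.ofCoeff (Finsupp.filter (fun w => ¬ w 2 < 0) Ω34.coeff)) with ha4
  have s12 : Ω12 = a1 - a2 := by
    rw [ha1, ha2, sub_neg_eq_add, ← AddMonoidAlgebra.ofCoeff_add, Finsupp.filter_pos_add_filter_neg]
  have s34 : Ω34 = a3 - a4 := by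
    rw [ha3, ha4, sub_neg_eq_add, ← AddMonoidAlgebra.ofCoeff_add, Finsupp.filter_pos_add_filter_neg]
  have sa1 : Sp (fun w => w 0 + w 1 = -d₁ - 1 ∧ w 2 + w 3 = -1 ∧ 0 ≤ w 1 ∧ 0 ≤ w 3) a1 :=
    (sΩ12.filter _).mono (fun a h => ⟨h.1.1, h.1.2.1, h.1.2.2, by omega⟩)
  have sa2 : Sp (fun w => w 0 + w 1 = -d₁ - 1 ∧ w 2 + w 3 = -1 ∧ 0 ≤ w 1 ∧ 0 ≤ w 2) a2 :=
    ((sΩ12.filter _).mono (fun a h => ⟨h.1.1, h.1.2.1, h.1.2.2, by omega⟩)).neg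
  have sa3 : Sp (fun w => w 0 + w 1 = -d₁ - 1 ∧ w 2 + w 3 = -1 ∧ 0 ≤ w 0 ∧ 0 ≤ w 3) a3 :=
    (sΩ34.filter _).mono (fun a h => ⟨h.1.1, h.1.2.1, h.1.2.2, by omega⟩)
  have sa4 : Sp (fun w => w 0 + w 1 = -d₁ - 1 ∧ w 2 + w 3 = -1 ∧ 0 ≤ w 0 ∧ 0 ≤ w 2) a4 :=
    ((sΩ34.filter _).mono (fun a h => ⟨h.1.1, h.1.2.1, h.1.2.2, by omega⟩)).neg
  -- the cocycle value z
  set z : L K := Ω13 - a1 + a3 with hz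
  have zeq : z = Ω24 - a2 + a4 := by
    have hmul : z * F i₀ = (Ω24 - a2 + a4) * F i₀ := by
      have h13 := e13 i₀; have h24 := e24 i₀; have h12 := e12 i₀; have h34 := e34 i₀
      rw [hz]
      linear_combination (-h13 + h24 + h12 - h34) + (s12 - s34) * F i₀
    exact mul_right_cancel₀ hF0 hmul
  have z0 : z = 0 := by
    apply Sp.eq_zero
    have hv : Sp (fun w => w 2 + w 3 = -1 ∧ 0 ≤ w 3) z := by
      rw [hz]
      exact ((sΩ13.mono fun a h => ⟨h.2.1, h.2.2⟩).sub
        (sa1.mono fun a h => ⟨h.2.1, h.2.2.2⟩)).add (sa3.mono fun a h => ⟨h.2.1, h.2.2.2⟩)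
    have hu : Sp (fun w => 0 ≤ w 2) z := by
      rw [zeq]
      exact ((sΩ24.mono fun a h => h.2.2).sub
        (sa2.mono fun a h => h.2.2.2)).add (sa4.mono fun a h => h.2.2.2)
    exact (hv.inter hu).mono (fun a h => by omega)
  -- Ω14 = Ω13 + Ω34
  have o14 : Ω14 = Ω13 + Ω34 := by
    have hmul : Ω14 * F i₀ = (Ω13 + Ω34) * F i₀ := by
      have h14 := e14 i₀; have h13 := e13 i₀; have h34 := e34 i₀
      linear_combination -h14 + h13 + h34
    exact mul_right_cancel₀ hF0 hmul
  have key : Ω14 - a1 + a4 = 0 := by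
    have : Ω14 - a1 + a4 = z + (Ω34 - a3 + a4) := by rw [hz, o14]; ring
    rw [this, z0, s34]; ring
  -- glue
  have hglue : ∀ i, H1 i - a1 * F i = H4 i - a4 * F i := by
    intro i
    have h14 := e14 i
    linear_combination h14 + key * F i
  have sHt : ∀ i, H1 i - a1 * F i = 0 := by
    intro i
    apply Sp.eq_zero
    have hs1 : Sp (fun w => w 0 + w 1 = -1 ∧ 0 ≤ w 1) (H1 i - a1 * F i) := by
      refine ((sH1 i).mono fun a h => ⟨h.1, h.2.2.1⟩).sub (Sp.mul sa1 (hF i) ?_)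
      rintro a b ⟨ha1', ha2', ha3', ha4'⟩ ⟨hb1, hb2, hb3, hb4, hb5, hb6⟩
      constructor <;> simp only [Finsupp.add_apply] <;> omega
    have hs4 : Sp (fun w => 0 ≤ w 0) (H4 i - a4 * F i) := by
      refine ((sH4 i).mono fun a h => h.2.2.1).sub (Sp.mul sa4 (hF i) ?_)
      rintro a b ⟨ha1', ha2', ha3', ha4'⟩ ⟨hb1, hb2, hb3, hb4, hb5, hb6⟩
      simp only [Finsupp.add_apply]; omega
    rw [← hglue i] at hs4
    exact (hs1.inter hs4).mono (fun a h => by omega)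
  -- conclude
  intro i
  have hfun : H1 = fun j => a1 * F j := by funext j; exact sub_eq_zero.mp (sHt j)
  rw [← hX1 i, hfun, crossP_smul₂, crossP_self, mul_zero]




theorem whc_mul {M : Type*} [AddCommGroup M] {w : Fin 4 → M} {b : MvPolynomial (Fin 4) K}
    {d : M} (hb : IsWeightedHomogeneous w b d) (a : MvPolynomial (Fin 4) K) (m : M) :
    weightedHomogeneousComponent w m (a * b) =
      weightedHomogeneousComponent w (m - d) a * b := by
  classical
  ext e
  rw [coeff_weightedHomogeneousComponent, coeff_mul, coeff_mul]
  by_cases h : Finsupp.weight w e = m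
  · rw [if_pos h]
    refine Finset.sum_congr rfl ?_
    rintro ⟨x, y⟩ hxy
    rw [Finset.HasAntidiagonal.mem_antidiagonal] at hxy
    by_cases hy : coeff y b = 0
    · simp [hy]
    · have hwy : Finsupp.weight w y = d := hb hy
      have hwx : Finsupp.weight w x = m - d := by
        have : Finsupp.weight w x + Finsupp.weight w y = m := by
          rw [← map_add, hxy, h]
        rw [hwy] at this
        exact eq_sub_of_add_eq this
      rw [coeff_weightedHomogeneousComponent, if_pos hwx]
  · rw [if_neg h]
    symm
    refine Finset.sum_eq_zero ?_
    rintro ⟨x, y⟩ hxy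
    rw [Finset.HasAntidiagonal.mem_antidiagonal] at hxy
    by_cases hy : coeff y b = 0
    · simp [hy]
    · have hwy : Finsupp.weight w y = d := hb hy
      have hwx : Finsupp.weight w x ≠ m - d := by
        intro hc
        apply h
        rw [← hxy, map_add, hwy, hc]
        abel
      rw [coeff_weightedHomogeneousComponent, if_neg hwx, zero_mul]

theorem extract {M : Type*} [AddCommGroup M] {w : Fin 4 → M} {f : Fin 3 → MvPolynomial (Fin 4) K}
    {df : Fin 3 → M} (hf : ∀ i, IsWeightedHomogeneous w (f i) (df i))
    {p : MvPolynomial (Fin 4) K} {m : M} (hp : IsWeightedHomogeneous w p m)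
    (c : Fin 3 → MvPolynomial (Fin 4) K) (hmem : ∑ i, c i * f i = p) :
    ∃ c' : Fin 3 → MvPolynomial (Fin 4) K,
      (∀ i, IsWeightedHomogeneous w (c' i) (m - df i)) ∧ ∑ i, c' i * f i = p := by
  refine ⟨fun i => weightedHomogeneousComponent w (m - df i) (c i),
    fun i => weightedHomogeneousComponent_isWeightedHomogeneous _ _, ?_⟩
  have h2 := congrArg (weightedHomogeneousComponent w m) hmem
  rw [map_sum, hp.weightedHomogeneousComponent_same] at h2
  rw [← h2]
  exact Finset.sum_congr rfl fun i _ => (whc_mul (hf i) (c i) m).symm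

theorem iswh_pow {M : Type*} [AddCommMonoid M] {w : Fin 4 → M} {p : MvPolynomial (Fin 4) K}
    {m : M} (hp : IsWeightedHomogeneous w p m) (n : ℕ) :
    IsWeightedHomogeneous w (p ^ n) (n • m) := by
  induction n with
  | zero => simpa using isWeightedHomogeneous_one K w
  | succ k ih =>
    rw [pow_succ, succ_nsmul]
    exact ih.mul hp


section NSS
variable [IsAlgClosed K]



theorem null_power (f : Fin 3 → MvPolynomial (Fin 4) K)
    (hno : ¬ ∃ s₀ t₀ u₀ v₀ : K, (s₀, t₀) ≠ (0, 0) ∧ (u₀, v₀) ≠ (0, 0) ∧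
      ∀ i, eval ![s₀, t₀, u₀, v₀] (f i) = 0)
    (j k : Fin 4) (hj : j = 0 ∨ j = 1) (hk : k = 2 ∨ k = 3) :
    ∃ n : ℕ, (X j * X k) ^ n ∈ Ideal.span (Set.range f) := by
  have hXmem : (X j * X k : MvPolynomial (Fin 4) K) ∈ (Ideal.span (Set.range f)).radical := by
    rw [← vanishingIdeal_zeroLocus_eq_radical (K := K), mem_vanishingIdeal_iff]
    intro x hx
    by_contra hne
    have hevf : ∀ i, eval x (f i) = 0 := fun i => hx (f i) (Ideal.subset_span ⟨i, rfl⟩)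
    rw [map_mul, aeval_X, aeval_X] at hne
    have hxj : x j ≠ 0 := fun h => hne (by rw [h, zero_mul])
    have hxk : x k ≠ 0 := fun h => hne (by rw [h, mul_zero])
    apply hno
    have hxeq : ![x 0, x 1, x 2, x 3] = x := by
      funext i; fin_cases i <;> rfl
    refine ⟨x 0, x 1, x 2, x 3, ?_, ?_, fun i => by rw [hxeq]; exact hevf i⟩
    · rcases hj with rfl | rfl <;> simp [Prod.ext_iff] <;> intro h <;> simp [h] at hxj <;> tauto
    · rcases hk with rfl | rfl <;> simp [Prod.ext_iff] <;> intro h <;> simp [h] at hxk <;> tauto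
  exact Ideal.mem_radical_iff.1 hXmem

theorem null_data (f : Fin 3 → MvPolynomial (Fin 4) K)
    (hno : ¬ ∃ s₀ t₀ u₀ v₀ : K, (s₀, t₀) ≠ (0, 0) ∧ (u₀, v₀) ≠ (0, 0) ∧
      ∀ i, eval ![s₀, t₀, u₀, v₀] (f i) = 0) :
    ∃ N : ℕ, ∀ j k : Fin 4, (j = 0 ∨ j = 1) → (k = 2 ∨ k = 3) →
      (X j * X k) ^ N ∈ Ideal.span (Set.range f) := by
  obtain ⟨n1, h1⟩ := null_power f hno 0 2 (Or.inl rfl) (Or.inl rfl)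
  obtain ⟨n2, h2⟩ := null_power f hno 0 3 (Or.inl rfl) (Or.inr rfl)
  obtain ⟨n3, h3⟩ := null_power f hno 1 2 (Or.inr rfl) (Or.inl rfl)
  obtain ⟨n4, h4⟩ := null_power f hno 1 3 (Or.inr rfl) (Or.inr rfl)
  refine ⟨n1 + n2 + n3 + n4, ?_⟩
  have key : ∀ (p : MvPolynomial (Fin 4) K) (n m : ℕ), n ≤ m →
      p ^ n ∈ Ideal.span (Set.range f) → p ^ m ∈ Ideal.span (Set.range f) := by
    intro p n m hnm hp
    rw [← Nat.add_sub_cancel' hnm, pow_add]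
    exact Ideal.mul_mem_right _ _ hp
  rintro j k (rfl | rfl) (rfl | rfl)
  · exact key _ _ _ (by omega) h1
  · exact key _ _ _ (by omega) h2
  · exact key _ _ _ (by omega) h3
  · exact key _ _ _ (by omega) h4

end NSS






theorem toL_monomial (d : Fin 4 →₀ ℕ) :
    toL (monomial d (1 : K)) = mon (Finsupp.mapRange (Int.ofNat) rfl d) := by
  rw [← single_eq_monomial]
  show AddMonoidAlgebra.mapDomain _ _ = _
  rw [AddMonoidAlgebra.mapDomain_single]
  rfl


theorem wh_chart (N : ℕ) (j k : Fin 4) (hj : j = 0 ∨ j = 1) (hk : k = 2 ∨ k = 3) :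
    IsWeightedHomogeneous biweight ((X j * X k : MvPolynomial (Fin 4) K) ^ N)
      (((N : ℤ), (N : ℤ))) := by
  have h := iswh_pow (((isWeightedHomogeneous_X K biweight j).mul
    (isWeightedHomogeneous_X K biweight k))) N
  have he : N • (biweight j + biweight k) = (((N : ℤ), (N : ℤ))) := by
    rcases hj with rfl | rfl <;> rcases hk with rfl | rfl <;>
      simp [biweight, Prod.ext_iff] <;> rfl
  rwa [he] at h

theorem toL_chart1 (N : ℕ) :
    toL (((X 0 * X 2 : MvPolynomial (Fin 4) K)) ^ N) = mon (expv N 0 N 0) := by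
  rw [mul_pow, X_pow_eq_monomial, X_pow_eq_monomial, monomial_mul, one_mul, toL_monomial]
  congr 1
  ext i
  fin_cases i <;>
    simp [Finsupp.mapRange_apply, expv_apply, Finsupp.single_apply, Finsupp.add_apply]

theorem toL_chart2 (N : ℕ) :
    toL (((X 0 * X 3 : MvPolynomial (Fin 4) K)) ^ N) = mon (expv N 0 0 N) := by
  rw [mul_pow, X_pow_eq_monomial, X_pow_eq_monomial, monomial_mul, one_mul, toL_monomial]
  congr 1
  ext i
  fin_cases i <;>
    simp [Finsupp.mapRange_apply, expv_apply, Finsupp.single_apply, Finsupp.add_apply]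

theorem toL_chart3 (N : ℕ) :
    toL (((X 1 * X 2 : MvPolynomial (Fin 4) K)) ^ N) = mon (expv 0 N N 0) := by
  rw [mul_pow, X_pow_eq_monomial, X_pow_eq_monomial, monomial_mul, one_mul, toL_monomial]
  congr 1
  ext i
  fin_cases i <;>
    simp [Finsupp.mapRange_apply, expv_apply, Finsupp.single_apply, Finsupp.add_apply]

theorem toL_chart4 (N : ℕ) :
    toL (((X 1 * X 3 : MvPolynomial (Fin 4) K)) ^ N) = mon (expv 0 N 0 N) := by
  rw [mul_pow, X_pow_eq_monomial, X_pow_eq_monomial, monomial_mul, one_mul, toL_monomial]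
  congr 1
  ext i
  fin_cases i <;>
    simp [Finsupp.mapRange_apply, expv_apply, Finsupp.single_apply, Finsupp.add_apply]



theorem dotP_toL (x y : Fin 3 → MvPolynomial (Fin 4) K) :
    dotP (fun i => toL (x i)) (fun i => toL (y i)) = toL (∑ i, x i * y i) := by
  rw [map_sum]
  exact Finset.sum_congr rfl fun i _ => (map_mul _ _ _).symm

theorem mainInj [IsAlgClosed K] (d₁ d₂ : ℤ) (f g : Fin 3 → MvPolynomial (Fin 4) K)
    (hno : ¬ ∃ s₀ t₀ u₀ v₀ : K, (s₀, t₀) ≠ (0, 0) ∧ (u₀, v₀) ≠ (0, 0) ∧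
      ∀ i, eval ![s₀, t₀, u₀, v₀] (f i) = 0)
    (hf : ∀ i, IsWeightedHomogeneous biweight (f i) (d₁, d₂))
    (hg : ∀ i, IsWeightedHomogeneous biweight (g i) (d₁ - 1, 2 * d₂ - 1))
    (hsum : ∑ i, g i * f i = 0) : ∀ i, g i = 0 := by
  obtain ⟨N, hN⟩ := null_data f hno
  have fnz : ∃ i₀, f i₀ ≠ 0 := by
    by_contra h
    push_neg at h
    exact hno ⟨1, 0, 1, 0, by simp [Prod.ext_iff], by simp [Prod.ext_iff],
      fun i => by rw [h i, map_zero]⟩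
  obtain ⟨i₀, hi₀⟩ := fnz
  have hsub : (((N : ℤ), (N : ℤ)) - (d₁, d₂)) = ((N : ℤ) - d₁, (N : ℤ) - d₂) := rfl
  -- chart coefficients
  obtain ⟨c1, hc1h, hc1⟩ := extract hf (wh_chart N 0 2 (Or.inl rfl) (Or.inl rfl))
    (Classical.choose ((Ideal.mem_span_range_iff_exists_fun).1 (hN 0 2 (Or.inl rfl) (Or.inl rfl))))
    (Classical.choose_spec ((Ideal.mem_span_range_iff_exists_fun).1 (hN 0 2 (Or.inl rfl) (Or.inl rfl))))
  obtain ⟨c2, hc2h, hc2⟩ := extract hf (wh_chart N 0 3 (Or.inl rfl) (Or.inr rfl))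
    (Classical.choose ((Ideal.mem_span_range_iff_exists_fun).1 (hN 0 3 (Or.inl rfl) (Or.inr rfl))))
    (Classical.choose_spec ((Ideal.mem_span_range_iff_exists_fun).1 (hN 0 3 (Or.inl rfl) (Or.inr rfl))))
  obtain ⟨c3, hc3h, hc3⟩ := extract hf (wh_chart N 1 2 (Or.inr rfl) (Or.inl rfl))
    (Classical.choose ((Ideal.mem_span_range_iff_exists_fun).1 (hN 1 2 (Or.inr rfl) (Or.inl rfl))))
    (Classical.choose_spec ((Ideal.mem_span_range_iff_exists_fun).1 (hN 1 2 (Or.inr rfl) (Or.inl rfl))))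
  obtain ⟨c4, hc4h, hc4⟩ := extract hf (wh_chart N 1 3 (Or.inr rfl) (Or.inr rfl))
    (Classical.choose ((Ideal.mem_span_range_iff_exists_fun).1 (hN 1 3 (Or.inr rfl) (Or.inr rfl))))
    (Classical.choose_spec ((Ideal.mem_span_range_iff_exists_fun).1 (hN 1 3 (Or.inr rfl) (Or.inr rfl))))
  rw [hsub] at hc1h hc2h hc3h hc4h
  have hcore := core d₁ d₂ (N : ℤ) (fun i => toL (f i)) (fun i => toL (g i))
    (fun i => toL (c1 i)) (fun i => toL (c2 i)) (fun i => toL (c3 i)) (fun i => toL (c4 i)) i₀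
    (fun h => hi₀ (toL_injective (by simp only [map_zero]; exact h)))
    (fun i => (toL_hom (hf i)).mono
      (fun a h => ⟨h.1.1, h.1.2, h.2 0, h.2 1, h.2 2, h.2 3⟩))
    (fun i => (toL_hom (hg i)).mono
      (fun a h => ⟨h.1.1, h.1.2, h.2 0, h.2 1, h.2 2, h.2 3⟩))
    (by rw [dotP_toL, hsum, map_zero])
    (fun i => (toL_hom (hc1h i)).mono
      (fun a h => ⟨h.1.1, h.1.2, h.2 0, h.2 1, h.2 2, h.2 3⟩))
    (fun i => (toL_hom (hc2h i)).mono
      (fun a h => ⟨h.1.1, h.1.2, h.2 0, h.2 1, h.2 2, h.2 3⟩))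
    (fun i => (toL_hom (hc3h i)).mono
      (fun a h => ⟨h.1.1, h.1.2, h.2 0, h.2 1, h.2 2, h.2 3⟩))
    (fun i => (toL_hom (hc4h i)).mono
      (fun a h => ⟨h.1.1, h.1.2, h.2 0, h.2 1, h.2 2, h.2 3⟩))
    (by rw [dotP_toL, hc1, toL_chart1])
    (by rw [dotP_toL, hc2, toL_chart2])
    (by rw [dotP_toL, hc3, toL_chart3])
    (by rw [dotP_toL, hc4, toL_chart4])
  intro i
  exact toL_injective (by simp only [map_zero]; exact hcore i)


def expN (a b c d : ℕ) : Fin 4 →₀ ℕ := Finsupp.equivFunOnFinite.symm ![a, b, c, d]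

theorem expN_apply (a b c d : ℕ) (i : Fin 4) : expN a b c d i = ![a, b, c, d] i := rfl

def degSet (P Q : ℕ) : Set (Fin 4 →₀ ℕ) :=
  {d | Finsupp.weight biweight d = (((P : ℤ), (Q : ℤ)) : ℤ × ℤ)}

theorem mem_degSet {P Q : ℕ} {d : Fin 4 →₀ ℕ} :
    d ∈ degSet P Q ↔ d 0 + d 1 = P ∧ d 2 + d 3 = Q := by
  show Finsupp.weight biweight d = _ ↔ _
  rw [weight_biweight, Prod.mk.injEq]
  omega

def degEquiv (P Q : ℕ) : degSet P Q ≃ Fin (P + 1) × Fin (Q + 1) where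
  toFun d := (⟨d.1 0, by have := mem_degSet.1 d.2; omega⟩,
              ⟨d.1 2, by have := mem_degSet.1 d.2; omega⟩)
  invFun x := ⟨expN x.1 (P - x.1) x.2 (Q - x.2), by
    rw [mem_degSet]
    have h1 := x.1.isLt
    have h2 := x.2.isLt
    simp only [expN_apply]
    simp
    omega⟩
  left_inv := by
    rintro ⟨d, hd⟩
    have h := mem_degSet.1 hd
    apply Subtype.ext
    ext i
    fin_cases i <;> simp [expN_apply] <;> omega
  right_inv := by
    rintro ⟨a, b⟩
    have h1 := a.isLt
    have h2 := b.isLt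
    simp only [Prod.mk.injEq]
    constructor <;> apply Fin.ext <;> simp [expN_apply]

instance (P Q : ℕ) : Fintype (degSet P Q) := Fintype.ofEquiv _ (degEquiv P Q).symm

theorem card_degSet (P Q : ℕ) : Fintype.card (degSet P Q) = (P + 1) * (Q + 1) := by
  rw [Fintype.card_congr (degEquiv P Q)]
  simp

def pieceEquiv (P Q : ℕ) :
    (weightedHomogeneousSubmodule K biweight (((P : ℤ), (Q : ℤ)))) ≃ₗ[K] (degSet P Q → K) := by
  rw [weightedHomogeneousSubmodule_eq_finsupp_supported]
  exact (AddMonoidAlgebra.supportedEquivFinsupp (degSet P Q)).trans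
    (Finsupp.linearEquivFunOnFinite K K _)

instance (P Q : ℕ) :
    FiniteDimensional K (weightedHomogeneousSubmodule K biweight (((P : ℤ), (Q : ℤ)))) :=
  LinearEquiv.finiteDimensional (pieceEquiv P Q).symm

theorem finrank_piece (P Q : ℕ) :
    Module.finrank K (weightedHomogeneousSubmodule K biweight (((P : ℤ), (Q : ℤ))))
      = (P + 1) * (Q + 1) := by
  rw [LinearEquiv.finrank_eq (pieceEquiv (K := K) P Q), Module.finrank_pi, card_degSet]


end Stmt10

namespace Stmt10
section Easy
variable {K : Type*} [Field K]

theorem easy_dir (d₁ d₂ : ℤ) (hd₁ : 1 ≤ d₁) (hd₂ : 1 ≤ d₂)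
    (f : Fin 3 → MvPolynomial (Fin 4) K) (x : Fin 4 → K) (j k : Fin 4)
    (hj : j = 0 ∨ j = 1) (hk : k = 2 ∨ k = 3) (hxj : x j ≠ 0) (hxk : x k ≠ 0)
    (hz : ∀ i, eval x (f i) = 0)
    (hA : ∀ p : MvPolynomial (Fin 4) K,
        IsWeightedHomogeneous biweight p (2 * d₁ - 1, 3 * d₂ - 1) →
          ∃ g : Fin 3 → MvPolynomial (Fin 4) K,
            (∀ i, IsWeightedHomogeneous biweight (g i) (d₁ - 1, 2 * d₂ - 1)) ∧
            ∑ i, g i * f i = p) : False := by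
  set A := (2 * d₁ - 1).toNat with hA'
  set B := (3 * d₂ - 1).toNat with hB'
  set p : MvPolynomial (Fin 4) K := X j ^ A * X k ^ B with hp'
  have hp : IsWeightedHomogeneous biweight p (2 * d₁ - 1, 3 * d₂ - 1) := by
    have h := (iswh_pow (isWeightedHomogeneous_X K biweight j) A).mul
      (iswh_pow (isWeightedHomogeneous_X K biweight k) B)
    have hdeg : A • biweight j + B • biweight k = (2 * d₁ - 1, 3 * d₂ - 1) := by
      rcases hj with rfl | rfl <;> rcases hk with rfl | rfl <;>
        · simp [biweight, Prod.ext_iff, nsmul_eq_mul]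
          constructor <;> omega
    rwa [hdeg] at h
  obtain ⟨g, hgh, hgs⟩ := hA p hp
  have hev := congrArg (eval x) hgs
  rw [map_sum] at hev
  have hev0 : ∀ i ∈ Finset.univ, eval x (g i * f i) = 0 := fun i _ => by
    rw [map_mul, hz i, mul_zero]
  rw [Finset.sum_eq_zero hev0] at hev
  have : eval x p ≠ 0 := by
    rw [hp', map_mul, map_pow, map_pow, eval_X, eval_X]
    exact mul_ne_zero (pow_ne_zero _ hxj) (pow_ne_zero _ hxk)
  exact this hev.symm

end Easy
end Stmt10


/-- Let `K` be an algebraically closed field, `d₁, d₂ ≥ 1`, and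
`f₀,f₁,f₂ ∈ K[s,t,u,v]` bihomogeneous of bidegree `(d₁,d₂)`.  Then `f₀,f₁,f₂` have a common
zero `((s₀,t₀),(u₀,v₀))` with `(s₀,t₀) ≠ (0,0)` and `(u₀,v₀) ≠ (0,0)` iff the map
`S(d₁-1,2d₂-1)³ → S(2d₁-1,3d₂-1), (g₀,g₁,g₂) ↦ Σ gᵢfᵢ` — a linear map between `K`-vector
spaces of the same dimension `6d₁d₂` — is not bijective. -/
theorem stmt10 (K : Type*) [Field K] [IsAlgClosed K]
    (d₁ d₂ : ℤ) (hd₁ : 1 ≤ d₁) (hd₂ : 1 ≤ d₂)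
    (f : Fin 3 → MvPolynomial (Fin 4) K)
    (hf : ∀ i, IsWeightedHomogeneous biweight (f i) (d₁, d₂)) :
    (Module.finrank K
        (Fin 3 → (weightedHomogeneousSubmodule K biweight (d₁ - 1, 2 * d₂ - 1))) : ℤ) =
      6 * d₁ * d₂ ∧
    (Module.finrank K
        (weightedHomogeneousSubmodule K biweight (2 * d₁ - 1, 3 * d₂ - 1)) : ℤ) =
      6 * d₁ * d₂ ∧
    ((∃ s₀ t₀ u₀ v₀ : K, (s₀, t₀) ≠ (0, 0) ∧ (u₀, v₀) ≠ (0, 0) ∧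
        ∀ i, eval ![s₀, t₀, u₀, v₀] (f i) = 0) ↔
      ¬ ((∀ p : MvPolynomial (Fin 4) K,
            IsWeightedHomogeneous biweight p (2 * d₁ - 1, 3 * d₂ - 1) →
              ∃ g : Fin 3 → MvPolynomial (Fin 4) K,
                (∀ i, IsWeightedHomogeneous biweight (g i) (d₁ - 1, 2 * d₂ - 1)) ∧
                ∑ i, g i * f i = p) ∧
        (∀ g g' : Fin 3 → MvPolynomial (Fin 4) K,
            (∀ i, IsWeightedHomogeneous biweight (g i) (d₁ - 1, 2 * d₂ - 1)) →
            (∀ i, IsWeightedHomogeneous biweight (g' i) (d₁ - 1, 2 * d₂ - 1)) →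
            ∑ i, g i * f i = ∑ i, g' i * f i →
            g = g'))) := by
  classical
  have hP1 : (((d₁ - 1).toNat : ℤ)) = d₁ - 1 := Int.toNat_of_nonneg (by omega)
  have hQ1 : (((2 * d₂ - 1).toNat : ℤ)) = 2 * d₂ - 1 := Int.toNat_of_nonneg (by omega)
  have hP2 : (((2 * d₁ - 1).toNat : ℤ)) = 2 * d₁ - 1 := Int.toNat_of_nonneg (by omega)
  have hQ2 : (((3 * d₂ - 1).toNat : ℤ)) = 3 * d₂ - 1 := Int.toNat_of_nonneg (by omega)
  have hrw1 : ((d₁ - 1, 2 * d₂ - 1) : ℤ × ℤ)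
      = ((((d₁ - 1).toNat : ℤ)), (((2 * d₂ - 1).toNat : ℤ))) := by rw [hP1, hQ1]
  have hrw2 : ((2 * d₁ - 1, 3 * d₂ - 1) : ℤ × ℤ)
      = ((((2 * d₁ - 1).toNat : ℤ)), (((3 * d₂ - 1).toNat : ℤ))) := by rw [hP2, hQ2]
  haveI i1 : FiniteDimensional K
      (weightedHomogeneousSubmodule K biweight (d₁ - 1, 2 * d₂ - 1)) := by
    rw [hrw1]; infer_instance
  haveI i2 : FiniteDimensional K
      (weightedHomogeneousSubmodule K biweight (2 * d₁ - 1, 3 * d₂ - 1)) := by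
    rw [hrw2]; infer_instance
  have f1 : Module.finrank K (weightedHomogeneousSubmodule K biweight (d₁ - 1, 2 * d₂ - 1))
      = ((d₁ - 1).toNat + 1) * ((2 * d₂ - 1).toNat + 1) := by
    rw [hrw1, Stmt10.finrank_piece]
  have f2 : Module.finrank K (weightedHomogeneousSubmodule K biweight (2 * d₁ - 1, 3 * d₂ - 1))
      = ((2 * d₁ - 1).toNat + 1) * ((3 * d₂ - 1).toNat + 1) := by
    rw [hrw2, Stmt10.finrank_piece]
  have fpi : Module.finrank K
      (Fin 3 → (weightedHomogeneousSubmodule K biweight (d₁ - 1, 2 * d₂ - 1)))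
      = 3 * (((d₁ - 1).toNat + 1) * ((2 * d₂ - 1).toNat + 1)) := by
    rw [Module.finrank_pi_fintype]
    simp [f1, Finset.sum_const, mul_comm]
  refine ⟨?_, ?_, ?_⟩
  · rw [fpi]; push_cast; rw [hP1, hQ1]; ring
  · rw [f2]; push_cast; rw [hP2, hQ2]; ring
  constructor
  · rintro ⟨s₀, t₀, u₀, v₀, h1, h2, h3⟩ ⟨hA, hB⟩
    have hs : s₀ ≠ 0 ∨ t₀ ≠ 0 := by
      by_contra h; push_neg at h; exact h1 (by rw [h.1, h.2])
    have hu : u₀ ≠ 0 ∨ v₀ ≠ 0 := by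
      by_contra h; push_neg at h; exact h2 (by rw [h.1, h.2])
    rcases hs with hs | hs <;> rcases hu with hu | hu
    · exact Stmt10.easy_dir d₁ d₂ hd₁ hd₂ f ![s₀, t₀, u₀, v₀] 0 2
        (Or.inl rfl) (Or.inl rfl) hs hu h3 hA
    · exact Stmt10.easy_dir d₁ d₂ hd₁ hd₂ f ![s₀, t₀, u₀, v₀] 0 3
        (Or.inl rfl) (Or.inr rfl) hs hu h3 hA
    · exact Stmt10.easy_dir d₁ d₂ hd₁ hd₂ f ![s₀, t₀, u₀, v₀] 1 2
        (Or.inr rfl) (Or.inl rfl) hs hu h3 hA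
    · exact Stmt10.easy_dir d₁ d₂ hd₁ hd₂ f ![s₀, t₀, u₀, v₀] 1 3
        (Or.inr rfl) (Or.inr rfl) hs hu h3 hA
  · intro hn
    by_contra hcz
    apply hn
    have hinj0 : ∀ g g' : Fin 3 → MvPolynomial (Fin 4) K,
        (∀ i, IsWeightedHomogeneous biweight (g i) (d₁ - 1, 2 * d₂ - 1)) →
        (∀ i, IsWeightedHomogeneous biweight (g' i) (d₁ - 1, 2 * d₂ - 1)) →
        ∑ i, g i * f i = ∑ i, g' i * f i → g = g' := by
      intro g g' hg hg' hsum
      have hG : ∀ i, IsWeightedHomogeneous biweight (g i - g' i) (d₁ - 1, 2 * d₂ - 1) :=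
        fun i => (mem_weightedHomogeneousSubmodule _ _ _ _).1
          ((weightedHomogeneousSubmodule K biweight _).sub_mem
            ((mem_weightedHomogeneousSubmodule _ _ _ _).2 (hg i))
            ((mem_weightedHomogeneousSubmodule _ _ _ _).2 (hg' i)))
      have hs0 : ∑ i, (g i - g' i) * f i = 0 := by
        rw [Finset.sum_congr rfl (fun i _ => sub_mul (g i) (g' i) (f i)),
          Finset.sum_sub_distrib, hsum, sub_self]
      have hz := Stmt10.mainInj d₁ d₂ f (fun i => g i - g' i) hcz hf hG hs0
      funext i
      exact sub_eq_zero.1 (hz i)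
    refine ⟨?_, hinj0⟩
    have hdeg : ((d₁ - 1, 2 * d₂ - 1) : ℤ × ℤ) + (d₁, d₂) = (2 * d₁ - 1, 3 * d₂ - 1) := by
      rw [Prod.mk_add_mk, Prod.mk.injEq]
      constructor <;> ring
    let μ : (Fin 3 → (weightedHomogeneousSubmodule K biweight (d₁ - 1, 2 * d₂ - 1))) →ₗ[K]
        (weightedHomogeneousSubmodule K biweight (2 * d₁ - 1, 3 * d₂ - 1)) :=
      { toFun := fun g => ⟨∑ i, (g i : MvPolynomial (Fin 4) K) * f i,
          Submodule.sum_mem _ (fun i _ => by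
            rw [mem_weightedHomogeneousSubmodule]
            have h := ((mem_weightedHomogeneousSubmodule _ _ _ _).1 (g i).2).mul (hf i)
            rwa [hdeg] at h)⟩
        map_add' := fun a b => Subtype.ext (by
          simp only [Pi.add_apply, Submodule.coe_add, AddMemClass.coe_add]
          rw [← Finset.sum_add_distrib]
          exact Finset.sum_congr rfl fun i _ => by rw [add_mul])
        map_smul' := fun c a => Subtype.ext (by
          simp only [Pi.smul_apply, SetLike.val_smul, RingHom.id_apply]
          rw [Finset.smul_sum]
          exact Finset.sum_congr rfl fun i _ => by rw [smul_mul_assoc]) }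
    have hinj : Function.Injective μ := by
      intro a b hab
      have h1 : ∑ i, (a i : MvPolynomial (Fin 4) K) * f i
          = ∑ i, (b i : MvPolynomial (Fin 4) K) * f i := congrArg Subtype.val hab
      have h2 := hinj0 (fun i => a i) (fun i => b i)
        (fun i => (mem_weightedHomogeneousSubmodule _ _ _ _).1 (a i).2)
        (fun i => (mem_weightedHomogeneousSubmodule _ _ _ _).1 (b i).2) h1
      funext i
      exact Subtype.ext (congrFun h2 i)
    have hfrZ : ((3 * (((d₁ - 1).toNat + 1) * ((2 * d₂ - 1).toNat + 1)) : ℕ) : ℤ)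
        = (((((2 * d₁ - 1).toNat + 1) * ((3 * d₂ - 1).toNat + 1) : ℕ)) : ℤ) := by
      push_cast
      rw [hP1, hQ1, hP2, hQ2]
      ring
    have hfr : Module.finrank K
        (Fin 3 → (weightedHomogeneousSubmodule K biweight (d₁ - 1, 2 * d₂ - 1)))
        = Module.finrank K
          (weightedHomogeneousSubmodule K biweight (2 * d₁ - 1, 3 * d₂ - 1)) := by
      rw [fpi, f2]
      exact_mod_cast hfrZ
    have hsurj := (LinearMap.injective_iff_surjective_of_finrank_eq_finrank hfr).1 hinj
    intro p hp
    obtain ⟨v, hv⟩ := hsurj ⟨p, (mem_weightedHomogeneousSubmodule _ _ _ _).2 hp⟩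
    exact ⟨fun i => (v i : MvPolynomial (Fin 4) K),
      fun i => (mem_weightedHomogeneousSubmodule _ _ _ _).1 (v i).2,
      congrArg Subtype.val hv⟩
end
end

section
/- Let K be an algebraically closed field and d₀, d₁ ≥ 1 integers. Let f₀, f₁ ∈ K[s,t] be homogeneous of degrees d₀ and d₁ respectively. Then f₀ and f₁ have no common zero (s₀,t₀) ≠ (0,0) in K² if and only if the Sylvester map S(d₁−1) ⊕ S(d₀−1) → S(d₀+d₁−1), (g₀,g₁) ↦ g₀f₀ + g₁f₁ (a linear map between K-vector spaces of the same dimension d₀+d₁), is bijective. -/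
open MvPolynomial Polynomial

namespace Stmt11Aux
variable {K : Type*} [Field K]

lemma weight_int_eq (d : Fin 2 →₀ ℕ) :
    Finsupp.weight (fun _ : Fin 2 => (1 : ℤ)) d = (d.degree : ℤ) := by
  rw [Finsupp.weight_apply, Finsupp.degree_apply, Finsupp.sum, Nat.cast_sum]
  simp [nsmul_eq_mul]

lemma degree_fin2 (m : Fin 2 →₀ ℕ) : m.degree = m 0 + m 1 := by
  rw [Finsupp.degree_apply, Finset.sum_subset (Finset.subset_univ _)
    (fun i _ h => Finsupp.notMem_support_iff.mp h), Fin.sum_univ_two]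

lemma fin2_decomp (m : Fin 2 →₀ ℕ) :
    m = Finsupp.single 0 (m 0) + Finsupp.single 1 (m 1) := by
  ext i
  fin_cases i <;> simp [Finsupp.single_apply]

lemma iwh_iff {f : MvPolynomial (Fin 2) K} {n : ℕ} :
    IsWeightedHomogeneous (fun _ : Fin 2 => (1 : ℤ)) f (n : ℤ) ↔ f.IsHomogeneous n := by
  constructor <;> intro h d hd
  · have := h hd
    rw [weight_int_eq] at this
    have hdeg : d.degree = n := by exact_mod_cast this
    rw [Pi.one_def, ← Finsupp.degree_eq_weight_one, hdeg]
  · have := h hd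
    rw [Pi.one_def, ← Finsupp.degree_eq_weight_one] at this
    rw [weight_int_eq, this]


noncomputable def Phi : MvPolynomial (Fin 2) K →ₐ[K] Polynomial K :=
  MvPolynomial.aeval ![Polynomial.X, 1]

lemma Phi_monomial (m : Fin 2 →₀ ℕ) (c : K) :
    Phi (monomial m c) = Polynomial.C c * Polynomial.X ^ (m 0) := by
  rw [Phi, MvPolynomial.aeval_monomial]
  rw [Finsupp.prod_fintype _ _ (fun i => pow_zero _)]
  simp [Fin.prod_univ_two, Polynomial.algebraMap_eq]

end Stmt11Aux

namespace Stmt11Aux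
variable {K : Type*} [Field K]

lemma degree_single_add (a b : ℕ) :
    (Finsupp.single (0 : Fin 2) a + Finsupp.single 1 b).degree = a + b := by
  rw [degree_fin2]
  simp [Finsupp.single_apply]

lemma coeff_Phi {f : MvPolynomial (Fin 2) K} {n : ℕ} (hf : f.IsHomogeneous n) (k : ℕ) :
    (Phi f).coeff k = coeff (Finsupp.single 0 k + Finsupp.single 1 (n - k)) f := by
  set m' : Fin 2 →₀ ℕ := Finsupp.single 0 k + Finsupp.single 1 (n - k) with hm'
  have hm'0 : m' 0 = k := by simp [hm', Finsupp.single_apply]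
  conv_lhs => rw [f.as_sum]
  rw [map_sum, Polynomial.finset_sum_coeff]
  simp only [Phi_monomial, Polynomial.coeff_C_mul, Polynomial.coeff_X_pow, mul_ite, mul_one,
    mul_zero]
  rw [Finset.sum_eq_single m']
  · rw [if_pos hm'0.symm]
  · intro m hm hne
    rw [if_neg]
    intro hk
    apply hne
    have hdm : m.degree = n := by
      rw [Finsupp.degree_eq_weight_one]
      exact hf (MvPolynomial.mem_support_iff.mp hm)
    rw [degree_fin2] at hdm
    rw [fin2_decomp m, hm']
    rw [← hk]
    congr 1
    congr 1
    omega
  · intro h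
    rw [MvPolynomial.notMem_support_iff.mp h]
    simp

lemma natDegree_Phi_le {f : MvPolynomial (Fin 2) K} {n : ℕ} (hf : f.IsHomogeneous n) :
    (Phi f).natDegree ≤ n := by
  rw [Polynomial.natDegree_le_iff_coeff_eq_zero]
  intro k hk
  rw [coeff_Phi hf k]
  apply hf.coeff_eq_zero
  rw [degree_single_add]
  omega

lemma Phi_eq_zero_iff {f : MvPolynomial (Fin 2) K} {n : ℕ} (hf : f.IsHomogeneous n) :
    Phi f = 0 ↔ f = 0 := by
  constructor
  · intro h
    ext m
    rw [MvPolynomial.coeff_zero]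
    by_cases hd : m.degree = n
    · have h0 : m 0 ≤ n := by rw [degree_fin2] at hd; omega
      rw [degree_fin2] at hd
      have : m = Finsupp.single 0 (m 0) + Finsupp.single 1 (n - m 0) := by
        conv_lhs => rw [fin2_decomp m]
        congr 1
        congr 1
        omega
      rw [this, ← coeff_Phi hf, h, Polynomial.coeff_zero]
    · exact hf.coeff_eq_zero hd
  · intro h; rw [h, map_zero]

lemma eval_Phi (x : K) (f : MvPolynomial (Fin 2) K) :
    (Phi f).eval x = MvPolynomial.eval ![x, 1] f := by
  induction f using MvPolynomial.induction_on with
  | C a => simp [Phi, Polynomial.algebraMap_eq]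
  | add p q hp hq => simp [map_add, hp, hq]
  | mul_X p i hp =>
      rw [map_mul, Polynomial.eval_mul, hp, map_mul]
      congr 1
      fin_cases i <;> simp [Phi]

lemma eval10 {f : MvPolynomial (Fin 2) K} {n : ℕ} (hf : f.IsHomogeneous n) :
    MvPolynomial.eval ![(1 : K), 0] f = (Phi f).coeff n := by
  rw [coeff_Phi hf n, Nat.sub_self, Finsupp.single_zero, add_zero]
  rw [MvPolynomial.eval_eq']
  simp only [Fin.prod_univ_two, Matrix.cons_val_zero, Matrix.cons_val_one, Matrix.head_cons,
    one_pow, one_mul]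
  rw [Finset.sum_eq_single (Finsupp.single 0 n)]
  · simp [Finsupp.single_apply]
  · intro m hm hne
    have hdm : m.degree = n := by
      rw [Finsupp.degree_eq_weight_one]
      exact hf (MvPolynomial.mem_support_iff.mp hm)
    rw [degree_fin2] at hdm
    have hm1 : m 1 ≠ 0 := by
      intro h1
      apply hne
      rw [fin2_decomp m, h1, Finsupp.single_zero, add_zero]
      congr 1
      omega
    rw [zero_pow hm1, mul_zero]
  · intro h
    rw [MvPolynomial.notMem_support_iff.mp h]
    simp

end Stmt11Aux

namespace Stmt11Aux
variable {K : Type*} [Field K] [IsAlgClosed K]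

lemma exists_zero {f : MvPolynomial (Fin 2) K} {n : ℕ} (hn : 1 ≤ n) (hf : f.IsHomogeneous n) :
    ∃ s₀ t₀ : K, (s₀, t₀) ≠ (0, 0) ∧ MvPolynomial.eval ![s₀, t₀] f = 0 := by
  by_cases h : (Phi f).degree = 0
  case neg =>
    by_cases h0 : Phi f = 0
    · exact ⟨1, 0, by simp, by rw [eval10 hf, h0, Polynomial.coeff_zero]⟩
    · obtain ⟨x, hx⟩ := IsAlgClosed.exists_root (Phi f) h
      exact ⟨x, 1, by simp, by rw [← eval_Phi]; exact hx⟩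
  case pos =>
    refine ⟨1, 0, by simp, ?_⟩
    rw [eval10 hf]
    apply Polynomial.coeff_eq_zero_of_natDegree_lt
    have := Polynomial.natDegree_eq_zero_iff_degree_le_zero.mpr h.le
    omega

lemma eval_ne_root {p q : Polynomial K} (h : p ∣ q) {x : K} (hx : p.eval x = 0) :
    q.eval x = 0 := by
  obtain ⟨r, rfl⟩ := h
  rw [Polynomial.eval_mul, hx, zero_mul]

variable {f₀ f₁ : MvPolynomial (Fin 2) K} {n₀ n₁ : ℕ}

lemma coprime_Phi (hn₀ : 1 ≤ n₀) (hn₁ : 1 ≤ n₁)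
    (hf₀ : f₀.IsHomogeneous n₀) (hf₁ : f₁.IsHomogeneous n₁)
    (hno : ¬ ∃ s₀ t₀ : K, (s₀, t₀) ≠ (0, 0) ∧
      MvPolynomial.eval ![s₀, t₀] f₀ = 0 ∧ MvPolynomial.eval ![s₀, t₀] f₁ = 0) :
    IsCoprime (Phi f₀) (Phi f₁) := by
  classical
  have hf₀ne : f₀ ≠ 0 := by
    rintro rfl
    obtain ⟨s₀, t₀, hne, hz⟩ := exists_zero hn₁ hf₁
    exact hno ⟨s₀, t₀, hne, by simp, hz⟩
  have hF₀ne : Phi f₀ ≠ 0 := fun h => hf₀ne ((Phi_eq_zero_iff hf₀).mp h)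
  rw [← EuclideanDomain.gcd_isUnit_iff]
  by_contra hu
  have hg0 : EuclideanDomain.gcd (Phi f₀) (Phi f₁) ≠ 0 := fun h =>
    hF₀ne (EuclideanDomain.gcd_eq_zero_iff.mp h).1
  have hdeg : (EuclideanDomain.gcd (Phi f₀) (Phi f₁)).degree ≠ 0 := by
    intro h
    exact hu (Polynomial.isUnit_iff_degree_eq_zero.mpr h)
  obtain ⟨x, hx⟩ := IsAlgClosed.exists_root _ hdeg
  refine hno ⟨x, 1, by simp, ?_, ?_⟩
  · rw [← eval_Phi]; exact eval_ne_root (EuclideanDomain.gcd_dvd_left _ _) hx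
  · rw [← eval_Phi]; exact eval_ne_root (EuclideanDomain.gcd_dvd_right _ _) hx

lemma inj_core (hn₀ : 1 ≤ n₀) (hn₁ : 1 ≤ n₁)
    (hf₀ : f₀.IsHomogeneous n₀) (hf₁ : f₁.IsHomogeneous n₁)
    (hno : ¬ ∃ s₀ t₀ : K, (s₀, t₀) ≠ (0, 0) ∧
      MvPolynomial.eval ![s₀, t₀] f₀ = 0 ∧ MvPolynomial.eval ![s₀, t₀] f₁ = 0)
    {h₀ h₁ : MvPolynomial (Fin 2) K}
    (hh₀ : h₀.IsHomogeneous (n₁ - 1)) (hh₁ : h₁.IsHomogeneous (n₀ - 1))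
    (heq : h₀ * f₀ + h₁ * f₁ = 0) : h₀ = 0 ∧ h₁ = 0 := by
  have hf₀ne : f₀ ≠ 0 := by
    rintro rfl
    obtain ⟨s₀, t₀, hne, hz⟩ := exists_zero hn₁ hf₁
    exact hno ⟨s₀, t₀, hne, by simp, hz⟩
  have hf₁ne : f₁ ≠ 0 := by
    rintro rfl
    obtain ⟨s₀, t₀, hne, hz⟩ := exists_zero hn₀ hf₀
    exact hno ⟨s₀, t₀, hne, hz, by simp⟩
  have hcop := coprime_Phi hn₀ hn₁ hf₀ hf₁ hno
  have hinf : (Phi f₀).coeff n₀ ≠ 0 ∨ (Phi f₁).coeff n₁ ≠ 0 := by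
    by_contra h
    push_neg at h
    exact hno ⟨1, 0, by simp, by rw [eval10 hf₀]; exact h.1, by rw [eval10 hf₁]; exact h.2⟩
  have hP : Phi h₀ * Phi f₀ + Phi h₁ * Phi f₁ = 0 := by
    have := congrArg (Phi (K := K)) heq
    simpa [map_add, map_mul] using this
  rcases hinf with hc | hc
  · -- natDegree (Phi f₀) = n₀, F₀ ∣ H₁
    have hdF₀ : (Phi f₀).natDegree = n₀ :=
      le_antisymm (natDegree_Phi_le hf₀) (Polynomial.le_natDegree_of_ne_zero hc)
    have hdvd : Phi f₀ ∣ Phi h₁ * Phi f₁ :=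
      ⟨-(Phi h₀), by linear_combination hP⟩
    have hdvd' : Phi f₀ ∣ Phi h₁ := hcop.dvd_of_dvd_mul_right hdvd
    have hH₁ : Phi h₁ = 0 := by
      by_contra hne
      have := Polynomial.natDegree_le_of_dvd hdvd' hne
      have h2 := natDegree_Phi_le hh₁
      omega
    have hh₁0 : h₁ = 0 := (Phi_eq_zero_iff hh₁).mp hH₁
    have hh₀0 : h₀ = 0 := by
      rw [hh₁0, zero_mul, add_zero] at heq
      rcases mul_eq_zero.mp heq with h | h
      · exact h
      · exact absurd h hf₀ne
    exact ⟨hh₀0, hh₁0⟩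
  · have hdF₁ : (Phi f₁).natDegree = n₁ :=
      le_antisymm (natDegree_Phi_le hf₁) (Polynomial.le_natDegree_of_ne_zero hc)
    have hdvd : Phi f₁ ∣ Phi h₀ * Phi f₀ :=
      ⟨-(Phi h₁), by linear_combination hP⟩
    have hdvd' : Phi f₁ ∣ Phi h₀ := hcop.symm.dvd_of_dvd_mul_right hdvd
    have hH₀ : Phi h₀ = 0 := by
      by_contra hne
      have := Polynomial.natDegree_le_of_dvd hdvd' hne
      have h2 := natDegree_Phi_le hh₀
      omega
    have hh₀0 : h₀ = 0 := (Phi_eq_zero_iff hh₀).mp hH₀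
    have hh₁0 : h₁ = 0 := by
      rw [hh₀0, zero_mul, zero_add] at heq
      rcases mul_eq_zero.mp heq with h | h
      · exact h
      · exact absurd h hf₁ne
    exact ⟨hh₀0, hh₁0⟩

end Stmt11Aux

namespace Stmt11Aux
variable {K : Type*} [Field K]

lemma dsa_apply0 (a b : ℕ) :
    ((Finsupp.single 0 a + Finsupp.single 1 b : Fin 2 →₀ ℕ)) 0 = a := by
  simp [Finsupp.single_apply]

lemma mem_whs_iff {n : ℕ} {p : MvPolynomial (Fin 2) K} :
    p ∈ weightedHomogeneousSubmodule K (fun _ : Fin 2 => (1 : ℤ)) (n : ℤ) ↔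
      p.IsHomogeneous n := by
  rw [mem_weightedHomogeneousSubmodule, iwh_iff]

noncomputable def whsEquiv (n : ℕ) :
    (weightedHomogeneousSubmodule K (fun _ : Fin 2 => (1 : ℤ)) (n : ℤ)) ≃ₗ[K]
      (Fin (n + 1) → K) where
  toFun p k := MvPolynomial.coeff (Finsupp.single 0 (k : ℕ) + Finsupp.single 1 (n - k)) p.1
  map_add' p q := by funext k; simp
  map_smul' c p := by funext k; simp
  invFun v := ⟨∑ k : Fin (n + 1),
      monomial (Finsupp.single 0 (k : ℕ) + Finsupp.single 1 (n - (k : ℕ))) (v k), by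
    apply Submodule.sum_mem
    intro k _
    rw [mem_weightedHomogeneousSubmodule]
    apply isWeightedHomogeneous_monomial
    rw [weight_int_eq, degree_single_add]
    have : (k : ℕ) ≤ n := Nat.lt_succ_iff.mp k.isLt
    congr 1
    omega⟩
  left_inv p := by
    apply Subtype.ext
    have hp : p.1.IsHomogeneous n := mem_whs_iff.mp p.2
    ext m
    rw [MvPolynomial.coeff_sum]
    simp only [MvPolynomial.coeff_monomial]
    by_cases hd : m.degree = n
    · have hm0 : m 0 ≤ n := by rw [degree_fin2] at hd; omega
      have hm1 : m 1 = n - m 0 := by rw [degree_fin2] at hd; omega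
      have hkey : (Finsupp.single (0 : Fin 2) (m 0) + Finsupp.single 1 (n - m 0)) = m := by
        conv_rhs => rw [fin2_decomp m, hm1]
      rw [Finset.sum_eq_single (⟨m 0, Nat.lt_succ_of_le hm0⟩ : Fin (n + 1))]
      · simp only [Fin.val_mk]
        rw [if_pos hkey, hkey]
      · intro j _ hj
        rw [if_neg]
        intro hjm
        apply hj
        apply Fin.ext
        have := congrArg (fun d => d 0) hjm
        rw [dsa_apply0] at this
        simp [this]
      · intro h
        exact absurd (Finset.mem_univ _) h
    · rw [Finset.sum_eq_zero, (hp.coeff_eq_zero hd).symm]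
      intro j _
      rw [if_neg]
      intro hjm
      apply hd
      rw [← hjm, degree_single_add]
      have : (j : ℕ) ≤ n := Nat.lt_succ_iff.mp j.isLt
      omega
  right_inv v := by
    funext k
    dsimp only
    rw [MvPolynomial.coeff_sum]
    simp only [MvPolynomial.coeff_monomial]
    rw [Finset.sum_eq_single k]
    · rw [if_pos rfl]
    · intro j _ hj
      rw [if_neg]
      intro hjm
      apply hj
      apply Fin.ext
      have := congrArg (fun d => d 0) hjm
      rwa [dsa_apply0, dsa_apply0] at this
    · intro h
      exact absurd (Finset.mem_univ _) h

lemma finrank_whs (n : ℕ) :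
    Module.finrank K
      (weightedHomogeneousSubmodule K (fun _ : Fin 2 => (1 : ℤ)) (n : ℤ)) = n + 1 := by
  rw [(whsEquiv (K := K) n).finrank_eq, Module.finrank_fin_fun]

lemma finite_whs (n : ℕ) :
    Module.Finite K
      (weightedHomogeneousSubmodule K (fun _ : Fin 2 => (1 : ℤ)) (n : ℤ)) :=
  Module.Finite.equiv (whsEquiv (K := K) n).symm

end Stmt11Aux

namespace Stmt11Aux
variable {K : Type*} [Field K]

noncomputable def sylMap₀ (m₀ m₁ : ℤ) (f₀ f₁ : MvPolynomial (Fin 2) K) :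
    ((weightedHomogeneousSubmodule K (fun _ : Fin 2 => (1 : ℤ)) m₀) ×
      (weightedHomogeneousSubmodule K (fun _ : Fin 2 => (1 : ℤ)) m₁)) →ₗ[K]
        MvPolynomial (Fin 2) K where
  toFun g := g.1.1 * f₀ + g.2.1 * f₁
  map_add' a b := by
    simp only [Prod.fst_add, Prod.snd_add, Submodule.coe_add]
    ring
  map_smul' c a := by
    simp only [Prod.smul_fst, Prod.smul_snd, Submodule.coe_smul, RingHom.id_apply, smul_add,
      smul_mul_assoc]

lemma isHomogeneous_X_pow' (i : Fin 2) (N : ℕ) :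
    IsWeightedHomogeneous (fun _ : Fin 2 => (1 : ℤ)) ((X i : MvPolynomial (Fin 2) K) ^ N)
      (N : ℤ) := by
  rw [MvPolynomial.X_pow_eq_monomial]
  apply isWeightedHomogeneous_monomial
  rw [weight_int_eq]
  congr 1
  rw [Finsupp.degree_apply, Finset.sum_subset (Finset.subset_univ _)
    (fun j _ h => Finsupp.notMem_support_iff.mp h), Fin.sum_univ_two]
  fin_cases i <;> simp [Finsupp.single_apply]

end Stmt11Aux

open Stmt11Aux

/-- Let `K` be an algebraically closed field, `d₀, d₁ ≥ 1`, and
`f₀, f₁ ∈ K[s,t]` homogeneous of degrees `d₀` and `d₁`.  Then `f₀` and `f₁` have no common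
zero `(s₀,t₀) ≠ (0,0)` iff the Sylvester map
`S(d₁-1) ⊕ S(d₀-1) → S(d₀+d₁-1), (g₀,g₁) ↦ g₀f₀ + g₁f₁` — a linear map between `K`-vector
spaces of the same dimension `d₀+d₁` — is bijective. -/
theorem stmt11 (K : Type*) [Field K] [IsAlgClosed K]
    (d₀ d₁ : ℤ) (hd₀ : 1 ≤ d₀) (hd₁ : 1 ≤ d₁)
    (f₀ f₁ : MvPolynomial (Fin 2) K)
    (hf₀ : IsWeightedHomogeneous (fun _ : Fin 2 => (1 : ℤ)) f₀ d₀)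
    (hf₁ : IsWeightedHomogeneous (fun _ : Fin 2 => (1 : ℤ)) f₁ d₁) :
    (Module.finrank K
        ((weightedHomogeneousSubmodule K (fun _ : Fin 2 => (1 : ℤ)) (d₁ - 1)) ×
          (weightedHomogeneousSubmodule K (fun _ : Fin 2 => (1 : ℤ)) (d₀ - 1))) : ℤ) =
      d₀ + d₁ ∧
    (Module.finrank K
        (weightedHomogeneousSubmodule K (fun _ : Fin 2 => (1 : ℤ)) (d₀ + d₁ - 1)) : ℤ) =
      d₀ + d₁ ∧
    ((¬ ∃ s₀ t₀ : K, (s₀, t₀) ≠ (0, 0) ∧ eval ![s₀, t₀] f₀ = 0 ∧ eval ![s₀, t₀] f₁ = 0) ↔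
      ((∀ p : MvPolynomial (Fin 2) K,
          IsWeightedHomogeneous (fun _ : Fin 2 => (1 : ℤ)) p (d₀ + d₁ - 1) →
            ∃ g₀ g₁ : MvPolynomial (Fin 2) K,
              IsWeightedHomogeneous (fun _ : Fin 2 => (1 : ℤ)) g₀ (d₁ - 1) ∧
              IsWeightedHomogeneous (fun _ : Fin 2 => (1 : ℤ)) g₁ (d₀ - 1) ∧
              g₀ * f₀ + g₁ * f₁ = p) ∧
        (∀ g₀ g₁ g₀' g₁' : MvPolynomial (Fin 2) K,
            IsWeightedHomogeneous (fun _ : Fin 2 => (1 : ℤ)) g₀ (d₁ - 1) →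
            IsWeightedHomogeneous (fun _ : Fin 2 => (1 : ℤ)) g₁ (d₀ - 1) →
            IsWeightedHomogeneous (fun _ : Fin 2 => (1 : ℤ)) g₀' (d₁ - 1) →
            IsWeightedHomogeneous (fun _ : Fin 2 => (1 : ℤ)) g₁' (d₀ - 1) →
            g₀ * f₀ + g₁ * f₁ = g₀' * f₀ + g₁' * f₁ →
            g₀ = g₀' ∧ g₁ = g₁'))) := by
  obtain ⟨n₀, rfl⟩ : ∃ n : ℕ, (n : ℤ) = d₀ := ⟨d₀.toNat, Int.toNat_of_nonneg (by omega)⟩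
  obtain ⟨n₁, rfl⟩ : ∃ n : ℕ, (n : ℤ) = d₁ := ⟨d₁.toNat, Int.toNat_of_nonneg (by omega)⟩
  have hn₀ : 1 ≤ n₀ := by exact_mod_cast hd₀
  have hn₁ : 1 ≤ n₁ := by exact_mod_cast hd₁
  have e₀ : (n₀ : ℤ) - 1 = ((n₀ - 1 : ℕ) : ℤ) := by omega
  have e₁ : (n₁ : ℤ) - 1 = ((n₁ - 1 : ℕ) : ℤ) := by omega
  have e₂ : (n₀ : ℤ) + (n₁ : ℤ) - 1 = ((n₀ + n₁ - 1 : ℕ) : ℤ) := by omega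
  rw [e₀, e₁, e₂]
  have hF₀ : f₀.IsHomogeneous n₀ := iwh_iff.mp hf₀
  have hF₁ : f₁.IsHomogeneous n₁ := iwh_iff.mp hf₁
  haveI := finite_whs (K := K) (n₁ - 1)
  haveI := finite_whs (K := K) (n₀ - 1)
  haveI := finite_whs (K := K) (n₀ + n₁ - 1)
  refine ⟨?_, ?_, ?_⟩
  · rw [Module.finrank_prod, finrank_whs, finrank_whs]
    push_cast
    omega
  · rw [finrank_whs]
    push_cast
    omega
  constructor
  · -- no common zero → surjective and injective
    intro hno
    have huniq : ∀ g₀ g₁ g₀' g₁' : MvPolynomial (Fin 2) K,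
        IsWeightedHomogeneous (fun _ : Fin 2 => (1 : ℤ)) g₀ ((n₁ - 1 : ℕ) : ℤ) →
        IsWeightedHomogeneous (fun _ : Fin 2 => (1 : ℤ)) g₁ ((n₀ - 1 : ℕ) : ℤ) →
        IsWeightedHomogeneous (fun _ : Fin 2 => (1 : ℤ)) g₀' ((n₁ - 1 : ℕ) : ℤ) →
        IsWeightedHomogeneous (fun _ : Fin 2 => (1 : ℤ)) g₁' ((n₀ - 1 : ℕ) : ℤ) →
        g₀ * f₀ + g₁ * f₁ = g₀' * f₀ + g₁' * f₁ → g₀ = g₀' ∧ g₁ = g₁' := by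
      intro g₀ g₁ g₀' g₁' hg₀ hg₁ hg₀' hg₁' heq
      have hsub : (g₀ - g₀') * f₀ + (g₁ - g₁') * f₁ = 0 := by linear_combination heq
      obtain ⟨h0, h1⟩ := inj_core hn₀ hn₁ hF₀ hF₁ hno
        ((iwh_iff.mp hg₀).sub (iwh_iff.mp hg₀')) ((iwh_iff.mp hg₁).sub (iwh_iff.mp hg₁')) hsub
      exact ⟨sub_eq_zero.mp h0, sub_eq_zero.mp h1⟩
    refine ⟨?_, huniq⟩
    -- surjectivity via dimension count
    have hmem : ∀ g : ((weightedHomogeneousSubmodule K (fun _ : Fin 2 => (1 : ℤ))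
          ((n₁ - 1 : ℕ) : ℤ)) ×
        (weightedHomogeneousSubmodule K (fun _ : Fin 2 => (1 : ℤ)) ((n₀ - 1 : ℕ) : ℤ))),
        sylMap₀ _ _ f₀ f₁ g ∈
          weightedHomogeneousSubmodule K (fun _ : Fin 2 => (1 : ℤ)) ((n₀ + n₁ - 1 : ℕ) : ℤ) := by
      intro g
      rw [mem_whs_iff]
      have h1 : (g.1.1 * f₀).IsHomogeneous (n₀ + n₁ - 1) := by
        have := (mem_whs_iff.mp g.1.2).mul hF₀
        have he : n₁ - 1 + n₀ = n₀ + n₁ - 1 := by omega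
        rwa [he] at this
      have h2 : (g.2.1 * f₁).IsHomogeneous (n₀ + n₁ - 1) := by
        have := (mem_whs_iff.mp g.2.2).mul hF₁
        have he : n₀ - 1 + n₁ = n₀ + n₁ - 1 := by omega
        rwa [he] at this
      exact h1.add h2
    set T := (sylMap₀ ((n₁ - 1 : ℕ) : ℤ) ((n₀ - 1 : ℕ) : ℤ) f₀ f₁).codRestrict _ hmem with hT
    have hTinj : Function.Injective T := by
      intro a b hab
      have hab' : a.1.1 * f₀ + a.2.1 * f₁ = b.1.1 * f₀ + b.2.1 * f₁ := by
        have := congrArg Subtype.val hab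
        exact this
      obtain ⟨h0, h1⟩ := huniq _ _ _ _ (a.1.2) (a.2.2) (b.1.2) (b.2.2) hab'
      exact Prod.ext (Subtype.ext h0) (Subtype.ext h1)
    have hrank : Module.finrank K
        ((weightedHomogeneousSubmodule K (fun _ : Fin 2 => (1 : ℤ)) ((n₁ - 1 : ℕ) : ℤ)) ×
          (weightedHomogeneousSubmodule K (fun _ : Fin 2 => (1 : ℤ)) ((n₀ - 1 : ℕ) : ℤ))) =
        Module.finrank K
          (weightedHomogeneousSubmodule K (fun _ : Fin 2 => (1 : ℤ)) ((n₀ + n₁ - 1 : ℕ) : ℤ)) := by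
      rw [Module.finrank_prod, finrank_whs, finrank_whs, finrank_whs]
      omega
    have hTsurj : Function.Surjective T :=
      (LinearMap.injective_iff_surjective_of_finrank_eq_finrank hrank).mp hTinj
    intro p hp
    obtain ⟨g, hg⟩ := hTsurj ⟨p, (mem_weightedHomogeneousSubmodule _ _ _ _).mpr hp⟩
    refine ⟨g.1.1, g.2.1, (mem_weightedHomogeneousSubmodule _ _ _ _).mp g.1.2,
      (mem_weightedHomogeneousSubmodule _ _ _ _).mp g.2.2, ?_⟩
    exact congrArg Subtype.val hg
  · -- surjectivity → no common zero
    rintro ⟨hsurj, -⟩ ⟨s₀, t₀, hne, hz₀, hz₁⟩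
    have hcases : s₀ ≠ 0 ∨ t₀ ≠ 0 := by
      by_contra h
      push_neg at h
      exact hne (by rw [h.1, h.2])
    have key : ∀ i : Fin 2, MvPolynomial.eval ![s₀, t₀] (X i) ≠ 0 → False := by
      intro i hi
      obtain ⟨g₀, g₁, _, _, hpe⟩ := hsurj ((X i : MvPolynomial (Fin 2) K) ^ (n₀ + n₁ - 1))
        (isHomogeneous_X_pow' i (n₀ + n₁ - 1))
      have := congrArg (MvPolynomial.eval ![s₀, t₀]) hpe
      rw [map_add, map_mul, map_mul, hz₀, hz₁, mul_zero, mul_zero, add_zero, map_pow] at this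
      exact pow_ne_zero _ hi this.symm
    rcases hcases with h | h
    · exact key 0 (by simpa using h)
    · exact key 1 (by simpa using h)
end

section
/- Let K be an algebraically closed field, m ≥ 1 and n ≥ 1 integers, and (d₁,…,d_{n+1}), (k₁,…,kₙ) sequences of integers with dⱼ − kᵢ > 0 for all i,j. Let f₀,f₁,f₂,f₃ ∈ K[s,t] be homogeneous of degree m with no common zero (s₀,t₀) ≠ (0,0). Let φ = (φ_{ij}) be an n×(n+1) matrix whose entry φ_{ij} ∈ K[X,Y,Z,T] is homogeneous of degree dⱼ − kᵢ. Let ψ be the n×(n+1) matrix over K[s,t] with entries ψ_{ij} = φ_{ij}(f₀,f₁,f₂,f₃) (homogeneous of degree m(dⱼ−kᵢ)), and for j = 1,…,n+1 let Δⱼ ∈ K[s,t] be the determinant of ψ with its j-th column deleted (homogeneous of degree m(Σ_{l≠j} d_l − Σᵢ kᵢ)). Then there exist x ∈ K⁴ ∖ {0} at which all n×n minors of φ vanish, (s₀,t₀) ≠ (0,0) and λ ∈ K ∖ {0} with x = λ·(f₀(s₀,t₀),f₁(s₀,t₀),f₂(s₀,t₀),f₃(s₀,t₀)) (i.e. the parameterized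 curve meets the determinantal curve in ℙ³) if and only if for every integer ν ≥ m(Σⱼ dⱼ − Σᵢ kᵢ − minᵢ kᵢ) − 1 the map ⊕ⱼ₌₁^{n+1} S(ν − m(Σ_{l≠j} d_l − Σᵢ kᵢ)) → S(ν), (g₁,…,g_{n+1}) ↦ Σⱼ (−1)^{j−1} gⱼ Δⱼ, is not surjective. -/
open MvPolynomial


private lemma iwh_cast {σ R : Type*} [CommSemiring R] {p : MvPolynomial σ R} {N : ℕ} :
    IsWeightedHomogeneous (fun _ : σ => (1 : ℤ)) p (N : ℤ) ↔ p.IsHomogeneous N := by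
  constructor <;> intro h e he <;> have h2 := h he <;>
    simp only [Finsupp.weight_apply, Pi.one_apply, smul_eq_mul, mul_one, Finsupp.sum,
      nsmul_eq_mul] at h2 ⊢
  · exact_mod_cast h2
  · exact_mod_cast congrArg (Nat.cast : ℕ → ℤ) h2

private lemma eval_mul_smul {σ R : Type*} [Fintype σ] [CommRing R] {p : MvPolynomial σ R} {N : ℕ}
    (hp : p.IsHomogeneous N) (c : R) (x : σ → R) :
    eval (fun i => c * x i) p = c ^ N * eval x p := by
  rw [eval_eq', eval_eq', Finset.mul_sum]
  refine Finset.sum_congr rfl fun e he => ?_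
  rw [mem_support_iff] at he
  have hdeg : ∑ i, e i = N := by
    have h2 := hp he
    simp only [Finsupp.weight_apply, Pi.one_apply, smul_eq_mul, mul_one] at h2
    rw [← h2, Finsupp.sum]
    exact (Finset.sum_subset (Finset.subset_univ _) (by
      intro i _ hi; simpa using Finsupp.notMem_support_iff.mp hi)).symm
  calc coeff e p * ∏ i, (c * x i) ^ e i
      = coeff e p * ((∏ i, c ^ e i) * ∏ i, x i ^ e i) := by
        simp [mul_pow, Finset.prod_mul_distrib]
    _ = c ^ N * (coeff e p * ∏ i, x i ^ e i) := by
        rw [Finset.prod_pow_eq_pow_sum, hdeg]; ring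

private lemma iwh_smul_int {σ R : Type*} [CommRing R] {p : MvPolynomial σ R} {w : σ → ℤ} {D : ℤ}
    (h : IsWeightedHomogeneous w p D) (z : ℤ) : IsWeightedHomogeneous w (z • p) D := by
  intro e he
  apply h
  intro h0
  exact he (by rw [coeff_smul, h0, smul_zero])

private lemma iwh_det {σ R : Type*} [CommRing R] {n : ℕ} {w : σ → ℤ}
    (M : Matrix (Fin n) (Fin n) (MvPolynomial σ R)) (r c : Fin n → ℤ)
    (hM : ∀ i j, IsWeightedHomogeneous w (M i j) (r i + c j)) :
    IsWeightedHomogeneous w M.det ((∑ i, r i) + ∑ j, c j) := by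
  rw [Matrix.det_apply]
  apply IsWeightedHomogeneous.sum
  intro σ' _
  have hprod : IsWeightedHomogeneous w (∏ i, M (σ' i) i) ((∑ i, r i) + ∑ j, c j) := by
    have h := IsWeightedHomogeneous.prod Finset.univ (fun i => M (σ' i) i)
      (fun i => r (σ' i) + c i) (fun i _ => hM _ _)
    have : ∑ i, (r (σ' i) + c i) = (∑ i, r i) + ∑ j, c j := by
      rw [Finset.sum_add_distrib, Equiv.sum_comp σ' r]
    rwa [this] at h
  exact iwh_smul_int hprod _

private lemma homComp_mul {σ R : Type*} [DecidableEq σ] [CommRing R] {Δ : MvPolynomial σ R}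
    {N ν : ℕ} (hΔ : Δ.IsHomogeneous N) (hN : N ≤ ν) (h : MvPolynomial σ R) :
    homogeneousComponent ν (h * Δ) = homogeneousComponent (ν - N) h * Δ := by
  have hdegΔ : ∀ b : σ →₀ ℕ, coeff b Δ ≠ 0 → Finsupp.degree b = N := by
    intro b hb
    rw [Finsupp.degree_eq_weight_one]
    exact hΔ hb
  have key : ∀ a b : σ →₀ ℕ, Finsupp.degree (a + b) = Finsupp.degree a + Finsupp.degree b := by
    intro a b
    simp only [Finsupp.degree_eq_weight_one, map_add]
  ext e
  rw [coeff_homogeneousComponent, coeff_mul, coeff_mul]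
  by_cases he : Finsupp.degree e = ν
  · rw [if_pos he]
    refine Finset.sum_congr rfl fun ab hab => ?_
    rw [Finset.HasAntidiagonal.mem_antidiagonal] at hab
    by_cases hb : coeff ab.2 Δ = 0
    · rw [hb, mul_zero, mul_zero]
    · have hsum : Finsupp.degree ab.1 + Finsupp.degree ab.2 = ν := by
        rw [← key, hab, he]
      have ha : Finsupp.degree ab.1 = ν - N := by
        rw [hdegΔ _ hb] at hsum; omega
      rw [coeff_homogeneousComponent, if_pos ha]
  · rw [if_neg he]
    refine (Finset.sum_eq_zero fun ab hab => ?_).symm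
    rw [Finset.HasAntidiagonal.mem_antidiagonal] at hab
    by_cases hb : coeff ab.2 Δ = 0
    · rw [hb, mul_zero]
    · rw [coeff_homogeneousComponent]
      by_cases ha : Finsupp.degree ab.1 = ν - N
      · exfalso
        apply he
        have hsum : Finsupp.degree ab.1 + Finsupp.degree ab.2 = Finsupp.degree e := by
          rw [← key, hab]
        rw [hdegΔ _ hb, ha] at hsum
        omega
      · rw [if_neg ha, zero_mul]

private lemma eval_aeval' {K : Type*} [CommSemiring K] {σ τ : Type*} (v : τ → K)
    (f : σ → MvPolynomial τ K) (q : MvPolynomial σ K) :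
    eval v (aeval f q) = eval (fun i => eval v (f i)) q := by
  rw [aeval_def, algebraMap_eq, ← eval_assoc]
  rfl

/-- Let `K` be an algebraically closed field, `m, n ≥ 1`, and
`(d₁,…,d_{n+1})`, `(k₁,…,kₙ)` integers with `dⱼ - kᵢ > 0`.  Let `f₀,…,f₃ ∈ K[s,t]` be
homogeneous of degree `m` without common zero `≠ (0,0)`, let `φ` be an `n×(n+1)` matrix with
`φ_{ij} ∈ K[X,Y,Z,T]` homogeneous of degree `dⱼ - kᵢ`, let `ψ_{ij} = φ_{ij}(f₀,f₁,f₂,f₃)`,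
and let `Δⱼ ∈ K[s,t]` be the determinant of `ψ` with its `j`-th column deleted.  Then the
parameterized curve meets the determinantal curve of `φ` in `ℙ³` iff for every
`ν ≥ m(Σd - Σk - min k) - 1` the map
`⊕ⱼ S(ν - m(Σ_{l≠j}d_l - Σk)) → S(ν), (g₁,…,g_{n+1}) ↦ Σⱼ (-1)^{j-1} gⱼ Δⱼ`
is not surjective. -/
theorem stmt14 (K : Type*) [Field K] [IsAlgClosed K]
    (m : ℕ) (hm : 1 ≤ m) (n : ℕ) (hn : 1 ≤ n)
    (d : Fin (n + 1) → ℤ) (k : Fin n → ℤ) (hdk : ∀ i j, k i < d j)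
    (f : Fin 4 → MvPolynomial (Fin 2) K)
    (hf : ∀ i, (f i).IsHomogeneous m)
    (hfbp : ¬ ∃ s₀ t₀ : K, (s₀, t₀) ≠ (0, 0) ∧ ∀ i, eval ![s₀, t₀] (f i) = 0)
    (φ : Matrix (Fin n) (Fin (n + 1)) (MvPolynomial (Fin 4) K))
    (hφ : ∀ i j, IsWeightedHomogeneous (fun _ : Fin 4 => (1 : ℤ)) (φ i j) (d j - k i)) :
    (∃ x : Fin 4 → K, x ≠ 0 ∧
        (∀ j : Fin (n + 1), eval x (Matrix.of fun i l => φ i (j.succAbove l)).det = 0) ∧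
        ∃ s₀ t₀ lam : K, (s₀, t₀) ≠ (0, 0) ∧ lam ≠ 0 ∧
          x = fun i => lam * eval ![s₀, t₀] (f i)) ↔
      (∀ ν : ℤ,
        (m : ℤ) * ((∑ j, d j) - (∑ i, k i) -
            Finset.univ.inf' ⟨⟨0, hn⟩, Finset.mem_univ _⟩ k) - 1 ≤ ν →
        ¬ (∀ p : MvPolynomial (Fin 2) K,
            IsWeightedHomogeneous (fun _ : Fin 2 => (1 : ℤ)) p ν →
              ∃ g : Fin (n + 1) → MvPolynomial (Fin 2) K,
                (∀ j, IsWeightedHomogeneous (fun _ : Fin 2 => (1 : ℤ)) (g j)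
                  (ν - (m : ℤ) * ((∑ l, d l) - d j - (∑ i, k i)))) ∧
                ∑ j : Fin (n + 1), (-1 : MvPolynomial (Fin 2) K) ^ j.val * g j *
                  (Matrix.of fun i l => aeval f (φ i (j.succAbove l))).det = p)) := by
  -- notation
  set Δ : Fin (n + 1) → MvPolynomial (Fin 2) K :=
    fun j => (Matrix.of fun i l => aeval f (φ i (j.succAbove l))).det with hΔdef
  set M : Fin (n + 1) → Matrix (Fin n) (Fin n) (MvPolynomial (Fin 4) K) :=
    fun j => Matrix.of fun i l => φ i (j.succAbove l) with hMdef
  set E : Fin (n + 1) → ℤ := fun j => (∑ l, d l) - d j - (∑ i, k i) with hEdef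
  have hne : Nonempty (Fin n) := ⟨⟨0, hn⟩⟩
  have hdet : ∀ j, Δ j = aeval f (M j).det := by
    intro j
    rw [AlgHom.map_det]
    rfl
  have hEsum : ∀ j, E j = ∑ l : Fin n, (d (j.succAbove l) - k l) := by
    intro j
    rw [hEdef, Finset.sum_sub_distrib, Fin.sum_univ_succAbove d j]
    ring
  have hEpos : ∀ j, 0 < E j := by
    intro j
    rw [hEsum j]
    exact Finset.sum_pos (fun l _ => sub_pos.mpr (hdk l _)) Finset.univ_nonempty
  set N : Fin (n + 1) → ℕ := fun j => (E j).toNat with hNdef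
  have hNE : ∀ j, (N j : ℤ) = E j := fun j => Int.toNat_of_nonneg (hEpos j).le
  have hMhom : ∀ j, (M j).det.IsHomogeneous (N j) := by
    intro j
    rw [← iwh_cast, hNE]
    have h := iwh_det (M j) (fun i => -(k i)) (fun l => d (j.succAbove l))
      (fun i l => by
        have := hφ i (j.succAbove l)
        rwa [show d (j.succAbove l) - k i = -(k i) + d (j.succAbove l) by ring] at this)
    have heq : (∑ i : Fin n, -(k i)) + ∑ l : Fin n, d (j.succAbove l) = E j := by
      rw [hEdef, Fin.sum_univ_succAbove d j]
      simp [Finset.sum_neg_distrib]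
      ring
    rwa [heq] at h
  have hΔhom : ∀ j, (Δ j).IsHomogeneous (m * N j) := by
    intro j
    rw [hdet]
    exact (hMhom j).aeval f hf
  have hΔint : ∀ j, IsWeightedHomogeneous (fun _ : Fin 2 => (1 : ℤ)) (Δ j) ((m : ℤ) * E j) := by
    intro j
    have := iwh_cast.mpr (hΔhom j)
    rwa [show ((m * N j : ℕ) : ℤ) = (m : ℤ) * E j by push_cast [hNE]; ring] at this
  -- common zero gives intersection point
  have hcz : ∀ s₀ t₀ : K, (s₀, t₀) ≠ (0, 0) → (∀ j, eval ![s₀, t₀] (Δ j) = 0) →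
      (∃ x : Fin 4 → K, x ≠ 0 ∧
        (∀ j : Fin (n + 1), eval x (M j).det = 0) ∧
        ∃ s₀ t₀ lam : K, (s₀, t₀) ≠ (0, 0) ∧ lam ≠ 0 ∧
          x = fun i => lam * eval ![s₀, t₀] (f i)) := by
    intro s₀ t₀ h0 hz
    refine ⟨fun i => eval ![s₀, t₀] (f i), ?_, ?_, s₀, t₀, 1, h0, one_ne_zero, ?_⟩
    · intro hy
      exact hfbp ⟨s₀, t₀, h0, fun i => congrFun hy i⟩
    · intro j
      have := hz j
      rwa [hdet, eval_aeval'] at this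
    · funext i
      rw [one_mul]
  constructor
  · rintro ⟨x, hx0, hmin, s₀, t₀, lam, hst, hlam, hxe⟩ ν hν H
    -- the bound is nonnegative
    obtain ⟨i₀, -, hi₀⟩ := Finset.exists_mem_eq_inf'
      (⟨⟨0, hn⟩, Finset.mem_univ _⟩ : Finset.univ.Nonempty) k
    have hsum1 : (1 : ℤ) + n ≤ (∑ j, d j) - (∑ i, k i) -
        Finset.univ.inf' ⟨⟨0, hn⟩, Finset.mem_univ _⟩ k := by
      rw [hi₀, Fin.sum_univ_succ d]
      have h1 : k i₀ + 1 ≤ d 0 := hdk i₀ 0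
      have h2 : ∀ i : Fin n, k i + 1 ≤ d i.succ := fun i => hdk i i.succ
      have h3 : (∑ i : Fin n, k i) + n ≤ ∑ i : Fin n, d i.succ := by
        calc (∑ i : Fin n, k i) + n = ∑ i : Fin n, (k i + 1) := by
              rw [Finset.sum_add_distrib]; simp
          _ ≤ ∑ i : Fin n, d i.succ := Finset.sum_le_sum fun i _ => h2 i
      omega
    have hν0 : 0 ≤ ν := by nlinarith [hν, hsum1, Int.ofNat_nonneg n]
    -- choose a linear form not vanishing at (s₀, t₀)
    obtain ⟨a, b, hab⟩ : ∃ a b : K, a * s₀ + b * t₀ = 1 := by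
      by_cases hs : s₀ = 0
      · have ht : t₀ ≠ 0 := by
          intro ht; exact hst (by rw [hs, ht])
        exact ⟨0, t₀⁻¹, by field_simp; ring⟩
      · exact ⟨s₀⁻¹, 0, by field_simp; ring⟩
    set p : MvPolynomial (Fin 2) K := (C a * X 0 + C b * X 1) ^ ν.toNat with hpdef
    have hphom : p.IsHomogeneous ν.toNat := by
      have h1 : (C a * X 0 + C b * X 1 : MvPolynomial (Fin 2) K).IsHomogeneous 1 :=
        ((isHomogeneous_X K 0).C_mul a).add ((isHomogeneous_X K 1).C_mul b)
      simpa using h1.pow ν.toNat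
    obtain ⟨g, hg, hsum⟩ := H p (by
      have := iwh_cast.mpr hphom
      rwa [Int.toNat_of_nonneg hν0] at this)
    -- all Δ j vanish at (s₀, t₀)
    have hΔ0 : ∀ j, eval ![s₀, t₀] (Δ j) = 0 := by
      intro j
      have hx : x = fun i => lam * eval ![s₀, t₀] (f i) := hxe
      have hscale := eval_mul_smul (hMhom j) lam (fun i => eval ![s₀, t₀] (f i))
      have hx2 : eval x (M j).det = lam ^ N j * eval (fun i => eval ![s₀, t₀] (f i)) (M j).det := by
        rw [hx]; exact hscale
      have h0 : eval (fun i => eval ![s₀, t₀] (f i)) (M j).det = 0 := by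
        have := hmin j
        rw [show (Matrix.of fun i l => φ i (j.succAbove l)) = M j from rfl] at this
        rw [this] at hx2
        have hlp : lam ^ N j ≠ 0 := pow_ne_zero _ hlam
        field_simp at hx2
        exact (mul_eq_zero.mp hx2.symm).resolve_left hlp
      rw [hdet, eval_aeval', h0]
    have heval := congrArg (eval ![s₀, t₀]) hsum
    rw [map_sum] at heval
    have hL0 : ∀ j ∈ Finset.univ, eval ![s₀, t₀]
        ((-1 : MvPolynomial (Fin 2) K) ^ (j : Fin (n+1)).val * g j * Δ j) = 0 := by
      intro j _
      rw [map_mul, hΔ0 j, mul_zero]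
    rw [Finset.sum_eq_zero hL0] at heval
    have hp1 : eval ![s₀, t₀] p = 1 := by
      rw [hpdef, map_pow, map_add, map_mul, map_mul, eval_C, eval_C, eval_X, eval_X]
      simp [hab]
    rw [hp1] at heval
    exact one_ne_zero heval.symm
  · intro hR
    by_contra hL
    -- no common zero of the Δ j
    have hnocz : ∀ s₀ t₀ : K, (s₀, t₀) ≠ (0, 0) → ∃ j, eval ![s₀, t₀] (Δ j) ≠ 0 := by
      intro s₀ t₀ h0
      by_contra hall
      push_neg at hall
      exact hL (hcz s₀ t₀ h0 hall)
    set I : Ideal (MvPolynomial (Fin 2) K) := Ideal.span (Set.range Δ) with hIdef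
    have hXrad : ∀ i : Fin 2, X i ∈ I.radical := by
      intro i
      rw [← vanishingIdeal_zeroLocus_eq_radical (K := K)]
      intro x hx
      have hxz : ∀ j, eval x (Δ j) = 0 := fun j =>
        hx (Δ j) (Ideal.subset_span (Set.mem_range_self j))
      have hxx : ![x 0, x 1] = x := by
        funext i'; fin_cases i' <;> rfl
      have hx00 : x 0 = 0 ∧ x 1 = 0 := by
        by_contra hcon
        have h0 : (x 0, x 1) ≠ (0, 0) := by
          intro hp; apply hcon; exact ⟨congrArg Prod.fst hp, congrArg Prod.snd hp⟩
        obtain ⟨j, hj⟩ := hnocz (x 0) (x 1) h0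
        rw [hxx] at hj
        exact hj (hxz j)
      rw [aeval_X]
      fin_cases i
      · exact hx00.1
      · exact hx00.2
    obtain ⟨N₀, hN₀⟩ := Ideal.mem_radical_iff.mp (hXrad 0)
    obtain ⟨N₁, hN₁⟩ := Ideal.mem_radical_iff.mp (hXrad 1)
    -- choose the degree ν
    set B : ℤ := (m : ℤ) * ((∑ j, d j) - (∑ i, k i) -
        Finset.univ.inf' ⟨⟨0, hn⟩, Finset.mem_univ _⟩ k) - 1 with hBdef
    set νn : ℕ := B.toNat + (N₀ + N₁) + ∑ j, m * N j with hνdef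
    have hBν : B ≤ (νn : ℤ) := by
      have h1 : B ≤ (B.toNat : ℤ) := Int.self_le_toNat B
      have h2 : (B.toNat : ℤ) ≤ (νn : ℤ) := by
        have : B.toNat ≤ νn := le_trans (Nat.le_add_right _ _) (Nat.le_add_right _ _)
        exact_mod_cast this
      omega
    have hmNν : ∀ j, m * N j ≤ νn := by
      intro j
      calc m * N j ≤ ∑ j', m * N j' :=
            Finset.single_le_sum (f := fun j' => m * N j') (fun j' _ => Nat.zero_le _)
              (Finset.mem_univ j)
        _ ≤ νn := Nat.le_add_left _ _
    have hN01ν : N₀ + N₁ ≤ νn := by omega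
    refine hR (νn : ℤ) hBν ?_
    intro p hp
    have hpN : p.IsHomogeneous νn := iwh_cast.mp hp
    -- p belongs to the ideal
    have hpI : p ∈ I := by
      rw [← p.support_sum_monomial_coeff]
      apply Ideal.sum_mem
      intro e he
      have hdeg : e 0 + e 1 = νn := by
        have h1 := hpN (mem_support_iff.mp he)
        simp only [Finsupp.weight_apply, Pi.one_apply, smul_eq_mul, mul_one] at h1
        have h2 : e.sum (fun _ v => v) = ∑ i : Fin 2, e i := by
          rw [Finsupp.sum]
          exact Finset.sum_subset (Finset.subset_univ _) (by
            intro i _ hi; simpa using Finsupp.notMem_support_iff.mp hi)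
        rw [h2, Fin.sum_univ_two] at h1
        exact h1
      rcases (by omega : N₀ ≤ e 0 ∨ N₁ ≤ e 1) with hc | hc
      · have hle : Finsupp.single (0 : Fin 2) N₀ ≤ e := by
          rw [Finsupp.single_le_iff]; exact hc
        have : monomial e (coeff e p) = X 0 ^ N₀ * monomial (e - Finsupp.single 0 N₀) (coeff e p) := by
          rw [X_pow_eq_monomial, monomial_mul, one_mul, add_tsub_cancel_of_le hle]
        rw [this]
        exact Ideal.mul_mem_right _ _ hN₀
      · have hle : Finsupp.single (1 : Fin 2) N₁ ≤ e := by
          rw [Finsupp.single_le_iff]; exact hc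
        have : monomial e (coeff e p) = X 1 ^ N₁ * monomial (e - Finsupp.single 1 N₁) (coeff e p) := by
          rw [X_pow_eq_monomial, monomial_mul, one_mul, add_tsub_cancel_of_le hle]
        rw [this]
        exact Ideal.mul_mem_right _ _ hN₁
    obtain ⟨h, hh⟩ := Ideal.mem_span_range_iff_exists_fun.mp hpI
    refine ⟨fun j => (-1 : MvPolynomial (Fin 2) K) ^ j.val *
        homogeneousComponent (νn - m * N j) (h j), ?_, ?_⟩
    · intro j
      show IsWeightedHomogeneous (fun _ : Fin 2 => (1 : ℤ))
        ((-1 : MvPolynomial (Fin 2) K) ^ j.val *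
          homogeneousComponent (νn - m * N j) (h j)) ((νn : ℤ) - (m : ℤ) * E j)
      have hC : ((-1 : MvPolynomial (Fin 2) K) ^ j.val) = C ((-1 : K) ^ j.val) := by
        rw [map_pow, map_neg, map_one]
      rw [hC]
      have h1 : IsWeightedHomogeneous (fun _ : Fin 2 => (1 : ℤ))
          (homogeneousComponent (νn - m * N j) (h j)) ((νn - m * N j : ℕ) : ℤ) :=
        iwh_cast.mpr (homogeneousComponent_isHomogeneous _ _)
      have h2 := (isWeightedHomogeneous_C (fun _ : Fin 2 => (1 : ℤ)) ((-1 : K) ^ j.val)).mul h1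
      rw [zero_add] at h2
      rwa [show ((νn - m * N j : ℕ) : ℤ) = ((νn : ℤ) - (m : ℤ) * E j) by
        rw [Nat.cast_sub (hmNν j)]; push_cast [hNE]; ring] at h2
    · have hone : ∀ (j : ℕ) (q r : MvPolynomial (Fin 2) K),
          (-1 : MvPolynomial (Fin 2) K) ^ j * ((-1 : MvPolynomial (Fin 2) K) ^ j * q) * r = q * r := by
        intro j q r
        rw [← mul_assoc, ← pow_add, Even.neg_one_pow ⟨j, rfl⟩, one_mul]
      calc ∑ j : Fin (n + 1), (-1 : MvPolynomial (Fin 2) K) ^ j.val *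
              ((-1 : MvPolynomial (Fin 2) K) ^ j.val *
                homogeneousComponent (νn - m * N j) (h j)) * Δ j
          = ∑ j : Fin (n + 1), homogeneousComponent (νn - m * N j) (h j) * Δ j := by
            refine Finset.sum_congr rfl fun j _ => ?_
            exact hone j.val _ _
        _ = ∑ j : Fin (n + 1), homogeneousComponent νn (h j * Δ j) := by
            refine Finset.sum_congr rfl fun j _ => ?_
            rw [homComp_mul (hΔhom j) (hmNν j)]
        _ = homogeneousComponent νn (∑ j, h j * Δ j) := (map_sum _ _ _).symm
        _ = homogeneousComponent νn p := by rw [hh]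
        _ = p := by
            rw [homogeneousComponent_of_mem (by rwa [mem_homogeneousSubmodule])]
            exact if_pos rfl
end
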